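/- arXiv:1602.03109 — 4 statements merged into one kernel-verified Lean document; each statement's English description precedes it below -/
import Mathlib

section
/- For every digraph G on vertex set {1,…,n}, there exists a monotone Boolean network f : {0,1}^n → {0,1}^n whose interaction graph is G such that f has at least 2^{ν*(G)} fixed points and f_v is the constant function 0 for every source v of G. -/
open Classical

section Defs

variable {V : Type*}

/-- `f_v` depends on input `u`. -/
def Depends (f : (V → Bool) → V → Bool) (u v : V) : Prop :=
  ∃ x y : V → Bool, (∀ w, w ≠ u → x w = y w) ∧ f x v ≠ f y v

/-- The arcs of a cycle given by the list of its vertices `v₀ … v_m`: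
`(v₀,v₁), …, (v_m, v₀)`. -/
def CycArcs (l : List V) : List (V × V) :=
  (l ++ l.take 1).zip ((l ++ l.take 1).tail)

/-- A (directed) cycle of the digraph `G`, given by its list of (distinct) vertices.
Loops (cycles of length one) are allowed. -/
def IsCycle (G : V → V → Prop) (l : List V) : Prop :=
  l ≠ [] ∧ l.Nodup ∧ ∀ a ∈ CycArcs l, G a.1 a.2

/-- The arcs of a path given by the list of its vertices. -/
def PathArcs (l : List V) : List (V × V) := l.zip l.tail

/-- A (directed) path of `G` with at least one arc, with distinct vertices except that
the first and last vertex may coincide. -/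
def IsPath (G : V → V → Prop) (l : List V) : Prop :=
  2 ≤ l.length ∧ l.dropLast.Nodup ∧ l.tail.Nodup ∧ ∀ a ∈ PathArcs l, G a.1 a.2

/-- A packing: a collection of pairwise vertex-disjoint cycles. -/
def IsPacking (G : V → V → Prop) (P : List (List V)) : Prop :=
  (∀ l ∈ P, IsCycle G l) ∧ P.Pairwise fun l₁ l₂ => ∀ v ∈ l₁, v ∉ l₂

/-- A feedback vertex set: a set of vertices meeting every cycle. -/
def IsFVS (G : V → V → Prop) (I : Finset V) : Prop :=
  ∀ l : List V, IsCycle G l → ∃ v ∈ l, v ∈ I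

/-- `τ(G)`: minimum size of a feedback vertex set. -/
noncomputable def tau [Fintype V] (G : V → V → Prop) : ℕ :=
  sInf {k | ∃ I : Finset V, IsFVS G I ∧ I.card = k}

/-- `ν(G)`: maximum number of pairwise vertex-disjoint cycles. -/
noncomputable def nu (G : V → V → Prop) : ℕ :=
  sSup {k | ∃ P : List (List V), IsPacking G P ∧ P.length = k}

/-- A source: a vertex of in-degree zero. -/
def IsSource (G : V → V → Prop) (v : V) : Prop := ∀ u, ¬ G u v

/-- A principal path w.r.t. a packing `P`: a path none of whose arcs and none of whose
internal vertices belong to a cycle of the packing. -/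
def IsPrincipal (G : V → V → Prop) (P : List (List V)) (l : List V) : Prop :=
  IsPath G l ∧ (∀ a ∈ PathArcs l, ∀ C ∈ P, a ∉ CycArcs C) ∧
    ∀ v ∈ l.tail.dropLast, ∀ C ∈ P, v ∉ C

/-- There is a principal path (w.r.t. packing `P`) from a vertex satisfying `A` to `v`. -/
def PrincipalFrom (G : V → V → Prop) (P : List (List V)) (A : V → Prop) (v : V) : Prop :=
  ∃ l : List V, IsPrincipal G P l ∧ (∃ u, l.head? = some u ∧ A u) ∧ l.getLast? = some v

/-- A special packing. -/
def IsSpecialPacking (G : V → V → Prop) (P : List (List V)) : Prop :=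
  IsPacking G P ∧
    ∀ Ci ∈ P, ∀ v ∈ Ci,
      (∃ Cj ∈ P, Cj ≠ Ci ∧ PrincipalFrom G P (fun u => u ∈ Cj) v) →
      (PrincipalFrom G P (fun u => u ∈ Ci) v ∨ PrincipalFrom G P (IsSource G) v)

/-- `ν*(G)`: maximum size of a special packing. -/
noncomputable def nuStar (G : V → V → Prop) : ℕ :=
  sSup {k | ∃ P : List (List V), IsSpecialPacking G P ∧ P.length = k}

/-- Two vertex-disjoint cycles are independent if there is no arc between them. -/
def Independent (G : V → V → Prop) (C₁ C₂ : List V) : Prop :=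
  (∀ v ∈ C₁, v ∉ C₂) ∧ ∀ u ∈ C₁, ∀ v ∈ C₂, ¬ G u v ∧ ¬ G v u

/-- The arc `uv` is positive. -/
def PosArc [DecidableEq V] (f : (V → Bool) → V → Bool) (u v : V) : Prop :=
  ∀ x : V → Bool, x u = false → f x v ≤ f (Function.update x u true) v

/-- The arc `uv` is negative. -/
def NegArc [DecidableEq V] (f : (V → Bool) → V → Bool) (u v : V) : Prop :=
  ∀ x : V → Bool, x u = false → f (Function.update x u true) v ≤ f x v

/-- The sign of the arc `uv` in the signed interaction graph of `f`. -/
noncomputable def arcSign [DecidableEq V] (f : (V → Bool) → V → Bool) (u v : V) : ℤ :=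
  if PosArc f u v then 1 else if NegArc f u v then -1 else 0

/-- The sign of a cycle: product of the signs of its arcs. -/
def CycleSign (σ : V → V → ℤ) (l : List V) : ℤ :=
  ((CycArcs l).map fun a => σ a.1 a.2).prod

/-- `ν⁺(G,σ)`: maximum number of pairwise vertex-disjoint non-negative cycles. -/
noncomputable def nuPlus (G : V → V → Prop) (σ : V → V → ℤ) : ℕ :=
  sSup {k | ∃ P : List (List V),
    IsPacking G P ∧ (∀ C ∈ P, 0 ≤ CycleSign σ C) ∧ P.length = k}

/-- A monotone feedback vertex set of `(G,σ)`. -/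
def IsMonFVS (G : V → V → Prop) (σ : V → V → ℤ) (J : Finset V) : Prop :=
  IsFVS G J ∧ ∀ u v, G u v → σ u v ≠ 1 → v ∈ J

/-- `τ_m(G,σ)`: minimum size of a monotone feedback vertex set. -/
noncomputable def tauM [Fintype V] (G : V → V → Prop) (σ : V → V → ℤ) : ℕ :=
  sInf {k | ∃ J : Finset V, IsMonFVS G σ J ∧ J.card = k}

/-- The `I`-switch of the arc-labelling `σ`. -/
noncomputable def switchSign (σ : V → V → ℤ) (I : Finset V) (u v : V) : ℤ :=
  if ((u ∈ I) ↔ (v ∈ I)) then σ u v else -σ u v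

/-- `τ*_m(G,σ)`: minimum of `τ_m` over all switches of `(G,σ)`. -/
noncomputable def tauMStar [Fintype V] (G : V → V → Prop) (σ : V → V → ℤ) : ℕ :=
  sInf {k | ∃ I : Finset V, tauM G (switchSign σ I) = k}

end Defs

section Patterns

variable {m : Type*}

/-- A `k`-pattern in `P ⊆ {0,1}^m`. -/
def IsPattern (P : Set (m → Bool)) (k : ℕ) (X Y : Fin k → m → Bool) : Prop :=
  Function.Injective X ∧ Function.Injective Y ∧
    (∀ p, X p ∈ P) ∧ (∀ p, Y p ∈ P) ∧ ∀ p q, X p ≤ Y q ↔ p ≠ q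

/-- `P` has a `k`-pattern. -/
def HasPattern (P : Set (m → Bool)) (k : ℕ) : Prop :=
  ∃ X Y, IsPattern P k X Y

/-- `P` has a special `k`-pattern: a `k`-pattern with `y^p = complement of x^p`. -/
def HasSpecialPattern (P : Set (m → Bool)) (k : ℕ) : Prop :=
  ∃ X Y, IsPattern P k X Y ∧ ∀ p, Y p = fun v => !(X p v)

end Patterns

section ListLemmas
variable {V : Type*}

lemma st14_mem_cycArcs {l : List V} {a b : V} (h : (a, b) ∈ CycArcs l) : a ∈ l ∧ b ∈ l := by
  unfold CycArcs at h
  obtain ⟨ha, hb⟩ := List.of_mem_zip h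
  have hb' := List.mem_of_mem_tail hb
  constructor
  · rcases List.mem_append.1 ha with h | h
    · exact h
    · exact List.take_subset _ _ h
  · rcases List.mem_append.1 hb' with h | h
    · exact h
    · exact List.take_subset _ _ h

lemma st14_exists_pred {l : List V} (hl : l ≠ []) {v : V} (hv : v ∈ l) :
    ∃ u ∈ l, (u, v) ∈ CycArcs l := by
  have hlen : 0 < l.length := List.length_pos_iff.2 hl
  have htake : (l.take 1).length = 1 := by
    rw [List.length_take]; omega
  have hL : (l ++ l.take 1).length = l.length + 1 := by
    rw [List.length_append, htake]
  have hzlen : (CycArcs l).length = l.length := by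
    unfold CycArcs
    rw [List.length_zip, List.length_tail, hL]
    omega
  have key : ∀ c : ℕ, (hc : c < l.length) → (hc1 : c + 1 < l.length + 1) →
      ((l ++ l.take 1)[c]'(by omega), (l ++ l.take 1)[c+1]'(by rw [hL]; omega)) ∈ CycArcs l := by
    intro c hc hc1
    have h1 : c < (CycArcs l).length := by omega
    have := List.getElem_mem (l := CycArcs l) h1
    have he : (CycArcs l)[c]'h1 =
        ((l ++ l.take 1)[c]'(by rw [hL]; omega), (l ++ l.take 1)[c+1]'(by rw [hL]; omega)) := by
      simp only [CycArcs, List.getElem_zip, List.getElem_tail]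
    rw [he] at this
    exact this
  obtain ⟨t, ht, hvt⟩ := List.mem_iff_getElem.1 hv
  rcases Nat.eq_zero_or_pos t with h0 | hpos
  · subst h0
    refine ⟨l[l.length - 1]'(by omega), List.getElem_mem _, ?_⟩
    have := key (l.length - 1) (by omega) (by omega)
    have e1 : (l ++ l.take 1)[l.length - 1]'(by rw [hL]; omega) = l[l.length - 1]'(by omega) :=
      List.getElem_append_left (by omega)
    have e2 : (l ++ l.take 1)[l.length - 1 + 1]'(by rw [hL]; omega) = v := by
      have hh : l.length - 1 + 1 = l.length := by omega
      rw [List.getElem_append_right (by omega)]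
      simp only [hh, Nat.sub_self]
      rw [List.getElem_take]
      · exact hvt
    rw [e1, e2] at this
    exact this
  · obtain ⟨s, rfl⟩ : ∃ s, t = s + 1 := ⟨t - 1, by omega⟩
    refine ⟨l[s]'(by omega), List.getElem_mem _, ?_⟩
    have := key s (by omega) (by omega)
    have e1 : (l ++ l.take 1)[s]'(by rw [hL]; omega) = l[s]'(by omega) :=
      List.getElem_append_left (by omega)
    have e2 : (l ++ l.take 1)[s+1]'(by rw [hL]; omega) = v := by
      rw [List.getElem_append_left (by omega)]
      exact hvt
    rw [e1, e2] at this
    exact this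

end ListLemmas

section ListLemmas2
variable {V : Type*}

lemma st14_pathArcs_cons_cons (a b : V) (t : List V) :
    PathArcs (a :: b :: t) = (a, b) :: PathArcs (b :: t) := rfl

lemma st14_mem_pathArcs {l : List V} {a b : V} (h : (a, b) ∈ PathArcs l) :
    a ∈ l ∧ b ∈ l.tail := List.of_mem_zip h

lemma st14_pathArcs_concat {l : List V} {w : V} (hw : l.getLast? = some w) (v : V) :
    PathArcs (l ++ [v]) = PathArcs l ++ [(w, v)] := by
  induction l with
  | nil => simp at hw
  | cons a t ih =>
    cases t with
    | nil =>
      simp at hw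
      subst hw
      rfl
    | cons b t' =>
      have hw' : (b :: t').getLast? = some w := by
        rw [List.getLast?_cons_cons] at hw; exact hw
      have := ih hw'
      show PathArcs (a :: b :: (t' ++ [v])) = _
      rw [st14_pathArcs_cons_cons]
      have : PathArcs (b :: t' ++ [v]) = PathArcs (b :: t') ++ [(w, v)] := this
      rw [show b :: (t' ++ [v]) = b :: t' ++ [v] from rfl, this]
      rfl

lemma st14_tail_concat {l : List V} (hl : l ≠ []) (v : V) :
    (l ++ [v]).tail = l.tail ++ [v] := by
  cases l with
  | nil => exact absurd rfl hl
  | cons a t => rfl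

lemma st14_head?_concat {l : List V} (hl : l ≠ []) (v : V) :
    (l ++ [v]).head? = l.head? := by
  cases l with
  | nil => exact absurd rfl hl
  | cons a t => rfl

lemma st14_tail_dropLast (l : List V) : l.dropLast.tail = l.tail.dropLast := by
  cases l with
  | nil => rfl
  | cons a t =>
    cases t with
    | nil => rfl
    | cons b t' => rfl

lemma st14_getLast?_tail_or {l : List V} {w : V} (h : l.getLast? = some w) :
    w ∈ l.tail ∨ l = [w] := by
  cases l with
  | nil => simp at h
  | cons a t =>
    cases t with
    | nil => simp at h; subst h; right; rfl
    | cons b t' =>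
      left
      rw [List.getLast?_cons_cons] at h
      exact List.mem_of_mem_getLast? h

lemma st14_head?_dropLast {l : List V} (h : 2 ≤ l.length) :
    l.dropLast.head? = l.head? := by
  cases l with
  | nil => simp at h
  | cons a t =>
    cases t with
    | nil => simp at h
    | cons b t' => rfl

lemma st14_dropLast_ne_nil {l : List V} (h : 2 ≤ l.length) : l.dropLast ≠ [] := by
  have : l.dropLast.length = l.length - 1 := List.length_dropLast
  intro hc
  rw [hc] at this
  simp at this
  omega

end ListLemmas2

section Core
variable {n : ℕ} (G : Fin n → Fin n → Prop) (P : List (List (Fin n)))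

noncomputable def st14_pred (v : Fin n) : Fin n :=
  if h : ∃ u, ∃ C ∈ P, (u, v) ∈ CycArcs C then h.choose else v

noncomputable def st14_f (x : Fin n → Bool) (v : Fin n) : Bool :=
  if (∀ u, ¬ G u v) then false
  else if (∃ C ∈ P, v ∈ C) then
    x (st14_pred P v) || decide ((∃ w, G w v ∧ w ≠ st14_pred P v) ∧
      ∀ u, G u v → u ≠ st14_pred P v → x u = true)
  else decide (∀ u, G u v → x u = true)

variable {G P}

lemma st14_disjoint (hP : IsPacking G P) {C C' : List (Fin n)} {v : Fin n}
    (hC : C ∈ P) (hC' : C' ∈ P) (hv : v ∈ C) (hv' : v ∈ C') : C = C' := by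
  obtain ⟨i, hi⟩ := List.mem_iff_get.1 hC
  obtain ⟨j, hj⟩ := List.mem_iff_get.1 hC'
  have hpw := List.pairwise_iff_get.1 hP.2
  by_contra hne
  have hij : i ≠ j := by rintro rfl; rw [hi] at hj; exact hne hj
  rcases lt_or_gt_of_ne hij with h | h
  · exact (hpw i j h) v (hi ▸ hv) (hj ▸ hv')
  · exact (hpw j i h) v (hj ▸ hv') (hi ▸ hv)

lemma st14_pred_spec (hP : IsPacking G P) {C : List (Fin n)} {v : Fin n}
    (hC : C ∈ P) (hv : v ∈ C) :
    st14_pred P v ∈ C ∧ (st14_pred P v, v) ∈ CycArcs C ∧ G (st14_pred P v) v := by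
  have hcyc := hP.1 C hC
  obtain ⟨u, hu, harc⟩ := st14_exists_pred hcyc.1 hv
  have hex : ∃ u, ∃ C ∈ P, (u, v) ∈ CycArcs C := ⟨u, C, hC, harc⟩
  unfold st14_pred
  rw [dif_pos hex]
  obtain ⟨C', hC', harc'⟩ := hex.choose_spec
  have hvC' : v ∈ C' := (st14_mem_cycArcs harc').2
  have : C' = C := st14_disjoint hP hC' hC hvC' hv
  rw [this] at harc'
  exact ⟨(st14_mem_cycArcs harc').1, harc', (hP.1 C hC).2.2 _ harc'⟩

lemma st14_bool_le {a b : Bool} (h : a ≤ b) (ha : a = true) : b = true := by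
  subst ha
  cases b
  · exact absurd h (by decide)
  · rfl

lemma st14_f_mono : Monotone (st14_f G P) := by
  intro x y hxy v
  have himp : st14_f G P x v = true → st14_f G P y v = true := by
    unfold st14_f
    split_ifs with h1 h2
    · exact fun h => h
    · intro hx
      simp only [Bool.or_eq_true] at hx ⊢
      rcases hx with h | h
      · exact Or.inl (st14_bool_le (hxy _) h)
      · refine Or.inr ?_
        have hd := of_decide_eq_true h
        exact decide_eq_true
          ⟨hd.1, fun u hu hne => st14_bool_le (hxy u) (hd.2 u hu hne)⟩
    · intro hx
      have hd := of_decide_eq_true hx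
      exact decide_eq_true (fun u hu => st14_bool_le (hxy u) (hd u hu))
  cases hx : st14_f G P x v
  · exact Bool.false_le _
  · rw [himp hx]

lemma st14_f_source {v : Fin n} (hv : IsSource G v) (x : Fin n → Bool) :
    st14_f G P x v = false := by
  unfold st14_f
  rw [if_pos (show ∀ u, ¬ G u v from hv)]


lemma st14_f_eq_cyc {v : Fin n} (h1 : ¬∀ u, ¬G u v) (h2 : ∃ C ∈ P, v ∈ C) (x : Fin n → Bool) :
    st14_f G P x v = (x (st14_pred P v) || decide ((∃ w, G w v ∧ w ≠ st14_pred P v) ∧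
      ∀ u, G u v → u ≠ st14_pred P v → x u = true)) := by
  unfold st14_f; rw [if_neg h1, if_pos h2]

lemma st14_f_eq_and {v : Fin n} (h1 : ¬∀ u, ¬G u v) (h2 : ¬∃ C ∈ P, v ∈ C) (x : Fin n → Bool) :
    st14_f G P x v = decide (∀ u, G u v → x u = true) := by
  unfold st14_f; rw [if_neg h1, if_neg h2]

lemma st14_depends (hP : IsPacking G P) (u v : Fin n) :
    G u v ↔ Depends (st14_f G P) u v := by
  constructor
  · intro hGuv
    have hsrc : ¬ ∀ w, ¬ G w v := fun h => h u hGuv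
    by_cases hcyc : ∃ C ∈ P, v ∈ C
    · obtain ⟨C, hC, hvC⟩ := hcyc
      have hcyc : ∃ C ∈ P, v ∈ C := ⟨C, hC, hvC⟩
      have hGp : G (st14_pred P v) v := (st14_pred_spec hP hC hvC).2.2
      by_cases hup : u = st14_pred P v
      · refine ⟨fun _ => false, fun w => decide (w = st14_pred P v), ?_, ?_⟩
        · intro w hw
          show (false : Bool) = decide (w = st14_pred P v)
          rw [decide_eq_false (fun he : w = st14_pred P v => hw (he.trans hup.symm))]
        · have hl : st14_f G P (fun _ => false) v = false := by
            rw [st14_f_eq_cyc hsrc hcyc]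
            simp
          have hr : st14_f G P (fun w => decide (w = st14_pred P v)) v = true := by
            rw [st14_f_eq_cyc hsrc hcyc]
            simp
          rw [hl, hr]
          exact Bool.false_ne_true
      · refine ⟨fun w => decide (w ≠ u ∧ w ≠ st14_pred P v),
          fun w => decide (w ≠ st14_pred P v), ?_, ?_⟩
        · intro w hw
          exact decide_eq_decide.mpr ⟨fun h => h.2, fun h => ⟨hw, h⟩⟩
        · have hl : st14_f G P (fun w => decide (w ≠ u ∧ w ≠ st14_pred P v)) v = false := by
            rw [st14_f_eq_cyc hsrc hcyc]
            have e1 : (decide (st14_pred P v ≠ u ∧ st14_pred P v ≠ st14_pred P v) : Bool)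
                = false := by
              simp
            have e2 : (decide ((∃ w, G w v ∧ w ≠ st14_pred P v) ∧ ∀ u', G u' v →
                u' ≠ st14_pred P v →
                (decide (u' ≠ u ∧ u' ≠ st14_pred P v) : Bool) = true) : Bool) = false := by
              apply decide_eq_false
              rintro ⟨-, hall⟩
              have := hall u hGuv hup
              simp at this
            rw [e1, e2]
            rfl
          have hr : st14_f G P (fun w => decide (w ≠ st14_pred P v)) v = true := by
            rw [st14_f_eq_cyc hsrc hcyc]
            simp only [Bool.or_eq_true, decide_eq_true_eq]
            exact Or.inr ⟨⟨u, hGuv, hup⟩, fun u' _ h => by simp [h]⟩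
          rw [hl, hr]
          exact Bool.false_ne_true
    · refine ⟨fun w => decide (w ≠ u), fun _ => true, ?_, ?_⟩
      · intro w hw
        exact decide_eq_true hw
      · have hl : st14_f G P (fun w => decide (w ≠ u)) v = false := by
          rw [st14_f_eq_and hsrc hcyc]
          simp only [decide_eq_false_iff_not, not_forall]
          exact ⟨u, by simp [hGuv]⟩
        have hr : st14_f G P (fun _ => true) v = true := by
          rw [st14_f_eq_and hsrc hcyc]
          simp
        rw [hl, hr]
        exact Bool.false_ne_true
  · rintro ⟨x, y, hagree, hne⟩
    by_contra hG
    apply hne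
    have hxyeq : ∀ w, G w v → x w = y w := fun w hw =>
      hagree w (fun he => hG (he ▸ hw))
    unfold st14_f
    split_ifs with h1 h2
    · rfl
    · obtain ⟨C, hC, hvC⟩ := h2
      have hGp : G (st14_pred P v) v := (st14_pred_spec hP hC hvC).2.2
      rw [hxyeq _ hGp]
      congr 1
      apply decide_eq_decide.mpr
      constructor
      · rintro ⟨h3, h4⟩
        exact ⟨h3, fun u' hu' hnu' => (hxyeq u' hu') ▸ h4 u' hu' hnu'⟩
      · rintro ⟨h3, h4⟩
        exact ⟨h3, fun u' hu' hnu' => (hxyeq u' hu').symm ▸ h4 u' hu' hnu'⟩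
    · apply decide_eq_decide.mpr
      constructor
      · exact fun h w hw => (hxyeq w hw) ▸ h w hw
      · exact fun h w hw => (hxyeq w hw).symm ▸ h w hw


variable (G P)

noncomputable def st14_c (σ : Fin P.length → Bool) (v : Fin n) : Bool :=
  decide (∃ j : Fin P.length, σ j = true ∧ v ∈ P.get j)

noncomputable def st14_X (σ : Fin P.length → Bool) : ℕ → Fin n → Bool
  | 0 => fun _ => false
  | m + 1 => fun v => st14_f G P (st14_X σ m) v || st14_c P σ v

variable {G P}
variable {σ : Fin P.length → Bool}

lemma st14_bool_or_le {a a' b : Bool} (h : a ≤ a') : (a || b) ≤ (a' || b) := by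
  cases a <;> cases a' <;> cases b <;> simp_all

lemma st14_X_mono_succ (m : ℕ) : st14_X G P σ m ≤ st14_X G P σ (m + 1) := by
  induction m with
  | zero => intro v; show false ≤ _; exact Bool.false_le _
  | succ m ih =>
    intro v
    show (st14_f G P (st14_X G P σ m) v || st14_c P σ v) ≤
      (st14_f G P (st14_X G P σ (m+1)) v || st14_c P σ v)
    exact st14_bool_or_le (st14_f_mono ih v)

lemma st14_X_mono {m m' : ℕ} (h : m ≤ m') : st14_X G P σ m ≤ st14_X G P σ m' :=
  monotone_nat_of_le_succ st14_X_mono_succ h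

lemma st14_X_le_true {m m' : ℕ} (h : m ≤ m') {v : Fin n}
    (hv : st14_X G P σ m v = true) : st14_X G P σ m' v = true :=
  st14_bool_le (st14_X_mono h v) hv

lemma st14_c_off (hoff : ¬ ∃ C ∈ P, v ∈ C) : st14_c P σ v = false := by
  apply decide_eq_false
  rintro ⟨j, -, hj⟩
  exact hoff ⟨P.get j, P.get_mem _, hj⟩

lemma st14_src (hP : IsPacking G P) {v : Fin n} (hv : IsSource G v) (m : ℕ) :
    st14_X G P σ m v = false := by
  induction m with
  | zero => rfl
  | succ m ih =>
    show (st14_f G P (st14_X G P σ m) v || st14_c P σ v) = false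
    have hc : st14_c P σ v = false := by
      apply st14_c_off
      rintro ⟨C, hC, hvC⟩
      exact hv _ (st14_pred_spec hP hC hvC).2.2
    rw [st14_f_source hv, hc]
    rfl

lemma st14_step (hP : IsPacking G P) {w u : Fin n} (hoff : ¬ ∃ C ∈ P, w ∈ C)
    {s : ℕ} (hw : st14_X G P σ s w = true) (hu : G u w) : st14_X G P σ s u = true := by
  cases s with
  | zero => exact absurd hw (by simp [st14_X])
  | succ s =>
    have hc : st14_c P σ w = false := st14_c_off hoff
    have hx : st14_f G P (st14_X G P σ s) w = true := by
      have : (st14_f G P (st14_X G P σ s) w || st14_c P σ w) = true := hw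
      rw [hc] at this
      simpa using this
    have h1 : ¬ ∀ u', ¬ G u' w := fun h => h u hu
    rw [st14_f_eq_and h1 hoff] at hx
    have := of_decide_eq_true hx u hu
    exact st14_X_le_true (Nat.le_succ s) this

lemma st14_c_le_X {v : Fin n} (hc : st14_c P σ v = true) {m : ℕ} (hm : 1 ≤ m) :
    st14_X G P σ m v = true := by
  apply st14_X_le_true hm
  show (st14_f G P (st14_X G P σ 0) v || st14_c P σ v) = true
  rw [hc]
  simp

lemma st14_X_stab_succ {m : ℕ} (h : st14_X G P σ m = st14_X G P σ (m+1)) :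
    st14_X G P σ (m+1) = st14_X G P σ (m+2) := by
  funext v
  show (st14_f G P (st14_X G P σ m) v || st14_c P σ v) =
    (st14_f G P (st14_X G P σ (m+1)) v || st14_c P σ v)
  rw [h]

lemma st14_X_stab : st14_X G P σ n = st14_X G P σ (n+1) := by
  classical
  set T : ℕ → Finset (Fin n) := fun m => Finset.univ.filter (fun v => st14_X G P σ m v = true)
    with hT
  have claim : ∀ m, st14_X G P σ m = st14_X G P σ (m+1) ∨ m ≤ (T m).card := by
    intro m
    induction m with
    | zero => exact Or.inr (Nat.zero_le _)
    | succ m ih =>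
      rcases ih with h | h
      · exact Or.inl (st14_X_stab_succ h)
      · by_cases heq : st14_X G P σ m = st14_X G P σ (m+1)
        · exact Or.inl (st14_X_stab_succ heq)
        · right
          have hsub : T m ⊆ T (m+1) := by
            intro v hv
            simp only [hT, Finset.mem_filter, Finset.mem_univ, true_and] at hv ⊢
            exact st14_X_le_true (Nat.le_succ m) hv
          obtain ⟨v, hv⟩ : ∃ v, st14_X G P σ m v ≠ st14_X G P σ (m+1) v := by
            by_contra hc
            push_neg at hc
            exact heq (funext hc)
          have hv1 : st14_X G P σ (m+1) v = true := by
            cases h1 : st14_X G P σ m v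
            · cases h2 : st14_X G P σ (m+1) v
              · exact absurd (h1.trans h2.symm) hv
              · rfl
            · exact st14_X_le_true (Nat.le_succ m) h1
          have hv0 : v ∉ T m := by
            simp only [hT, Finset.mem_filter, Finset.mem_univ, true_and]
            intro hc
            exact hv (hc.trans (st14_X_le_true (Nat.le_succ m) hc).symm)
          have hss : T m ⊂ T (m+1) := ⟨hsub, fun hc => hv0 (hc (by
            simp only [hT, Finset.mem_filter, Finset.mem_univ, true_and]; exact hv1))⟩
          have := Finset.card_lt_card hss
          omega
  rcases claim n with h | h
  · exact h
  · have hle : (T n).card ≤ n := by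
      have := Finset.card_le_univ (T n)
      simpa using this
    have hcard : (T n).card = n := le_antisymm hle h
    have huniv : T n = Finset.univ := by
      apply Finset.eq_univ_of_card
      rw [hcard, Fintype.card_fin]
    funext v
    have hvT : v ∈ T n := huniv ▸ Finset.mem_univ v
    simp only [hT, Finset.mem_filter, Finset.mem_univ, true_and] at hvT
    rw [hvT, st14_X_le_true (Nat.le_succ n) hvT]

lemma st14_X_stab_all (j : ℕ) : st14_X G P σ (n + j) = st14_X G P σ (n + j + 1) := by
  induction j with
  | zero => exact st14_X_stab
  | succ j ih => exact st14_X_stab_succ ih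

lemma st14_X_stab_ge (k : ℕ) : st14_X G P σ (n + k) = st14_X G P σ n := by
  induction k with
  | zero => rfl
  | succ k ih => exact (st14_X_stab_all k).symm.trans ih

lemma st14_fixed (hP : IsPacking G P) :
    st14_f G P (st14_X G P σ n) = st14_X G P σ n := by
  funext v
  have hv : st14_X G P σ n v = (st14_f G P (st14_X G P σ n) v || st14_c P σ v) := by
    exact congrFun (st14_X_stab (σ := σ)) v
  by_cases hc : st14_c P σ v = true
  · obtain ⟨j, hσj, hvj⟩ := of_decide_eq_true hc
    have hCmem : P.get j ∈ P := P.get_mem _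
    have hspec := st14_pred_spec hP hCmem hvj
    have hcp : st14_c P σ (st14_pred P v) = true := decide_eq_true ⟨j, hσj, hspec.1⟩
    have hn1 : 1 ≤ n := v.pos
    have hxp : st14_X G P σ n (st14_pred P v) = true := st14_c_le_X hcp hn1
    have hf : st14_f G P (st14_X G P σ n) v = true := by
      rw [st14_f_eq_cyc (fun h => h _ hspec.2.2) ⟨P.get j, hCmem, hvj⟩, hxp]
      simp
    rw [hv, hf]
    simp
  · have hcf : st14_c P σ v = false := by
      cases h : st14_c P σ v
      · rfl
      · exact absurd h hc
    rw [hv, hcf, Bool.or_false]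


lemma st14_c_def (v : Fin n) :
    st14_c P σ v = decide (∃ j : Fin P.length, σ j = true ∧ v ∈ P.get j) := rfl

lemma st14_X_zero (v : Fin n) : st14_X G P σ 0 v = false := rfl

lemma st14_X_succ (m : ℕ) (v : Fin n) :
    st14_X G P σ (m+1) v = (st14_f G P (st14_X G P σ m) v || st14_c P σ v) := rfl

lemma st14_index_unique (hP : IsPacking G P) {i j : Fin P.length} {v : Fin n}
    (hi : v ∈ P.get i) (hj : v ∈ P.get j) : i = j := by
  by_contra hne
  have hpw := List.pairwise_iff_get.1 hP.2
  rcases lt_or_gt_of_ne hne with h | h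
  · exact hpw i j h v hi hj
  · exact hpw j i h v hj hi

lemma st14_prop (hP : IsPacking G P) {s : ℕ} :
    ∀ L : List (Fin n), (∀ a ∈ PathArcs L, G a.1 a.2) →
      (∀ z ∈ L.tail, ¬ ∃ C ∈ P, z ∈ C) → ∀ hd z : Fin n, L.head? = some hd →
      L.getLast? = some z → st14_X G P σ s z = true → st14_X G P σ s hd = true := by
  intro L
  induction L with
  | nil => intro _ _ hd z h; simp at h
  | cons a Ltl ih =>
    intro harcs htail hd z hhead hlast hz
    cases Ltl with
    | nil =>
      simp at hhead hlast
      rw [← hhead, hlast]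
      exact hz
    | cons b Ltl' =>
      have hhd : hd = a := by
        simp at hhead
        exact hhead.symm
      have hlast' : (b::Ltl').getLast? = some z := by
        rw [List.getLast?_cons_cons] at hlast; exact hlast
      have harcs' : ∀ a' ∈ PathArcs (b::Ltl'), G a'.1 a'.2 := fun a' ha' =>
        harcs a' (by rw [st14_pathArcs_cons_cons]; exact List.mem_cons_of_mem _ ha')
      have htail' : ∀ y ∈ (b::Ltl').tail, ¬ ∃ C ∈ P, y ∈ C := fun y hy =>
        htail y (List.mem_cons_of_mem _ hy)
      have hXb : st14_X G P σ s b = true := ih harcs' htail' b z rfl hlast' hz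
      have hbpack : ¬ ∃ C ∈ P, b ∈ C := htail b (by simp)
      have hGab : G a b := harcs (a, b) (by rw [st14_pathArcs_cons_cons]; simp)
      rw [hhd]
      exact st14_step hP hbpack hXb hGab

lemma st14_main (hSP : IsSpecialPacking G P) (σ : Fin P.length → Bool) :
    ∀ m (i : Fin P.length) (v : Fin n), σ i = false → v ∈ P.get i →
      st14_X G P σ m v = false := by
  have hP : IsPacking G P := hSP.1
  intro m
  induction m using Nat.strong_induction_on with
  | _ m IH =>
  intro i v hσi hvC
  by_contra hvt'
  have hvt : st14_X G P σ m v = true := by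
    cases h : st14_X G P σ m v
    · exact absurd h hvt'
    · rfl
  clear hvt'
  have hCmem : P.get i ∈ P := P.get_mem _
  have hspec := st14_pred_spec hP hCmem hvC
  have hnsrc : ¬ ∀ u, ¬ G u v := fun h => h _ hspec.2.2
  -- m = t+1
  obtain ⟨t, rfl⟩ : ∃ t, m = t + 1 := by
    cases m with
    | zero => exact absurd (st14_X_zero v) (by rw [hvt]; simp)
    | succ t => exact ⟨t, rfl⟩
  have hc : st14_c P σ v = false := by
    rw [st14_c_def]
    apply decide_eq_false
    rintro ⟨j, hσj, hvj⟩
    have := st14_index_unique hP hvC hvj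
    rw [← this] at hσj
    rw [hσi] at hσj
    exact Bool.false_ne_true hσj
  have hft : st14_f G P (st14_X G P σ t) v = true := by
    have := hvt
    rw [st14_X_succ, hc, Bool.or_false] at this
    exact this
  rw [st14_f_eq_cyc hnsrc ⟨P.get i, hCmem, hvC⟩] at hft
  have hpredf : st14_X G P σ t (st14_pred P v) = false :=
    IH t (Nat.lt_succ_self t) i (st14_pred P v) hσi hspec.1
  rw [hpredf, Bool.false_or] at hft
  obtain ⟨⟨w0, hGw0, hw0ne⟩, hall⟩ := of_decide_eq_true hft
  -- stages
  set st : Fin n → ℕ := fun w => sInf {t' | st14_X G P σ t' w = true} with hst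
  have hst_le : ∀ {t' w}, st14_X G P σ t' w = true → st w ≤ t' := fun {t' w} h =>
    Nat.sInf_le h
  have hst_mem : ∀ {t' w}, st14_X G P σ t' w = true → st14_X G P σ (st w) w = true :=
    fun {t' w} h => Nat.sInf_mem (⟨t', h⟩ : {t' | st14_X G P σ t' w = true}.Nonempty)
  -- backward path extraction
  have BWD : ∀ t', t' < t + 1 → ∀ w, st14_X G P σ t' w = true →
      ∃ l : List (Fin n), l ≠ [] ∧ l.getLast? = some w ∧
        (∃ j : Fin P.length, ∃ h : Fin n, σ j = true ∧ l.head? = some h ∧ h ∈ P.get j) ∧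
        (∀ a ∈ PathArcs l, G a.1 a.2) ∧
        (∀ z ∈ l.tail, ¬ ∃ C ∈ P, z ∈ C) ∧
        List.Chain' (fun a b => st a < st b) l := by
    intro t'
    induction t' using Nat.strong_induction_on with
    | _ t' IHb =>
    intro ht' w hw
    by_cases hpack : ∃ C ∈ P, w ∈ C
    · obtain ⟨C, hC, hwC⟩ := hpack
      obtain ⟨j, hj⟩ := List.get_of_mem hC
      have hσj : σ j = true := by
        cases hσj : σ j
        · exact absurd hw (by rw [IH t' ht' j w hσj (hj ▸ hwC)]; simp)
        · rfl
      refine ⟨[w], by simp, by simp, ⟨j, w, hσj, by simp, hj ▸ hwC⟩, ?_, by intro z hz; simp at hz, List.isChain_singleton _⟩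
      intro a ha
      exact absurd ha (by simp [PathArcs])
    · have ht0mem : st14_X G P σ (st w) w = true := hst_mem hw
      have ht0le : st w ≤ t' := hst_le hw
      obtain ⟨s, hs⟩ : ∃ s, st w = s + 1 := by
        cases h0 : st w with
        | zero => rw [h0] at ht0mem; exact absurd (st14_X_zero w) (by rw [ht0mem]; simp)
        | succ s => exact ⟨s, rfl⟩
      have hnsrcw : ¬ ∀ u, ¬ G u w := by
        intro hsrc
        exact absurd hw (by rw [st14_src hP hsrc]; simp)
      have hfw : st14_f G P (st14_X G P σ s) w = true := by
        have := ht0mem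
        rw [hs, st14_X_succ, st14_c_off hpack, Bool.or_false] at this
        exact this
      rw [st14_f_eq_and hnsrcw hpack] at hfw
      have hall' := of_decide_eq_true hfw
      obtain ⟨u0, hu0⟩ : ∃ u, G u w := by
        push_neg at hnsrcw
        exact hnsrcw
      have hXu0 : st14_X G P σ s u0 = true := hall' u0 hu0
      have hslt : s < t' := by omega
      obtain ⟨l0, hl0ne, hl0last, hl0head, hl0arcs, hl0tail, hl0chain⟩ :=
        IHb s hslt (by omega) u0 hXu0
      refine ⟨l0 ++ [w], by simp, List.getLast?_concat, ?_, ?_, ?_, ?_⟩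
      · obtain ⟨j, h, hj1, hj2, hj3⟩ := hl0head
        exact ⟨j, h, hj1, by rw [st14_head?_concat hl0ne]; exact hj2, hj3⟩
      · intro a ha
        rw [st14_pathArcs_concat hl0last w] at ha
        rcases List.mem_append.1 ha with h | h
        · exact hl0arcs a h
        · have : a = (u0, w) := by simpa using h
          rw [this]
          exact hu0
      · intro z hz
        rw [st14_tail_concat hl0ne] at hz
        rcases List.mem_append.1 hz with h | h
        · exact hl0tail z h
        · have : z = w := by simpa using h
          rw [this]
          exact hpack
      · show List.IsChain _ (l0 ++ [w])
        rw [List.isChain_append]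
        refine ⟨hl0chain, List.isChain_singleton _, ?_⟩
        intro x hx y hy
        have hxu : x = u0 := by rw [hl0last] at hx; exact (by simpa using hx : u0 = x).symm
        have hyw : y = w := by exact (by simpa using hy : w = y).symm
        rw [hxu, hyw]
        have : st u0 ≤ s := hst_le hXu0
        omega
  -- construct the principal path from cycle j to v
  have hXw0 : st14_X G P σ t w0 = true := hall w0 hGw0 hw0ne
  obtain ⟨l0, hl0ne, hl0last, ⟨j, hh, hσj, hl0head, hhj⟩, hl0arcs, hl0tail, hl0chain⟩ :=
    BWD t (Nat.lt_succ_self t) w0 hXw0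
  have hvnotget : ∀ z, z ∈ l0.tail → z ≠ v := by
    intro z hz hzv
    exact hl0tail z hz ⟨P.get i, hCmem, hzv ▸ hvC⟩
  have hl0nodup : l0.Nodup := by
    haveI : IsTrans (Fin n) (fun a b => st a < st b) := ⟨fun a b c h1 h2 => lt_trans h1 h2⟩
    have hpw := List.isChain_iff_pairwise.1 hl0chain
    exact hpw.imp (fun {a b} h => fun he => absurd (he ▸ h) (lt_irrefl _))
  have hprinc : IsPrincipal G P (l0 ++ [v]) := by
    refine ⟨⟨?_, ?_, ?_, ?_⟩, ?_, ?_⟩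
    · rw [List.length_append]
      have := List.length_pos_iff.2 hl0ne
      simp
      omega
    · rw [List.dropLast_concat]
      exact hl0nodup
    · rw [st14_tail_concat hl0ne]
      rw [List.nodup_append]
      refine ⟨hl0nodup.tail, List.nodup_singleton _, ?_⟩
      intro a ha b hb hab
      have : a = v := by simp at hb; rw [hab, hb]
      exact hvnotget a ha this
    · intro a ha
      rw [st14_pathArcs_concat hl0last v] at ha
      rcases List.mem_append.1 ha with h | h
      · exact hl0arcs a h
      · have : a = (w0, v) := by simpa using h
        rw [this]
        exact hGw0
    · rintro ⟨a1, a2⟩ ha C hCP hac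
      rw [st14_pathArcs_concat hl0last v] at ha
      obtain ⟨ha1C, ha2C⟩ := st14_mem_cycArcs hac
      rcases List.mem_append.1 ha with h | h
      · exact hl0tail a2 (st14_mem_pathArcs h).2 ⟨C, hCP, ha2C⟩
      · have he : a1 = w0 ∧ a2 = v := by simpa using h
        have hCi : C = P.get i := st14_disjoint hP hCP hCmem (he.2 ▸ ha2C) hvC
        have hw0i : w0 ∈ P.get i := hCi ▸ (he.1 ▸ ha1C)
        rcases st14_getLast?_tail_or hl0last with h' | h'
        · exact hl0tail w0 h' ⟨P.get i, hCmem, hw0i⟩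
        · have : hh = w0 := by
            rw [h'] at hl0head
            simpa using hl0head.symm
          have hij : i = j := st14_index_unique hP hw0i (this ▸ hhj)
          rw [hij, hσj] at hσi
          exact Bool.false_ne_true hσi.symm
    · intro z hz
      rw [st14_tail_concat hl0ne, List.dropLast_concat] at hz
      intro C hCP hzC
      exact hl0tail z hz ⟨C, hCP, hzC⟩
  have hPF : PrincipalFrom G P (fun u => u ∈ P.get j) v :=
    ⟨l0 ++ [v], hprinc, ⟨hh, by rw [st14_head?_concat hl0ne]; exact hl0head, hhj⟩,
      List.getLast?_concat⟩
  have hne_cyc : P.get j ≠ P.get i := by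
    intro he
    have : i = j := st14_index_unique hP hvC (he ▸ hvC)
    rw [this, hσj] at hσi
    exact Bool.false_ne_true hσi.symm
  -- key: any principal path ending at v has X t (head) = true
  have key : ∀ l : List (Fin n), IsPrincipal G P l → l.getLast? = some v →
      ∀ hd : Fin n, l.head? = some hd → st14_X G P σ t hd = true := by
    intro l hpp hlast hd hhead
    obtain ⟨hlen2, hdnodup, htnodup, harcs⟩ := hpp.1
    have hlne : l ≠ [] := by
      intro h
      rw [h] at hlen2
      simp at hlen2
    have hD : l.dropLast ≠ [] := st14_dropLast_ne_nil hlen2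
    have hsplit : l.dropLast ++ [l.getLast hlne] = l := List.dropLast_append_getLast hlne
    have hlastv : l.getLast hlne = v := by
      rw [List.getLast?_eq_getLast hlne] at hlast
      exact Option.some_injective _ hlast
    have hzlast? : l.dropLast.getLast? = some (l.dropLast.getLast hD) :=
      List.getLast?_eq_getLast hD
    set z := l.dropLast.getLast hD with hz
    have harcseq : PathArcs l = PathArcs l.dropLast ++ [(z, v)] := by
      conv_lhs => rw [← hsplit]
      rw [st14_pathArcs_concat hzlast?, hlastv]
    have hzarc : (z, v) ∈ PathArcs l := by
      rw [harcseq]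
      simp
    have hGzv : G z v := harcs _ hzarc
    have hzne : z ≠ st14_pred P v := by
      intro he
      exact hpp.2.1 _ hzarc (P.get i) hCmem (he ▸ hspec.2.1)
    have hXz : st14_X G P σ t z = true := hall z hGzv hzne
    have hint : ∀ y ∈ l.dropLast.tail, ¬ ∃ C ∈ P, y ∈ C := by
      intro y hy
      rw [st14_tail_dropLast] at hy
      rintro ⟨C, hC, hyC⟩
      exact hpp.2.2 y hy C hC hyC
    have harcsD : ∀ a ∈ PathArcs l.dropLast, G a.1 a.2 := by
      intro a ha
      apply harcs
      rw [harcseq]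
      exact List.mem_append.2 (Or.inl ha)
    have hheadD : l.dropLast.head? = some hd := by
      rw [st14_head?_dropLast hlen2]
      exact hhead
    exact st14_prop hP l.dropLast harcsD hint hd z hheadD hzlast? hXz
  rcases hSP.2 (P.get i) hCmem v hvC ⟨P.get j, P.get_mem _, hne_cyc, hPF⟩ with hcase | hcase
  · obtain ⟨l, hpp, ⟨hd, hhead, hdCi⟩, hlast⟩ := hcase
    have := key l hpp hlast hd hhead
    rw [IH t (Nat.lt_succ_self t) i hd hσi hdCi] at this
    exact Bool.false_ne_true this
  · obtain ⟨l, hpp, ⟨hd, hhead, hdsrc⟩, hlast⟩ := hcase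
    have := key l hpp hlast hd hhead
    rw [st14_src hP hdsrc] at this
    exact Bool.false_ne_true this


lemma st14_packing_length_le (hP : IsPacking G P) : P.length ≤ n + 1 := by
  have hpw : List.Pairwise (fun l₁ l₂ : List (Fin n) => l₁.head? ≠ l₂.head?) P := by
    apply List.Pairwise.imp_of_mem (R := fun l₁ l₂ => ∀ v ∈ l₁, v ∉ l₂) ?_ hP.2
    intro l₁ l₂ h1 h2 hdisj
    have hne1 : l₁ ≠ [] := (hP.1 _ h1).1
    cases l₁ with
    | nil => exact absurd rfl hne1
    | cons a t =>
      intro he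
      have ha : a ∈ l₂ := by
        cases l₂ with
        | nil => simp at he
        | cons b t' =>
          simp at he
          rw [he]
          simp
      exact hdisj a (by simp) ha
  have hnd : (P.map (fun l => l.head?)).Nodup := by
    exact List.Pairwise.map (fun l : List (Fin n) => l.head?) (fun a b h => h) hpw
  have hle := List.Nodup.length_le_card hnd
  rw [List.length_map] at hle
  rw [Fintype.card_option, Fintype.card_fin] at hle
  exact hle

/-- every digraph `G` is the interaction graph of a monotone Boolean
network with at least `2^{ν*(G)}` fixed points whose components at sources are
constant equal to `0`. -/
theorem stmt14 {n : ℕ} (G : Fin n → Fin n → Prop) :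
    ∃ f : (Fin n → Bool) → Fin n → Bool, Monotone f ∧
      (∀ u v, G u v ↔ Depends f u v) ∧
      2 ^ nuStar G ≤ Set.ncard {x : Fin n → Bool | f x = x} ∧
      ∀ v : Fin n, IsSource G v → ∀ x : Fin n → Bool, f x v = false := by
  have hne : {k | ∃ P : List (List (Fin n)), IsSpecialPacking G P ∧ P.length = k}.Nonempty := by
    refine ⟨0, [], ⟨⟨fun l h => absurd h List.not_mem_nil, List.Pairwise.nil⟩, ?_⟩, rfl⟩
    intro Ci h
    exact absurd h List.not_mem_nil
  have hbdd : BddAbove {k | ∃ P : List (List (Fin n)), IsSpecialPacking G P ∧ P.length = k} := by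
    refine ⟨n + 1, ?_⟩
    rintro k ⟨P, hSP, rfl⟩
    exact st14_packing_length_le hSP.1
  obtain ⟨P, hSP, hlen⟩ := Nat.sSup_mem hne hbdd
  have hP : IsPacking G P := hSP.1
  refine ⟨st14_f G P, st14_f_mono, fun u v => st14_depends hP u v, ?_,
    fun v hv x => st14_f_source hv x⟩
  rw [show nuStar G = P.length from hlen.symm]
  set S := {x : Fin n → Bool | st14_f G P x = x} with hS
  have hdiff : ∀ (σ σ' : Fin P.length → Bool) (i : Fin P.length), σ i = true → σ' i = false →
      st14_X G P σ n ≠ st14_X G P σ' n := by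
    intro σ σ' i h1 h0 he
    obtain ⟨v, hv⟩ := List.exists_mem_of_ne_nil _ (hP.1 _ (P.get_mem i)).1
    have hXv : st14_X G P σ n v = true := by
      apply st14_c_le_X _ v.pos
      rw [st14_c_def]
      exact decide_eq_true ⟨i, h1, hv⟩
    have hXv' : st14_X G P σ' n v = false := st14_main hSP σ' n i v h0 hv
    rw [he, hXv'] at hXv
    exact Bool.false_ne_true hXv
  have hinj : Function.Injective (fun σ : Fin P.length → Bool =>
      (⟨st14_X G P σ n, st14_fixed hP⟩ : S)) := by
    intro σ σ' he
    simp only [Subtype.mk.injEq] at he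
    by_contra hne'
    obtain ⟨i, hi⟩ := Function.ne_iff.1 hne'
    cases h1 : σ i <;> cases h2 : σ' i
    · exact hi (h1.trans h2.symm)
    · exact hdiff σ' σ i h2 h1 he.symm
    · exact hdiff σ σ' i h1 h2 he
    · exact hi (h1.trans h2.symm)
  have hcard := Nat.card_le_card_of_injective _ hinj
  rw [Nat.card_eq_fintype_card] at hcard
  have h2k : Fintype.card (Fin P.length → Bool) = 2 ^ P.length := by
    rw [Fintype.card_fun, Fintype.card_bool, Fintype.card_fin]
  rw [h2k] at hcard
  rw [← Nat.card_coe_set_eq]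
  exact hcard
end Core
end

section
/- Let G be a digraph on vertex set {1,…,n}. If G has k pairwise vertex-disjoint cycles each of length at most ℓ, then there exists a monotone Boolean network f : {0,1}^n → {0,1}^n whose interaction graph is G and which has at least 2^{⌈k/3^ℓ⌉} fixed points. -/
open Classical

namespace S16


variable {n : ℕ}

/-- AND gate: `v` fires iff it has in-neighbours and all of them are in `A`. -/
def andG (G : Fin n → Fin n → Prop) (A : Set (Fin n)) (v : Fin n) : Prop :=
  (∃ u, G u v) ∧ ∀ u, G u v → u ∈ A

/-- OR gate: `v` fires iff some in-neighbour is in `A`. -/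
def orG (G : Fin n → Fin n → Prop) (A : Set (Fin n)) (v : Fin n) : Prop :=
  ∃ u, G u v ∧ u ∈ A

lemma andG_mono {G : Fin n → Fin n → Prop} {A B : Set (Fin n)} (h : A ⊆ B) {v} :
    andG G A v → andG G B v := fun ⟨h1, h2⟩ => ⟨h1, fun u hu => h (h2 u hu)⟩

lemma orG_mono {G : Fin n → Fin n → Prop} {A B : Set (Fin n)} (h : A ⊆ B) {v} :
    orG G A v → orG G B v := fun ⟨u, hu, hA⟩ => ⟨u, hu, h hA⟩

/-- The auxiliary network for a cycle `C`: vertices of `C` get OR gates,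
all other vertices get AND gates; with seed `C`. -/
def opA (G : Fin n → Fin n → Prop) (C : Set (Fin n)) : Set (Fin n) →o Set (Fin n) :=
  ⟨fun A => C ∪ {v | (v ∈ C ∧ orG G A v) ∨ (v ∉ C ∧ andG G A v)}, by
    intro A B h v hv
    rcases hv with hv | hv
    · exact Or.inl hv
    · rcases hv with ⟨h1, h2⟩ | ⟨h1, h2⟩
      · exact Or.inr (Or.inl ⟨h1, orG_mono h h2⟩)
      · exact Or.inr (Or.inr ⟨h1, andG_mono h h2⟩)⟩

/-- `Abar G C` : the forcing closure of the cycle `C` in its auxiliary network. -/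
noncomputable def Abar (G : Fin n → Fin n → Prop) (C : Set (Fin n)) : Set (Fin n) :=
  OrderHom.lfp (opA G C)

lemma Abar_fix (G : Fin n → Fin n → Prop) (C : Set (Fin n)) :
    opA G C (Abar G C) = Abar G C := OrderHom.map_lfp _

lemma subset_Abar (G : Fin n → Fin n → Prop) (C : Set (Fin n)) : C ⊆ Abar G C := by
  rw [← Abar_fix]; exact fun v hv => Or.inl hv

lemma Abar_le {G : Fin n → Fin n → Prop} {C A : Set (Fin n)}
    (h : opA G C A ⊆ A) : Abar G C ⊆ A := OrderHom.lfp_le _ h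

lemma mem_Abar_elim {G : Fin n → Fin n → Prop} {C : Set (Fin n)} {v : Fin n}
    (hv : v ∈ Abar G C) :
    v ∈ C ∨ (v ∈ C ∧ orG G (Abar G C) v) ∨ (v ∉ C ∧ andG G (Abar G C) v) := by
  rw [← Abar_fix] at hv; exact hv

lemma mem_Abar_of_or {G : Fin n → Fin n → Prop} {C : Set (Fin n)} {v : Fin n}
    (hC : v ∈ C) (h : orG G (Abar G C) v) : v ∈ Abar G C := by
  rw [← Abar_fix]; exact Or.inr (Or.inl ⟨hC, h⟩)

lemma mem_Abar_of_and {G : Fin n → Fin n → Prop} {C : Set (Fin n)} {v : Fin n}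
    (hC : v ∉ C) (h : andG G (Abar G C) v) : v ∈ Abar G C := by
  rw [← Abar_fix]; exact Or.inr (Or.inr ⟨hC, h⟩)

/-- A "cycle-like" set: every vertex has an in-neighbour inside the set. -/
def CycLike (G : Fin n → Fin n → Prop) (C : Set (Fin n)) : Prop :=
  ∀ v ∈ C, ∃ u, G u v ∧ u ∈ C

/-- Every vertex of the closure of a cycle-like set has an in-neighbour in the closure. -/
lemma Abar_sus {G : Fin n → Fin n → Prop} {C : Set (Fin n)} (hC : CycLike G C) :
    ∀ v ∈ Abar G C, ∃ u, G u v ∧ u ∈ Abar G C := by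
  intro v hv
  rcases mem_Abar_elim hv with h | ⟨_, u, hu, hA⟩ | ⟨_, ⟨u, hu⟩, hall⟩
  · obtain ⟨u, hu, huC⟩ := hC v h
    exact ⟨u, hu, subset_Abar G C huC⟩
  · exact ⟨u, hu, hA⟩
  · exact ⟨u, hu, hall u hu⟩

/-- The closure of a cycle avoids any other (disjoint) cycle-like set. -/
lemma Abar_avoid {G : Fin n → Fin n → Prop} {C C' : Set (Fin n)}
    (hC' : CycLike G C') (hd : ∀ v ∈ C, v ∉ C') : Abar G C ∩ C' = ∅ := by
  have h : Abar G C ⊆ Abar G C \ C' := by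
    apply Abar_le
    intro v hv
    have hvA : v ∈ Abar G C := by
      rw [← Abar_fix]
      rcases hv with h | h
      · exact Or.inl h
      · rcases h with ⟨h1, h2⟩ | ⟨h1, h2⟩
        · exact Or.inr (Or.inl ⟨h1, orG_mono (fun x hx => hx.1) h2⟩)
        · exact Or.inr (Or.inr ⟨h1, andG_mono (fun x hx => hx.1) h2⟩)
    refine ⟨hvA, ?_⟩
    intro hvC'
    rcases hv with h | ⟨h1, _⟩ | ⟨h1, h2⟩
    · exact hd v h hvC'
    · exact hd v h1 hvC'
    · -- v ∉ C, AND gate, all in-neighbours in (Abar \ C'); but pred of v in C' is in C'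
      obtain ⟨u, hu, huC'⟩ := hC' v hvC'
      exact (h2.2 u hu).2 huC'
  apply Set.eq_empty_iff_forall_notMem.mpr
  intro x hx
  exact (h hx.1).2 hx.2

/-- Closures of two disjoint cycle-like sets are disjoint. -/
lemma Abar_disjoint {G : Fin n → Fin n → Prop} {C C' : Set (Fin n)}
    (hC : CycLike G C) (hC' : CycLike G C')
    (hd : ∀ v ∈ C, v ∉ C') (hd' : ∀ v ∈ C', v ∉ C) :
    Abar G C ∩ Abar G C' = ∅ := by
  have hCC' : Abar G C' ∩ C = ∅ := Abar_avoid hC hd'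
  have hC'C : Abar G C ∩ C' = ∅ := Abar_avoid hC' hd
  have h : Abar G C ⊆ Abar G C \ Abar G C' := by
    apply Abar_le
    intro v hv
    have hvA : v ∈ Abar G C := by
      rw [← Abar_fix]
      rcases hv with h | h
      · exact Or.inl h
      · rcases h with ⟨h1, h2⟩ | ⟨h1, h2⟩
        · exact Or.inr (Or.inl ⟨h1, orG_mono (fun x hx => hx.1) h2⟩)
        · exact Or.inr (Or.inr ⟨h1, andG_mono (fun x hx => hx.1) h2⟩)
    refine ⟨hvA, ?_⟩
    intro hvA'
    rcases hv with h | ⟨h1, _⟩ | ⟨h1, h2⟩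
    · exact Set.eq_empty_iff_forall_notMem.mp hCC' v ⟨hvA', h⟩
    · exact Set.eq_empty_iff_forall_notMem.mp hCC' v ⟨hvA', h1⟩
    · -- v ∉ C, AND gate with all in-nbrs in Abar C \ Abar C' ; v ∈ Abar C'
      rcases mem_Abar_elim hvA' with h' | ⟨h', _⟩ | ⟨_, h2'⟩
      · -- v ∈ C' : pred in C' ⊆ Abar C', but also in Abar C \ Abar C'
        obtain ⟨u, hu, huC'⟩ := hC' v h'
        exact (h2.2 u hu).2 (subset_Abar G C' huC')
      · obtain ⟨u, hu, huC'⟩ := hC' v h'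
        exact (h2.2 u hu).2 (subset_Abar G C' huC')
      · -- v AND in both; in-nbr exists
        obtain ⟨u, hu⟩ := h2.1
        exact (h2.2 u hu).2 (h2'.2 u hu)
  apply Set.eq_empty_iff_forall_notMem.mpr
  intro x hx
  exact (h hx.1).2 hx.2



variable {n : ℕ}

/-- Backward-walk lemma: from any start vertex `z` we can find a "moat" `M` containing
`z`, in which every non-source vertex has an in-neighbour, and which avoids all the
sets `Ab j` with at most one exception. -/
lemma walk_exists {k : ℕ} (G : Fin n → Fin n → Prop) (Ab : Fin k → Set (Fin n))
    (hsus : ∀ i, ∀ v ∈ Ab i, ∃ u, G u v ∧ u ∈ Ab i)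
    (hAd : ∀ i j, i ≠ j → Ab i ∩ Ab j = ∅) :
    ∀ (t : ℕ) (acc : Finset (Fin n)) (z : Fin n), z ∉ acc →
      (∀ j, ∀ w ∈ acc, w ∉ Ab j) →
      (∀ w ∈ acc, ∃ u, G u w ∧ (u ∈ acc ∨ u = z)) →
      n ≤ t + acc.card →
      ∃ M : Set (Fin n), (↑acc ∪ {z} : Set (Fin n)) ⊆ M ∧
        (∀ w ∈ M, (∃ u, G u w) → ∃ u, G u w ∧ u ∈ M) ∧
        ∃ co : Option (Fin k), ∀ j : Fin k, some j ≠ co → M ∩ Ab j = ∅ := by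
  intro t
  induction t with
  | zero =>
    intro acc z hz _ _ hcard
    exfalso
    have : acc = Finset.univ := by
      apply Finset.eq_univ_of_card
      have := Finset.card_le_univ acc
      simp only [Fintype.card_fin] at this ⊢
      omega
    exact hz (this ▸ Finset.mem_univ z)
  | succ t ih =>
    intro acc z hz hacc hsusacc hcard
    by_cases hA : ∃ i, z ∈ Ab i
    · obtain ⟨i, hi⟩ := hA
      refine ⟨↑acc ∪ {z} ∪ Ab i, by intro x hx; exact Or.inl hx, ?_, some i, ?_⟩
      · intro w hw _
        rcases hw with (hw | hw) | hw
        · obtain ⟨u, hu, h⟩ := hsusacc w hw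
          refine ⟨u, hu, ?_⟩
          rcases h with h | h
          · exact Or.inl (Or.inl h)
          · exact Or.inl (Or.inr (h ▸ rfl))
        · have : w = z := hw
          subst this
          obtain ⟨u, hu, h⟩ := hsus i w hi
          exact ⟨u, hu, Or.inr h⟩
        · obtain ⟨u, hu, h⟩ := hsus i w hw
          exact ⟨u, hu, Or.inr h⟩
      · intro j hj
        apply Set.eq_empty_iff_forall_notMem.mpr
        intro x ⟨hx, hxj⟩
        rcases hx with (hx | hx) | hx
        · exact hacc j x hx hxj
        · have : x = z := hx
          subst this
          have hij : i ≠ j := fun h => hj (by rw [h])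
          exact Set.eq_empty_iff_forall_notMem.mp (hAd i j hij) x ⟨hi, hxj⟩
        · have hij : i ≠ j := fun h => hj (by rw [h])
          exact Set.eq_empty_iff_forall_notMem.mp (hAd i j hij) x ⟨hx, hxj⟩
    · by_cases hsrc : ∃ u, G u z
      · obtain ⟨u, hu⟩ := hsrc
        by_cases huacc : u ∈ acc ∨ u = z
        · refine ⟨↑acc ∪ {z}, le_refl _, ?_, none, ?_⟩
          · intro w hw _
            rcases hw with hw | hw
            · obtain ⟨u', hu', h⟩ := hsusacc w hw
              refine ⟨u', hu', ?_⟩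
              rcases h with h | h
              · exact Or.inl h
              · exact Or.inr (h ▸ rfl)
            · have : w = z := hw
              subst this
              refine ⟨u, hu, ?_⟩
              rcases huacc with h | h
              · exact Or.inl h
              · exact Or.inr (h ▸ rfl)
          · intro j _
            apply Set.eq_empty_iff_forall_notMem.mpr
            intro x ⟨hx, hxj⟩
            rcases hx with hx | hx
            · exact hacc j x hx hxj
            · have : x = z := hx
              subst this
              exact hA ⟨j, hxj⟩
        · push_neg at huacc
          obtain ⟨hu1, hu2⟩ := huacc
          have hz' : u ∉ insert z acc := by
            simp only [Finset.mem_insert]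
            push_neg
            exact ⟨hu2, hu1⟩
          obtain ⟨M, hM1, hM2, hM3⟩ := ih (insert z acc) u hz'
            (by
              intro j w hw
              rcases Finset.mem_insert.mp hw with h | h
              · subst h; exact fun hh => hA ⟨j, hh⟩
              · exact hacc j w h)
            (by
              intro w hw
              rcases Finset.mem_insert.mp hw with h | h
              · subst h; exact ⟨u, hu, Or.inr rfl⟩
              · obtain ⟨u', hu', h'⟩ := hsusacc w h
                refine ⟨u', hu', ?_⟩
                rcases h' with h' | h'
                · exact Or.inl (Finset.mem_insert_of_mem h')
                · exact Or.inl (h' ▸ Finset.mem_insert_self z acc))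
            (by
              rw [Finset.card_insert_of_notMem hz]
              omega)
          refine ⟨M, ?_, hM2, hM3⟩
          intro x hx
          apply hM1
          rcases hx with hx | hx
          · exact Or.inl (by simpa using Or.inr (Finset.mem_coe.mp hx))
          · have : x = z := hx
            subst this
            exact Or.inl (by simp)
      · -- z is a source
        refine ⟨↑acc ∪ {z}, le_refl _, ?_, none, ?_⟩
        · intro w hw hw2
          rcases hw with hw | hw
          · obtain ⟨u', hu', h⟩ := hsusacc w hw
            refine ⟨u', hu', ?_⟩
            rcases h with h | h
            · exact Or.inl h
            · exact Or.inr (h ▸ rfl)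
          · have : w = z := hw
            subst this
            exact absurd hw2 hsrc
        · intro j _
          apply Set.eq_empty_iff_forall_notMem.mpr
          intro x ⟨hx, hxj⟩
          rcases hx with hx | hx
          · exact hacc j x hx hxj
          · have : x = z := hx
            subst this
            exact hA ⟨j, hxj⟩



open Classical in
/-- Independent-set lemma: if each vertex "owns" at most `c` conflict edges, then
there is an independent set covering a `1/(2c+1)` fraction. -/
lemma indep_exists {ι : Type*} [DecidableEq ι] (c : ℕ) (Γ : ι → Finset ι) 
    (hΓ : ∀ i, (Γ i).card ≤ c) :
    ∀ (N : ℕ) (T : Finset ι), T.card ≤ N →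
    ∃ S : Finset ι, S ⊆ T ∧ T.card ≤ (2*c+1) * S.card ∧
      ∀ p ∈ S, ∀ q ∈ S, p ≠ q → p ∉ Γ q := by
  intro N
  induction N with
  | zero =>
    intro T hT
    have : T = ∅ := Finset.card_eq_zero.mp (Nat.le_zero.mp hT)
    subst this
    exact ⟨∅, le_refl _, by simp, by simp⟩
  | succ N ih =>
    intro T hT
    rcases Finset.eq_empty_or_nonempty T with rfl | hTne
    · exact ⟨∅, le_refl _, by simp, by simp⟩
    -- find a vertex of conflict-degree ≤ 2c in T
    have key : ∃ i₀ ∈ T, ((Γ i₀ ∩ T) ∪ (T.filter (fun j => i₀ ∈ Γ j))).card ≤ 2*c := by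
      by_contra hcon
      push_neg at hcon
      have hsum : ∀ i ∈ T, 2*c+1 ≤ ((Γ i ∩ T) ∪ (T.filter (fun j => i ∈ Γ j))).card :=
        fun i hi => hcon i hi
      have h1 : ∑ i ∈ T, ((Γ i ∩ T) ∪ (T.filter (fun j => i ∈ Γ j))).card
          ≤ ∑ i ∈ T, ((Γ i ∩ T).card + (T.filter (fun j => i ∈ Γ j)).card) := by
        apply Finset.sum_le_sum
        intro i _
        exact Finset.card_union_le _ _
      have h2 : ∑ i ∈ T, (T.filter (fun j => i ∈ Γ j)).card
          = ∑ j ∈ T, (T.filter (fun i => i ∈ Γ j)).card := by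
        have e1 : ∀ i ∈ T, (T.filter (fun j => i ∈ Γ j)).card
            = ∑ j ∈ T, if i ∈ Γ j then 1 else 0 := by
          intro i _; exact Finset.card_filter _ _
        have e2 : ∀ j ∈ T, (T.filter (fun i => i ∈ Γ j)).card
            = ∑ i ∈ T, if i ∈ Γ j then 1 else 0 := by
          intro j _; exact Finset.card_filter _ _
        rw [Finset.sum_congr rfl e1, Finset.sum_congr rfl e2, Finset.sum_comm]
      have h3 : ∀ j ∈ T, (T.filter (fun i => i ∈ Γ j)).card ≤ c := by
        intro j _
        calc (T.filter (fun i => i ∈ Γ j)).card ≤ (Γ j).card := by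
              apply Finset.card_le_card
              intro x hx
              exact (Finset.mem_filter.mp hx).2
          _ ≤ c := hΓ j
      have h4 : ∀ i ∈ T, (Γ i ∩ T).card ≤ c := by
        intro i _
        calc (Γ i ∩ T).card ≤ (Γ i).card := Finset.card_le_card (Finset.inter_subset_left)
          _ ≤ c := hΓ i
      have hub : ∑ i ∈ T, ((Γ i ∩ T) ∪ (T.filter (fun j => i ∈ Γ j))).card
          ≤ 2*c*T.card := by
        calc ∑ i ∈ T, ((Γ i ∩ T) ∪ (T.filter (fun j => i ∈ Γ j))).card
            ≤ ∑ i ∈ T, ((Γ i ∩ T).card + (T.filter (fun j => i ∈ Γ j)).card) := h1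
          _ = ∑ i ∈ T, (Γ i ∩ T).card + ∑ i ∈ T, (T.filter (fun j => i ∈ Γ j)).card := by
              rw [Finset.sum_add_distrib]
          _ = ∑ i ∈ T, (Γ i ∩ T).card + ∑ j ∈ T, (T.filter (fun i => i ∈ Γ j)).card := by
              rw [h2]
          _ ≤ c * T.card + c * T.card := by
              apply Nat.add_le_add
              · calc ∑ i ∈ T, (Γ i ∩ T).card ≤ ∑ _i ∈ T, c := Finset.sum_le_sum h4
                  _ = c * T.card := by rw [Finset.sum_const, smul_eq_mul, mul_comm]
              · calc ∑ j ∈ T, (T.filter (fun i => i ∈ Γ j)).card ≤ ∑ _j ∈ T, c :=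
                    Finset.sum_le_sum h3
                  _ = c * T.card := by rw [Finset.sum_const, smul_eq_mul, mul_comm]
          _ = 2*c*T.card := by ring
      have hlb : (2*c+1) * T.card ≤ ∑ i ∈ T, ((Γ i ∩ T) ∪ (T.filter (fun j => i ∈ Γ j))).card := by
        calc (2*c+1) * T.card = ∑ _i ∈ T, (2*c+1) := by
              rw [Finset.sum_const, smul_eq_mul, mul_comm]
          _ ≤ _ := Finset.sum_le_sum hsum
      have : (2*c+1) * T.card ≤ 2*c*T.card := le_trans hlb hub
      have hpos : 0 < T.card := Finset.card_pos.mpr hTne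
      nlinarith
    obtain ⟨i₀, hi₀T, hdeg⟩ := key
    set U := (Γ i₀ ∩ T) ∪ (T.filter (fun j => i₀ ∈ Γ j)) with hU
    set T' := T \ (insert i₀ U) with hT'
    have hT'card : T'.card ≤ N := by
      have h1 : T'.card < T.card := by
        apply Finset.card_lt_card
        constructor
        · exact Finset.sdiff_subset
        · intro hsub
          have : i₀ ∈ T' := hsub hi₀T
          simp [hT'] at this
      omega
    obtain ⟨S', hS'1, hS'2, hS'3⟩ := ih T' hT'card
    have hi₀S' : i₀ ∉ S' := by
      intro h
      have := hS'1 h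
      simp [hT'] at this
    refine ⟨insert i₀ S', ?_, ?_, ?_⟩
    · intro x hx
      rcases Finset.mem_insert.mp hx with h | h
      · subst h; exact hi₀T
      · exact Finset.sdiff_subset (hS'1 h)
    · have hcard1 : T.card ≤ T'.card + (insert i₀ U).card :=
        Finset.card_le_card_sdiff_add_card
      have hcard2 : (insert i₀ U).card ≤ 2*c+1 := by
        calc (insert i₀ U).card ≤ U.card + 1 := Finset.card_insert_le _ _
          _ ≤ 2*c+1 := by omega
      rw [Finset.card_insert_of_notMem hi₀S']
      calc T.card ≤ T'.card + (insert i₀ U).card := hcard1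
        _ ≤ (2*c+1) * S'.card + (2*c+1) := by
            apply Nat.add_le_add hS'2 hcard2
        _ = (2*c+1) * (S'.card + 1) := by ring
    · intro p hp q hq hpq
      rcases Finset.mem_insert.mp hp with hp' | hp' <;>
        rcases Finset.mem_insert.mp hq with hq' | hq'
      · exact absurd (hp'.trans hq'.symm) hpq
      · -- p = i₀, q ∈ S' : i₀ ∉ Γ q
        subst hp'
        intro hmem
        have hqT' := hS'1 hq'
        have hqT : q ∈ T := Finset.sdiff_subset hqT'
        have : q ∈ U := Finset.mem_union_right _ (Finset.mem_filter.mpr ⟨hqT, hmem⟩)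
        simp [hT'] at hqT'
        exact hqT'.2.2 this
      · -- q = i₀, p ∈ S' : p ∉ Γ i₀
        subst hq'
        intro hmem
        have hpT' := hS'1 hp'
        have hpT : p ∈ T := Finset.sdiff_subset hpT'
        have : p ∈ U := Finset.mem_union_left _ (Finset.mem_inter.mpr ⟨hmem, hpT⟩)
        simp [hT'] at hpT'
        exact hpT'.2.2 this
      · exact hS'3 p hp' q hq' hpq



variable {α : Type*}

lemma mem_zip_tail (L : List α) (i : ℕ) (hi : i + 1 < L.length) :
    ((L[i]'(by omega), L[i+1]'hi) : α × α) ∈ L.zip L.tail := by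
  have hlen : (L.zip L.tail).length = L.length - 1 := by
    simp [List.length_zip]
  have hi' : i < (L.zip L.tail).length := by omega
  have : (L.zip L.tail)[i]'hi' = (L[i]'(by omega), L.tail[i]'(by simp; omega)) :=
    List.getElem_zip
  rw [List.getElem_tail] at this
  rw [← this]
  exact List.getElem_mem hi'

lemma cyc_arc (l : List α) (i : ℕ) (h : i + 1 ≤ l.length) :
    ((l[i]'(by omega), l[(i+1) % l.length]'(Nat.mod_lt _ (by omega))) : α × α)
      ∈ CycArcs l := by
  have hlpos : 0 < l.length := by omega
  have htake : l.take 1 = [l[0]'hlpos] := by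
    cases l with
    | nil => simp at hlpos
    | cons a t => simp
  have hLlen : (l ++ l.take 1).length = l.length + 1 := by
    rw [List.length_append, htake]; simp
  have h1 := mem_zip_tail (l ++ l.take 1) i (by omega)
  have e1 : (l ++ l.take 1)[i]'(by omega) = l[i]'(by omega) :=
    List.getElem_append_left (by omega)
  rcases Nat.lt_or_ge (i+1) l.length with hlt | hge
  · have emod : (i+1) % l.length = i + 1 := Nat.mod_eq_of_lt hlt
    have e2 : (l ++ l.take 1)[i+1]'(by omega) = l[(i+1) % l.length]'(Nat.mod_lt _ (by omega)) := by
      rw [List.getElem_append_left hlt]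
      congr 1
      omega
    rw [e1, e2] at h1
    exact h1
  · have heq : i + 1 = l.length := by omega
    have emod : (i+1) % l.length = 0 := by rw [heq]; exact Nat.mod_self _
    have e2 : (l ++ l.take 1)[i+1]'(by omega) = l[(i+1) % l.length]'(Nat.mod_lt _ (by omega)) := by
      rw [List.getElem_append_right (by omega)]
      have : (l.take 1)[i + 1 - l.length]'(by rw [htake]; simp; omega)
          = (l.take 1)[0]'(by rw [htake]; simp) := by
        congr 1
        omega
      rw [this]
      have e3 : (l.take 1)[0]'(by rw [htake]; simp) = l[0]'hlpos := by
        simp [htake]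
      rw [e3]
      congr 1
      omega
    rw [e1, e2] at h1
    exact h1

/-- every vertex of a nonempty list has a "cyclic predecessor". -/
lemma cyc_pred_exists (l : List α) (hl : l ≠ []) (v : α) (hv : v ∈ l) :
    ∃ u ∈ l, (u, v) ∈ CycArcs l := by
  obtain ⟨j, hj, rfl⟩ := List.mem_iff_getElem.mp hv
  have hlpos : 0 < l.length := List.length_pos_iff.mpr hl
  rcases Nat.eq_zero_or_pos j with rfl | hjpos
  · refine ⟨l[l.length - 1]'(by omega), List.getElem_mem _, ?_⟩
    have h1 := cyc_arc l (l.length - 1) (by omega)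
    have e : (l.length - 1 + 1) % l.length = 0 := by
      have : l.length - 1 + 1 = l.length := by omega
      rw [this]; exact Nat.mod_self _
    have e2 : l[(l.length - 1 + 1) % l.length]'(Nat.mod_lt _ (by omega)) = l[0]'hlpos := by
      congr 1
    rw [e2] at h1
    exact h1
  · refine ⟨l[j-1]'(by omega), List.getElem_mem _, ?_⟩
    have h1 := cyc_arc l (j-1) (by omega)
    have e : (j - 1 + 1) % l.length = j := by
      have : j - 1 + 1 = j := by omega
      rw [this]; exact Nat.mod_eq_of_lt hj
    have e2 : l[(j - 1 + 1) % l.length]'(Nat.mod_lt _ (by omega)) = l[j]'hj := by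
      congr 1
    rw [e2] at h1
    exact h1



/-- gate of the chosen-cycle ("bit") vertices: predecessor OR (conjunction of all
other in-neighbours). -/
def bitG (G : Fin n → Fin n → Prop) (pr : Fin n → Fin n) (A : Set (Fin n)) (v : Fin n) : Prop :=
  pr v ∈ A ∨ ((∃ u, G u v ∧ u ≠ pr v) ∧ ∀ u, G u v → u ≠ pr v → u ∈ A)

/-- the main network, as a set operator. -/
def opF (G : Fin n → Fin n → Prop) (bit : Fin n → Prop) (pr : Fin n → Fin n) :
    Set (Fin n) →o Set (Fin n) :=
  ⟨fun A => {v | (bit v ∧ bitG G pr A v) ∨ (¬ bit v ∧ andG G A v)}, by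
    intro A B h v hv
    rcases hv with ⟨h1, h2⟩ | ⟨h1, h2⟩
    · refine Or.inl ⟨h1, ?_⟩
      rcases h2 with h2 | ⟨h3, h4⟩
      · exact Or.inl (h h2)
      · exact Or.inr ⟨h3, fun u hu hu' => h (h4 u hu hu')⟩
    · exact Or.inr ⟨h1, h2.1, fun u hu => h (h2.2 u hu)⟩⟩

open Classical in
/-- the main network, as a Boolean network. -/
noncomputable def fB (G : Fin n → Fin n → Prop) (bit : Fin n → Prop) (pr : Fin n → Fin n)
    (x : Fin n → Bool) (v : Fin n) : Bool :=
  if v ∈ opF G bit pr {w | x w = true} then true else false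

lemma fB_eq_true {G : Fin n → Fin n → Prop} {bit : Fin n → Prop} {pr : Fin n → Fin n}
    {x : Fin n → Bool} {v : Fin n} :
    fB G bit pr x v = true ↔ v ∈ opF G bit pr {w | x w = true} := by
  simp [fB]

lemma fB_mono (G : Fin n → Fin n → Prop) (bit : Fin n → Prop) (pr : Fin n → Fin n) :
    Monotone (fB G bit pr) := by
  intro x y hxy v
  by_cases h : fB G bit pr x v = true
  · have hsub : {w | x w = true} ⊆ {w | y w = true} := by
      intro w hw
      have := hxy w
      simp only [Set.mem_setOf_eq] at hw ⊢
      rw [hw] at this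
      exact Bool.eq_true_of_true_le this  -- true ≤ y w → y w = true
    have := (opF G bit pr).monotone hsub (fB_eq_true.mp h)
    have : fB G bit pr y v = true := fB_eq_true.mpr this
    simp [h, this]
  · simp only [Bool.not_eq_true] at h
    rw [h]
    exact Bool.false_le _

/-- `fB` does not depend on non-in-neighbours. -/
lemma fB_not_depends {G : Fin n → Fin n → Prop} {bit : Fin n → Prop} {pr : Fin n → Fin n}
    (hpr : ∀ v, bit v → G (pr v) v) {u v : Fin n} (hGuv : ¬ G u v) :
    ¬ Depends (fB G bit pr) u v := by
  rintro ⟨x, y, hagree, hne⟩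
  apply hne
  have key : ∀ (A B : Set (Fin n)), (∀ w, w ≠ u → (w ∈ A ↔ w ∈ B)) →
      (v ∈ opF G bit pr A ↔ v ∈ opF G bit pr B) := by
    intro A B hAB
    have hgate : ∀ w, G w v → (w ∈ A ↔ w ∈ B) := by
      intro w hw
      apply hAB
      intro heq
      exact hGuv (heq ▸ hw)
    constructor <;> intro hv <;> rcases hv with ⟨h1, h2⟩ | ⟨h1, h2⟩
    · refine Or.inl ⟨h1, ?_⟩
      rcases h2 with h2 | ⟨h3, h4⟩
      · exact Or.inl ((hgate _ (hpr v h1)).mp h2)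
      · exact Or.inr ⟨h3, fun w hw hw' => (hgate w hw).mp (h4 w hw hw')⟩
    · exact Or.inr ⟨h1, h2.1, fun w hw => (hgate w hw).mp (h2.2 w hw)⟩
    · refine Or.inl ⟨h1, ?_⟩
      rcases h2 with h2 | ⟨h3, h4⟩
      · exact Or.inl ((hgate _ (hpr v h1)).mpr h2)
      · exact Or.inr ⟨h3, fun w hw hw' => (hgate w hw).mpr (h4 w hw hw')⟩
    · exact Or.inr ⟨h1, h2.1, fun w hw => (hgate w hw).mpr (h2.2 w hw)⟩
  have := key {w | x w = true} {w | y w = true}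
    (by intro w hw; simp only [Set.mem_setOf_eq]; rw [hagree w hw])
  by_cases hx : fB G bit pr x v = true
  · have : fB G bit pr y v = true := fB_eq_true.mpr (this.mp (fB_eq_true.mp hx))
    rw [hx, this]
  · have hy : ¬ fB G bit pr y v = true := fun hy => hx (fB_eq_true.mpr (this.mpr (fB_eq_true.mp hy)))
    simp only [Bool.not_eq_true] at hx hy
    rw [hx, hy]

open Classical in
/-- `fB` depends on every in-neighbour. -/
lemma fB_depends {G : Fin n → Fin n → Prop} {bit : Fin n → Prop} {pr : Fin n → Fin n}
    (hpr : ∀ v, bit v → G (pr v) v) {u v : Fin n} (hGuv : G u v) :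
    Depends (fB G bit pr) u v := by
  by_cases hb : bit v
  · by_cases hu : u = pr v
    · -- u is the predecessor: all-false vs u true
      subst hu
      refine ⟨fun _ => false, fun w => if w = pr v then true else false, ?_, ?_⟩
      · intro w hw; simp [hw]
      · have h1 : fB G bit pr (fun _ => false) v = false := by
          simp only [fB]
          rw [if_neg]
          rintro (⟨_, h2⟩ | ⟨h1, _⟩)
          · rcases h2 with h2 | ⟨⟨z, hz1, hz2⟩, h4⟩
            · simp at h2
            · have := h4 z hz1 hz2; simp at this
          · exact h1 hb
        have h2 : fB G bit pr (fun w => if w = pr v then true else false) v = true := by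
          apply fB_eq_true.mpr
          exact Or.inl ⟨hb, Or.inl (by simp)⟩
        rw [h1, h2]; simp
    · -- u ∈ ext
      refine ⟨fun w => if (w ≠ u ∧ w ≠ pr v) then true else false,
              fun w => if w ≠ pr v then true else false, ?_, ?_⟩
      · intro w hw
        by_cases h2 : w = pr v <;> simp [h2, hw]
      · have h1 : fB G bit pr (fun w => if (w ≠ u ∧ w ≠ pr v) then true else false) v = false := by
          simp only [fB]
          rw [if_neg]
          rintro (⟨_, h2⟩ | ⟨h1, _⟩)
          · rcases h2 with h2 | ⟨_, h4⟩
            · simp at h2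
            · have := h4 u hGuv hu
              simp at this
          · exact h1 hb
        have h2 : fB G bit pr (fun w => if w ≠ pr v then true else false) v = true := by
          apply fB_eq_true.mpr
          refine Or.inl ⟨hb, Or.inr ⟨⟨u, hGuv, hu⟩, ?_⟩⟩
          intro w hw hw'
          simp [hw']
        rw [h1, h2]; simp
  · -- AND gate
    refine ⟨fun w => if w ≠ u then true else false, fun _ => true, ?_, ?_⟩
    · intro w hw; simp [hw]
    · have h1 : fB G bit pr (fun w => if w ≠ u then true else false) v = false := by
        simp only [fB]
        rw [if_neg]
        rintro (⟨h1, _⟩ | ⟨_, _, h2⟩)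
        · exact hb h1
        · have := h2 u hGuv
          simp at this
      have h2 : fB G bit pr (fun _ => true) v = true := by
        apply fB_eq_true.mpr
        exact Or.inr ⟨hb, ⟨u, hGuv⟩, fun w hw => by simp⟩
      rw [h1, h2]; simp


lemma two_mul_add_one_le : ∀ l : ℕ, 1 ≤ l → 2*l+1 ≤ 3^l := by
  intro l h
  induction l with
  | zero => omega
  | succ m ih =>
    rcases Nat.eq_zero_or_pos m with rfl | hm
    · norm_num
    · have h1 := ih hm
      have h2 : 1 ≤ 3^m := Nat.one_le_pow _ _ (by norm_num)
      rw [pow_succ]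
      omega

end S16

/-- if `G` has `k` pairwise vertex-disjoint cycles, each of length at
most `ℓ`, then `G` is the interaction graph of a monotone Boolean network with at
least `2^{⌈k/3^ℓ⌉}` fixed points. -/
theorem stmt16 {n : ℕ} (G : Fin n → Fin n → Prop) (k ℓ : ℕ)
    (P : List (List (Fin n))) (hP : IsPacking G P) (hk : P.length = k)
    (hshort : ∀ C ∈ P, C.length ≤ ℓ) :
    ∃ f : (Fin n → Bool) → Fin n → Bool, Monotone f ∧
      (∀ u v, G u v ↔ Depends f u v) ∧
      2 ^ ⌈(k : ℚ) / 3 ^ ℓ⌉₊ ≤ Set.ncard {x : Fin n → Bool | f x = x} := by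
  subst hk
  -- cycles as sets
  set K := P.length with hK
  set Cyc : Fin K → Set (Fin n) := fun i => {v | v ∈ P.get i} with hCyc
  have hcycle : ∀ i : Fin K, IsCycle G (P.get i) := fun i => hP.1 _ (List.get_mem P i)
  have hne : ∀ i, (Cyc i).Nonempty := by
    intro i
    have h := (hcycle i).1
    rcases List.exists_mem_of_ne_nil _ h with ⟨v, hv⟩
    exact ⟨v, hv⟩
  have hdisj : ∀ i j : Fin K, i ≠ j → ∀ v, v ∈ Cyc i → v ∉ Cyc j := by
    intro i j hij v hvi hvj
    have hpw := List.pairwise_iff_getElem.mp hP.2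
    rcases Nat.lt_or_ge i.1 j.1 with h | h
    · have := hpw i.1 j.1 i.2 j.2 h
      exact this v (by simpa [hCyc, List.get_eq_getElem] using hvi) (by simpa [hCyc, List.get_eq_getElem] using hvj)
    · have hji : j.1 < i.1 := by
        rcases Nat.lt_or_ge j.1 i.1 with h' | h'
        · exact h'
        · exact absurd (Fin.ext (le_antisymm h' h)) hij
      have := hpw j.1 i.1 j.2 i.2 hji
      exact this v (by simpa [hCyc, List.get_eq_getElem] using hvj) (by simpa [hCyc, List.get_eq_getElem] using hvi)
  have hCL : ∀ i, S16.CycLike G (Cyc i) := by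
    intro i v hv
    obtain ⟨u, hu, harc⟩ := S16.cyc_pred_exists (P.get i) (hcycle i).1 v hv
    exact ⟨u, (hcycle i).2.2 _ harc, hu⟩
  -- the closures of the cycles in their auxiliary networks
  set Ab : Fin K → Set (Fin n) := fun i => S16.Abar G (Cyc i) with hAb
  have hCsubA : ∀ i, Cyc i ⊆ Ab i := fun i => S16.subset_Abar G (Cyc i)
  have hsusA : ∀ i, ∀ v ∈ Ab i, ∃ u, G u v ∧ u ∈ Ab i := fun i => S16.Abar_sus (hCL i)
  have hAd : ∀ i j : Fin K, i ≠ j → Ab i ∩ Ab j = ∅ := by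
    intro i j hij
    exact S16.Abar_disjoint (hCL i) (hCL j) (hdisj i j hij) (hdisj j i hij.symm)
  have havoid : ∀ i j : Fin K, i ≠ j → Ab i ∩ Cyc j = ∅ := by
    intro i j hij
    exact S16.Abar_avoid (hCL j) (hdisj i j hij)
  -- the predecessor function
  have hprex : ∀ v : Fin n, (∃ i, v ∈ Cyc i) →
      ∃ u, G u v ∧ ∀ i, v ∈ Cyc i → u ∈ Cyc i := by
    rintro v ⟨i0, hi0⟩
    obtain ⟨u, hu, huC⟩ := hCL i0 v hi0
    refine ⟨u, hu, ?_⟩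
    intro i hi
    have : i = i0 := by
      by_contra hne'
      exact hdisj i i0 hne' v hi hi0
    exact this ▸ huC
  set pr : Fin n → Fin n := fun v =>
    if h : ∃ u, G u v ∧ ∀ i, v ∈ Cyc i → u ∈ Cyc i then h.choose else v with hprdef
  have hpr1 : ∀ (v : Fin n) (i : Fin K), v ∈ Cyc i → G (pr v) v ∧ pr v ∈ Cyc i := by
    intro v i hv
    have h := hprex v ⟨i, hv⟩
    rw [hprdef]
    simp only [dif_pos h]
    exact ⟨h.choose_spec.1, h.choose_spec.2 i hv⟩
  -- moats (walks) for every cycle vertex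
  have hMex : ∀ (i : Fin K) (v : Fin n), ∃ (M : Set (Fin n)) (co : Option (Fin K)),
      (v ∈ Cyc i → (∃ u, G u v ∧ u ≠ pr v) → ∃ z, (G z v ∧ z ≠ pr v) ∧ z ∈ M) ∧
      (∀ w ∈ M, (∃ u, G u w) → ∃ u, G u w ∧ u ∈ M) ∧
      (∀ j : Fin K, some j ≠ co → M ∩ Ab j = ∅) := by
    intro i v
    by_cases h : v ∈ Cyc i ∧ ∃ u, G u v ∧ u ≠ pr v
    · obtain ⟨hv, u0, hu0⟩ := h
      obtain ⟨M, hM1, hM2, co, hM3⟩ := S16.walk_exists G Ab hsusA hAd n ∅ u0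
        (by simp) (by simp) (by simp) (by simp)
      exact ⟨M, co, fun _ _ => ⟨u0, hu0, hM1 (Or.inr rfl)⟩, hM2, hM3⟩
    · refine ⟨∅, none, fun hv hu => absurd ⟨hv, hu⟩ h, by simp, fun j _ => by simp⟩
  choose M co hz hsusM hdisjM using hMex
  -- conflict sets
  set Γ : Fin K → Finset (Fin K) := fun i =>
    (P.get i).toFinset.biUnion (fun v => (co i v).toFinset) with hΓ
  have hΓcard : ∀ i, (Γ i).card ≤ ℓ := by
    intro i
    calc (Γ i).card ≤ ∑ v ∈ (P.get i).toFinset, ((co i v).toFinset).card :=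
          Finset.card_biUnion_le
      _ ≤ ∑ _v ∈ (P.get i).toFinset, 1 := by
          apply Finset.sum_le_sum
          intro v _
          cases co i v <;> simp
      _ = (P.get i).toFinset.card := by simp
      _ ≤ (P.get i).length := (P.get i).toFinset_card_le
      _ ≤ ℓ := hshort _ (List.get_mem P i)
  have hΓmem : ∀ (i : Fin K) (v : Fin n) (j : Fin K),
      v ∈ Cyc i → co i v = some j → j ∈ Γ i := by
    intro i v j hv hco
    rw [hΓ]
    apply Finset.mem_biUnion.mpr
    exact ⟨v, List.mem_toFinset.mpr hv, by simp [hco]⟩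
  -- independent set of cycles
  obtain ⟨S, _hST, hScard, hSind⟩ := S16.indep_exists ℓ Γ hΓcard K Finset.univ
    (by simp)
  -- derived independence facts
  have hMA : ∀ p ∈ S, ∀ q ∈ S, p ≠ q → ∀ v ∈ Cyc q, M q v ∩ Ab p = ∅ := by
    intro p hp q hq hpq v hv
    apply hdisjM q v p
    intro hco
    have : p ∈ Γ q := hΓmem q v p hv (by rw [← hco])
    exact hSind p hp q hq hpq this
  -- the bit vertices, moats and masks
  set bit : Fin n → Prop := fun v => ∃ p ∈ S, v ∈ Cyc p with hbit
  set MU : Fin K → Set (Fin n) := fun q => ⋃ v ∈ Cyc q, M q v with hMU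
  set Hq : Fin K → Set (Fin n) := fun q => Cyc q ∪ MU q with hHq
  have hMUA : ∀ p ∈ S, ∀ q ∈ S, p ≠ q → ∀ x, x ∈ MU q → x ∉ Ab p := by
    intro p hp q hq hpq x hx hxA
    rw [hMU] at hx
    simp only [Set.mem_iUnion] at hx
    obtain ⟨v, hv, hxM⟩ := hx
    exact Set.eq_empty_iff_forall_notMem.mp (hMA p hp q hq hpq v hv) x ⟨hxM, hxA⟩
  have hprG : ∀ v, bit v → G (pr v) v := by
    rintro v ⟨p, hp, hv⟩
    exact (hpr1 v p hv).1
  -- the network and its closure operators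
  set op : Set (Fin n) →o Set (Fin n) := S16.opF G bit pr with hop
  set cl : Set (Fin n) → Set (Fin n) := fun s =>
    OrderHom.lfp ⟨fun A => s ∪ op A, fun A B hAB => Set.union_subset_union_right s (op.2 hAB)⟩
    with hcl
  have hclfix : ∀ s, s ∪ op (cl s) = cl s := by
    intro s
    exact OrderHom.map_lfp (⟨fun A => s ∪ op A, fun A B hAB => Set.union_subset_union_right s (op.2 hAB)⟩ : Set (Fin n) →o Set (Fin n))
  have hclle : ∀ s A, s ∪ op A ⊆ A → cl s ⊆ A := by
    intro s A h
    exact OrderHom.lfp_le _ h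
  have hscl : ∀ s, s ⊆ cl s := by
    intro s
    conv_rhs => rw [← hclfix s]
    exact Set.subset_union_left
  have hopcl : ∀ s, op (cl s) ⊆ cl s := by
    intro s
    conv_rhs => rw [← hclfix s]
    exact Set.subset_union_right
  -- seeds
  set seed : Finset (Fin K) → Set (Fin n) := fun T => ⋃ p ∈ T, Cyc p with hseed
  set uu : Finset (Fin K) → Set (Fin n) := fun T => cl (seed T) with huu
  -- seeds refire
  have hseedfire : ∀ (T : Finset (Fin K)), T ⊆ S → ∀ A, seed T ⊆ A → seed T ⊆ op A := by
    intro T hTS A hA v hv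
    rw [hseed] at hv
    simp only [Set.mem_iUnion] at hv
    obtain ⟨p, hpT, hv⟩ := hv
    have hb : bit v := ⟨p, hTS hpT, hv⟩
    refine Or.inl ⟨hb, Or.inl ?_⟩
    apply hA
    rw [hseed]
    simp only [Set.mem_iUnion]
    exact ⟨p, hpT, (hpr1 v p hv).2⟩
  have huufix : ∀ (T : Finset (Fin K)), T ⊆ S → op (uu T) = uu T := by
    intro T hTS
    apply Set.Subset.antisymm (hopcl _)
    intro v hv
    rw [← hclfix (seed T)] at hv
    rcases hv with hv | hv
    · exact hseedfire T hTS (cl (seed T)) (hscl (seed T)) hv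
    · exact hv
  -- KEY 1 : the closure of a chosen cycle avoids all other chosen masks
  have hkey1 : ∀ p ∈ S, cl (Cyc p) ⊆ Ab p \ (⋃ q ∈ S.erase p, Hq q) := by
    intro p hp
    apply hclle
    intro v hv
    have hnotH : ∀ x, x ∈ Cyc p → x ∉ ⋃ q ∈ S.erase p, Hq q := by
      intro x hx hmem
      simp only [Set.mem_iUnion] at hmem
      obtain ⟨q, hqe, hmem⟩ := hmem
      have hqS : q ∈ S := Finset.mem_of_mem_erase hqe
      have hqp : q ≠ p := Finset.ne_of_mem_erase hqe
      rcases hmem with hmem | hmem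
      · exact hdisj p q hqp.symm x hx hmem
      · exact hMUA p hp q hqS (fun h => hqp h.symm) x hmem (hCsubA p hx)
    rcases hv with hv | hv
    · exact ⟨hCsubA p hv, hnotH v hv⟩
    · -- v ∈ op A with A := Ab p \ ⋃ ...
      rcases hv with ⟨hb, hbg⟩ | ⟨hnb, hag⟩
      · obtain ⟨i, hiS, hvi⟩ := hb
        by_cases hip : i = p
        · subst hip
          have hex : ∃ u', G u' v ∧ u' ∈ Ab i := by
            rcases hbg with hbg | ⟨⟨u, hu1, hu2⟩, hall⟩
            · exact ⟨pr v, (hpr1 v i hvi).1, hbg.1⟩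
            · exact ⟨u, hu1, (hall u hu1 hu2).1⟩
          refine ⟨S16.mem_Abar_of_or hvi hex, hnotH v hvi⟩
        · exfalso
          have hAHi : ∀ x, x ∈ Ab i \ ⋃ q ∈ S.erase i, Hq q → True := fun _ _ => trivial
          -- pr v ∈ Cyc i ⊆ Hq i ; i ∈ S.erase p so A avoids Hq i
          have hie : i ∈ S.erase p := Finset.mem_erase.mpr ⟨hip, hiS⟩
          have hAavoid : ∀ x, x ∈ (Ab p \ ⋃ q ∈ S.erase p, Hq q) → x ∉ Hq i := by
            intro x hx hxi
            apply hx.2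
            simp only [Set.mem_iUnion]
            exact ⟨i, hie, hxi⟩
          rcases hbg with hbg | ⟨hex, hall⟩
          · exact hAavoid _ hbg (Or.inl (hpr1 v i hvi).2)
          · obtain ⟨zz, hz1, hz2⟩ := hz i v hvi hex
            have : zz ∈ Hq i := Or.inr (by
              rw [hMU]
              simp only [Set.mem_iUnion]
              exact ⟨v, hvi, hz2⟩)
            exact hAavoid _ (hall zz hz1.1 hz1.2) this
      · -- AND vertex
        have hvnp : v ∉ Cyc p := fun h => hnb ⟨p, hp, h⟩
        have hvA : v ∈ Ab p := S16.mem_Abar_of_and hvnp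
          ⟨hag.1, fun u hu => (hag.2 u hu).1⟩
        refine ⟨hvA, ?_⟩
        intro hmem
        simp only [Set.mem_iUnion] at hmem
        obtain ⟨q, hqe, hmem⟩ := hmem
        have hqS : q ∈ S := Finset.mem_of_mem_erase hqe
        have hqp : q ≠ p := Finset.ne_of_mem_erase hqe
        rcases hmem with hmem | hmem
        · exact hnb ⟨q, hqS, hmem⟩
        · exact hMUA p hp q hqS (fun h => hqp h.symm) v hmem hvA
  -- the "off" fixed points Y q
  set Y : Fin K → Set (Fin n) := fun q =>
    OrderHom.gfp ⟨fun A => op A ∩ (Hq q)ᶜ, fun A B hAB =>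
      Set.inter_subset_inter (op.2 hAB) (le_refl _)⟩ with hY
  have hYfix0 : ∀ q, op (Y q) ∩ (Hq q)ᶜ = Y q := by
    intro q
    exact OrderHom.map_gfp (⟨fun A => op A ∩ (Hq q)ᶜ, fun A B hAB =>
      Set.inter_subset_inter (op.2 hAB) (le_refl _)⟩ : Set (Fin n) →o Set (Fin n))
  have hYH : ∀ q, ∀ x ∈ Y q, x ∉ Hq q := by
    intro q x hx
    rw [← hYfix0 q] at hx
    exact hx.2
  have hYgfp : ∀ (q : Fin K) (A : Set (Fin n)), A ⊆ op A ∩ (Hq q)ᶜ → A ⊆ Y q := by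
    intro q A h
    exact OrderHom.le_gfp _ h
  -- blocking : no vertex of the mask fires at Y q
  have hblock : ∀ q ∈ S, ∀ w ∈ Hq q, w ∉ op (Y q) := by
    intro q hq w hw hwop
    by_cases hwc : w ∈ Cyc q
    · -- w on the cycle
      rcases hwop with ⟨hb, hbg⟩ | ⟨hnb, _⟩
      · rcases hbg with hbg | ⟨hex, hall⟩
        · exact hYH q _ hbg (Or.inl (hpr1 w q hwc).2)
        · obtain ⟨zz, hz1, hz2⟩ := hz q w hwc hex
          refine hYH q _ (hall zz hz1.1 hz1.2) (Or.inr ?_)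
          rw [hMU]
          simp only [Set.mem_iUnion]
          exact ⟨w, hwc, hz2⟩
      · exact hnb ⟨q, hq, hwc⟩
    · -- w in the moat and not on the cycle
      have hw' : w ∈ MU q := by
        rcases hw with hw | hw
        · exact absurd hw hwc
        · exact hw
      rw [hMU] at hw'
      simp only [Set.mem_iUnion] at hw'
      obtain ⟨v0, hv0, hwM⟩ := hw'
      have hnb : ¬ bit w := by
        rintro ⟨p, hp, hwp⟩
        by_cases hpq : p = q
        · exact hwc (hpq ▸ hwp)
        · exact hMUA p hp q hq hpq w
            (by rw [hMU]; simp only [Set.mem_iUnion]; exact ⟨v0, hv0, hwM⟩)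
            (hCsubA p hwp)
      rcases hwop with ⟨hb, _⟩ | ⟨_, hag⟩
      · exact hnb hb
      · obtain ⟨u, hu, huM⟩ := hsusM q v0 w hwM hag.1
        refine hYH q u (hag.2 u hu) (Or.inr ?_)
        rw [hMU]
        simp only [Set.mem_iUnion]
        exact ⟨v0, hv0, huM⟩
  -- Y q is a genuine fixed point
  have hYop : ∀ q ∈ S, op (Y q) = Y q := by
    intro q hq
    apply Set.Subset.antisymm
    · intro v hv
      rw [← hYfix0 q]
      refine ⟨hv, ?_⟩
      intro hvH
      exact hblock q hq v hvH hv
    · intro v hv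
      rw [← hYfix0 q] at hv
      exact hv.1
  -- X p ⊆ Y q for distinct chosen p, q
  have hXY : ∀ p ∈ S, ∀ q ∈ S, p ≠ q → cl (Cyc p) ⊆ Y q := by
    intro p hp q hq hpq
    apply hYgfp
    intro v hv
    constructor
    · -- cl (Cyc p) ⊆ op (cl (Cyc p))
      rw [← hclfix (Cyc p)] at hv
      rcases hv with hv | hv
      · -- Cyc p fires
        have hb : bit v := ⟨p, hp, hv⟩
        exact Or.inl ⟨hb, Or.inl (hscl (Cyc p) (hpr1 v p hv).2)⟩
      · exact hv
    · -- cl (Cyc p) avoids Hq q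
      intro hvH
      have := hkey1 p hp hv
      apply this.2
      simp only [Set.mem_iUnion]
      exact ⟨q, Finset.mem_erase.mpr ⟨hpq.symm, hq⟩, hvH⟩
  -- u T ⊆ Y q for q ∉ T
  have huY : ∀ (T : Finset (Fin K)), T ⊆ S → ∀ q ∈ S, q ∉ T → uu T ⊆ Y q := by
    intro T hTS q hq hqT
    apply hclle
    apply Set.union_subset
    · intro v hv
      rw [hseed] at hv
      simp only [Set.mem_iUnion] at hv
      obtain ⟨p, hpT, hv⟩ := hv
      have hpq : p ≠ q := fun h => hqT (h ▸ hpT)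
      exact hXY p (hTS hpT) q hq hpq (hscl (Cyc p) hv)
    · rw [hYop q hq]
  -- injectivity of T ↦ u T on subsets of S
  have husep : ∀ (T : Finset (Fin K)), T ⊆ S → ∀ q ∈ T, Cyc q ⊆ uu T := by
    intro T hTS q hqT
    intro v hv
    apply hscl
    rw [hseed]
    simp only [Set.mem_iUnion]
    exact ⟨q, hqT, hv⟩
  have huinj : ∀ (T T' : Finset (Fin K)), T ⊆ S → T' ⊆ S → T ≠ T' → uu T ≠ uu T' := by
    intro T T' hTS hT'S hne' heq
    have key : ∀ (A B : Finset (Fin K)), A ⊆ S → B ⊆ S → uu A = uu B →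
        ∀ q ∈ A, q ∈ B := by
      intro A B hAS hBS hAB q hqA
      by_contra hqB
      obtain ⟨v0, hv0⟩ := hne q
      have h1 : v0 ∈ uu A := husep A hAS q hqA hv0
      have h2 : v0 ∈ Y q := huY B hBS q (hAS hqA) hqB (hAB ▸ h1)
      exact hYH q v0 h2 (Or.inl hv0)
    apply hne'
    apply Finset.ext
    intro q
    exact ⟨fun h => key T T' hTS hT'S heq q h, fun h => key T' T hT'S hTS heq.symm q h⟩
  -- the Boolean network
  refine ⟨S16.fB G bit pr, S16.fB_mono G bit pr, ?_, ?_⟩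
  · intro u v
    constructor
    · intro h
      exact S16.fB_depends hprG h
    · intro h
      by_contra hG
      exact S16.fB_not_depends hprG hG h
  · -- counting the fixed points
    haveI : DecidableEq (Fin n → Bool) := Classical.decEq _
    set ind : Set (Fin n) → (Fin n → Bool) := fun A v => if v ∈ A then true else false
      with hind
    have hindset : ∀ A : Set (Fin n), {w | ind A w = true} = A := by
      intro A
      ext w
      simp [hind]
    have hindinj : ∀ A B : Set (Fin n), ind A = ind B → A = B := by
      intro A B h
      rw [← hindset A, ← hindset B, h]
    have hfixT : ∀ (T : Finset (Fin K)), T ⊆ S →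
        S16.fB G bit pr (ind (uu T)) = ind (uu T) := by
      intro T hTS
      funext v
      by_cases hv : v ∈ uu T
      · have h1 : S16.fB G bit pr (ind (uu T)) v = true := by
          apply S16.fB_eq_true.mpr
          rw [hindset]
          show v ∈ op (uu T)
          rw [huufix T hTS]
          exact hv
        have h2 : ind (uu T) v = true := by simp [hind, hv]
        rw [h1, h2]
      · have h1 : ¬ S16.fB G bit pr (ind (uu T)) v = true := by
          intro h
          apply hv
          have h' := S16.fB_eq_true.mp h
          rw [hindset] at h'
          have h'' : v ∈ op (uu T) := h'
          rwa [huufix T hTS] at h''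
        have h2 : ind (uu T) v = false := by simp [hind, hv]
        simp only [Bool.not_eq_true] at h1
        rw [h1, h2]
    have hinj : Set.InjOn (fun T => ind (uu T)) ↑S.powerset := by
      intro T hT T' hT' h
      by_contra hne'
      exact huinj T T' (Finset.mem_powerset.mp hT) (Finset.mem_powerset.mp hT') hne'
        (hindinj _ _ h)
    have hcard : ((S.powerset).image (fun T => ind (uu T))).card = 2 ^ S.card := by
      rw [Finset.card_image_of_injOn hinj, Finset.card_powerset]
    have hsub : ↑((S.powerset).image (fun T => ind (uu T)))
        ⊆ {x : Fin n → Bool | S16.fB G bit pr x = x} := by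
      intro x hx
      simp only [Finset.coe_image, Set.mem_image, Finset.mem_coe,
        Finset.mem_powerset] at hx
      obtain ⟨T, hT, rfl⟩ := hx
      exact hfixT T hT
    have hfin : ({x : Fin n → Bool | S16.fB G bit pr x = x}).Finite := Set.toFinite _
    have h2m : 2 ^ S.card ≤ ({x : Fin n → Bool | S16.fB G bit pr x = x}).ncard := by
      rw [← hcard, ← Set.ncard_coe_finset]
      exact Set.ncard_le_ncard hsub hfin
    have hceil : ⌈(K : ℚ) / 3 ^ ℓ⌉₊ ≤ S.card := by
      rcases Nat.eq_zero_or_pos K with hK0 | hKpos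
      · simp [hK0]
      · have hl1 : 1 ≤ ℓ := by
          have h0 : (0 : ℕ) < K := hKpos
          have hsh := hshort (P.get ⟨0, h0⟩) (List.get_mem P ⟨0, h0⟩)
          have hlen := (hcycle ⟨0, h0⟩).1
          have hpos := List.length_pos_iff.mpr hlen
          omega
        have h31 : 2 * ℓ + 1 ≤ 3 ^ ℓ := S16.two_mul_add_one_le ℓ hl1
        have hKle : K ≤ (2*ℓ+1) * S.card := by simpa using hScard
        have hK3 : K ≤ 3 ^ ℓ * S.card :=
          le_trans hKle (Nat.mul_le_mul_right _ h31)
        apply Nat.ceil_le.mpr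
        rw [div_le_iff₀ (by positivity : (0:ℚ) < 3 ^ ℓ)]
        have hcast : (K:ℚ) ≤ ((3 ^ ℓ * S.card : ℕ) : ℚ) := by exact_mod_cast hK3
        push_cast at hcast ⊢
        linarith
    calc 2 ^ ⌈(K:ℚ)/3^ℓ⌉₊ ≤ 2 ^ S.card := Nat.pow_le_pow_right (by norm_num) hceil
      _ ≤ _ := h2m
end

section
/- For every loop-less symmetric digraph G (equivalently, every simple undirected graph regarded as a digraph by replacing each edge by two opposite arcs), the inequalities ν(G)/6 ≤ ν*(G) ≤ ν(G) ≤ τ(G) ≤ 2·ν(G) hold. -/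
open Classical

section Aux

variable {V : Type*} {G : V → V → Prop}

lemma aux_cycarcs_mem {l : List V} {a : V × V} (h : a ∈ CycArcs l) : a.1 ∈ l ∧ a.2 ∈ l := by
  unfold CycArcs at h
  have h1 := (List.of_mem_zip h).1
  have h2 := (List.of_mem_zip h).2
  have h2' : a.2 ∈ l ++ l.take 1 := List.mem_of_mem_tail h2
  have ht : ∀ x : V, x ∈ l ++ l.take 1 → x ∈ l := by
    intro x hx
    rcases List.mem_append.1 hx with hx | hx
    · exact hx
    · exact (List.take_subset 1 l) hx
  exact ⟨ht _ h1, ht _ h2'⟩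

lemma aux_cycarcs_pair (a b : V) : CycArcs [a, b] = [(a, b), (b, a)] := rfl

lemma aux_cycle_struct {C : List V} (hC : IsCycle G C) (hloop : ∀ v, ¬ G v v) :
    ∃ a b r, C = a :: b :: r ∧ G a b ∧ a ≠ b := by
  obtain ⟨hne, hnd, harc⟩ := hC
  match C, hne with
  | [v], _ =>
      exact absurd (harc (v, v) (by simp [CycArcs])) (hloop v)
  | a :: b :: r, _ =>
      refine ⟨a, b, r, rfl, harc (a, b) ?_, ?_⟩
      · simp [CycArcs]
      · intro h; subst h; simp at hnd

lemma aux_cycle_pair {a b : V} (h1 : G a b) (h2 : G b a) (hne : a ≠ b) :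
    IsCycle G [a, b] := by
  refine ⟨by simp, by simp [hne], ?_⟩
  intro p hp
  rw [aux_cycarcs_pair] at hp
  simp only [List.mem_cons, List.not_mem_nil, or_false] at hp
  rcases hp with hp | hp <;> subst hp <;> assumption

lemma aux_mem_pathArcs_append : ∀ (l : List V) (x v : V), (x, v) ∈ PathArcs (l ++ [x, v]) := by
  intro l x v
  induction l with
  | nil => simp [PathArcs]
  | cons a l ih =>
      obtain ⟨c, t, hct⟩ : ∃ c t, l ++ [x, v] = c :: t := by
        cases h : l ++ [x, v] with
        | nil => simp at h
        | cons c t => exact ⟨c, t, rfl⟩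
      show (x, v) ∈ PathArcs (a :: (l ++ [x, v]))
      rw [hct]
      have : PathArcs (a :: c :: t) = (a, c) :: PathArcs (c :: t) := rfl
      rw [this]
      rw [hct] at ih
      exact List.mem_cons_of_mem _ ih

lemma aux_last_two {l : List V} {v : V} (h2 : 2 ≤ l.length) (hl : l.getLast? = some v) :
    ∃ l₂ x, l = l₂ ++ [x, v] := by
  have hne : l ≠ [] := by intro h; subst h; simp at h2
  have hv : l.getLast hne = v := by
    rw [List.getLast?_eq_getLast hne] at hl; exact Option.some_injective _ hl
  have hdec : l = l.dropLast ++ [v] := by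
    conv_lhs => rw [← List.dropLast_append_getLast hne]
    rw [hv]
  have hne2 : l.dropLast ≠ [] := by
    intro h
    rw [h] at hdec
    rw [hdec] at h2; simp at h2
  have hdec2 : l.dropLast = l.dropLast.dropLast ++ [l.dropLast.getLast hne2] :=
    (List.dropLast_append_getLast hne2).symm
  refine ⟨l.dropLast.dropLast, l.dropLast.getLast hne2, ?_⟩
  conv_lhs => rw [hdec]
  conv_lhs => rw [hdec2]
  simp

lemma aux_return_path {Q : List (List V)} {v w : V} {Ci : List V}
    (hvw : G v w) (hwv : G w v) (hne : v ≠ w) (hfree : ∀ C ∈ Q, w ∉ C)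
    (hvCi : v ∈ Ci) : PrincipalFrom G Q (fun u => u ∈ Ci) v := by
  refine ⟨[v, w, v], ⟨⟨by simp, ?_, ?_, ?_⟩, ?_, ?_⟩, ⟨v, by simp, hvCi⟩, by simp⟩
  · show ([v, w] : List V).Nodup; simp [hne]
  · show ([w, v] : List V).Nodup
    simp only [List.nodup_cons, List.mem_singleton, List.nodup_nil, and_true, List.not_mem_nil,
      not_false_iff]
    exact fun h => hne h.symm
  · intro a ha
    have : PathArcs [v, w, v] = [(v, w), (w, v)] := rfl
    rw [this] at ha
    simp only [List.mem_cons, List.not_mem_nil, or_false] at ha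
    rcases ha with ha | ha <;> subst ha <;> assumption
  · intro a ha C hC hmem
    have : PathArcs [v, w, v] = [(v, w), (w, v)] := rfl
    rw [this] at ha
    have hw : w ∈ C := by
      simp only [List.mem_cons, List.not_mem_nil, or_false] at ha
      rcases ha with ha | ha <;> subst ha
      · exact (aux_cycarcs_mem hmem).2
      · exact (aux_cycarcs_mem hmem).1
    exact hfree C hC hw
  · intro x hx C hC
    have : ([v, w, v] : List V).tail.dropLast = [w] := rfl
    rw [this] at hx
    simp only [List.mem_singleton] at hx
    subst hx
    exact hfree C hC

lemma aux_extract {Q : List (List V)} {A : V → Prop} {v : V}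
    (h : PrincipalFrom G Q A v) :
    ∃ x, G x v ∧ ∀ C ∈ Q, (x, v) ∉ CycArcs C := by
  obtain ⟨l, ⟨⟨hlen, _, _, harc⟩, hnc, _⟩, _, hlast⟩ := h
  obtain ⟨l₂, x, rfl⟩ := aux_last_two hlen hlast
  have hmem := aux_mem_pathArcs_append l₂ x v
  exact ⟨x, harc _ hmem, fun C hC => hnc _ hmem C hC⟩

lemma aux_count : ∀ (P : List (List V)) (I : Finset V),
    P.Pairwise (fun l₁ l₂ => ∀ v ∈ l₁, v ∉ l₂) → (∀ C ∈ P, ∃ v ∈ C, v ∈ I) →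
    P.length ≤ I.card := by
  intro P
  induction P with
  | nil => intro I _ _; simp
  | cons C P' ih =>
      intro I hpw hmeet
      obtain ⟨v₀, hv₀C, hv₀I⟩ := hmeet C (List.mem_cons_self)
      have hpw' := (List.pairwise_cons.1 hpw)
      have hmeet' : ∀ C' ∈ P', ∃ v ∈ C', v ∈ I.erase v₀ := by
        intro C' hC'
        obtain ⟨v, hvC', hvI⟩ := hmeet C' (List.mem_cons_of_mem _ hC')
        refine ⟨v, hvC', Finset.mem_erase.2 ⟨?_, hvI⟩⟩
        intro h; subst h
        exact hpw'.1 C' hC' v hv₀C hvC'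
      have := ih (I.erase v₀) hpw'.2 hmeet'
      have hlt : (I.erase v₀).card < I.card := Finset.card_erase_lt_of_mem hv₀I
      simp only [List.length_cons]
      omega

def inPair {V : Type*} (v : V) (p : V × V) : Prop := v = p.1 ∨ v = p.2

lemma aux_pairs (hloop : ∀ v : V, ¬ G v v) :
    ∀ (P : List (List V)), IsPacking G P →
    ∃ E : Finset (V × V), E.card = P.length ∧ (∀ p ∈ E, G p.1 p.2 ∧ p.1 ≠ p.2) ∧
      (∀ p ∈ E, ∀ q ∈ E, p ≠ q → ∀ v, inPair v p → ¬ inPair v q) ∧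
      (∀ p ∈ E, ∀ v, inPair v p → ∃ C ∈ P, v ∈ C) := by
  classical
  intro P
  induction P with
  | nil => intro _; exact ⟨∅, by simp, by simp, by simp, by simp⟩
  | cons C P' ih =>
      intro hP
      have hC : IsCycle G C := hP.1 C (List.mem_cons_self)
      have hP' : IsPacking G P' :=
        ⟨fun l hl => hP.1 l (List.mem_cons_of_mem _ hl), (List.pairwise_cons.1 hP.2).2⟩
      have hdisj : ∀ C' ∈ P', ∀ v ∈ C, v ∉ C' := (List.pairwise_cons.1 hP.2).1
      obtain ⟨E', hcard, hadj, hpw, hcov⟩ := ih hP'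
      obtain ⟨a, b, r, hCe, hab, hne⟩ := aux_cycle_struct hC hloop
      have haC : a ∈ C := by rw [hCe]; simp
      have hbC : b ∈ C := by rw [hCe]; simp
      have hnotmem : (a, b) ∉ E' := by
        intro hmem
        obtain ⟨C', hC', haC'⟩ := hcov (a, b) hmem a (Or.inl rfl)
        exact hdisj C' hC' a haC haC'
      have hdisj2 : ∀ q ∈ E', ∀ v, inPair v (a, b) → ¬ inPair v q := by
        intro q hq v hv hvq
        obtain ⟨C', hC', hvC'⟩ := hcov q hq v hvq
        have hvC : v ∈ C := by rcases hv with h | h <;> subst h <;> assumption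
        exact hdisj C' hC' v hvC hvC'
      refine ⟨insert (a, b) E', ?_, ?_, ?_, ?_⟩
      · rw [Finset.card_insert_of_notMem hnotmem, hcard]; simp
      · intro p hp
        rcases Finset.mem_insert.1 hp with h | h
        · subst h; exact ⟨hab, hne⟩
        · exact hadj p h
      · intro p hp q hq hpq v hvp hvq
        rcases Finset.mem_insert.1 hp with h | h <;> rcases Finset.mem_insert.1 hq with h' | h'
        · subst h; subst h'; exact hpq rfl
        · subst h; exact hdisj2 q h' v hvp hvq
        · subst h'; exact hdisj2 p h v hvq hvp
        · exact hpw p h q h' hpq v hvp hvq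
      · intro p hp v hvp
        rcases Finset.mem_insert.1 hp with h | h
        · subst h
          have : v ∈ C := by rcases hvp with h | h <;> subst h <;> assumption
          exact ⟨C, List.mem_cons_self, this⟩
        · obtain ⟨C', hC', hvC'⟩ := hcov p h v hvp
          exact ⟨C', List.mem_cons_of_mem _ hC', hvC'⟩

lemma aux_pack_pairs (hsym : ∀ u v : V, G u v ↔ G v u) (E : Finset (V × V))
    (hadj : ∀ p ∈ E, G p.1 p.2 ∧ p.1 ≠ p.2)
    (hpw : ∀ p ∈ E, ∀ q ∈ E, p ≠ q → ∀ v, inPair v p → ¬ inPair v q) :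
    IsPacking G (E.toList.map fun p => [p.1, p.2]) := by
  constructor
  · intro l hl
    obtain ⟨p, hp, rfl⟩ := List.mem_map.1 hl
    have hpE : p ∈ E := Finset.mem_toList.1 hp
    exact aux_cycle_pair (hadj p hpE).1 ((hsym p.1 p.2).1 (hadj p hpE).1) (hadj p hpE).2
  · rw [List.pairwise_map]
    have hnd : E.toList.Pairwise (· ≠ ·) := E.nodup_toList
    refine hnd.imp_of_mem ?_
    intro p q hp hq hpq v hvp hvq
    have hvp' : inPair v p := by
      simp only [List.mem_cons, List.not_mem_nil, or_false] at hvp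
      exact hvp
    have hvq' : inPair v q := by
      simp only [List.mem_cons, List.not_mem_nil, or_false] at hvq
      exact hvq
    exact hpw p (Finset.mem_toList.1 hp) q (Finset.mem_toList.1 hq) hpq v hvp' hvq'

lemma aux_is {α : Type*} [DecidableEq α] (F : α → Finset α) (hF : ∀ i, (F i).card ≤ 2)
    (hFi : ∀ i, i ∉ F i) :
    ∀ (n : ℕ) (T : Finset α), T.card ≤ n →
      ∃ S ⊆ T, T.card ≤ 5 * S.card ∧ ∀ i ∈ S, ∀ j ∈ S, j ∉ F i := by
  intro n
  induction n with
  | zero =>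
      intro T hT
      exact ⟨∅, Finset.empty_subset _, by omega, by simp⟩
  | succ n ih =>
      intro T hT
      rcases Finset.eq_empty_or_nonempty T with rfl | hTne
      · exact ⟨∅, Finset.empty_subset _, by simp, by simp⟩
      set deg : α → ℕ := fun i => (F i ∩ T).card + (T.filter fun j => i ∈ F j).card with hdeg
      have hsum : ∑ i ∈ T, deg i ≤ 4 * T.card := by
        have h1 : ∑ i ∈ T, (F i ∩ T).card ≤ 2 * T.card := by
          calc ∑ i ∈ T, (F i ∩ T).card ≤ ∑ i ∈ T, 2 :=
                Finset.sum_le_sum fun i _ =>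
                  le_trans (Finset.card_le_card (Finset.inter_subset_left)) (hF i)
            _ = 2 * T.card := by rw [Finset.sum_const, smul_eq_mul, mul_comm]
        have h2 : ∑ i ∈ T, (T.filter fun j => i ∈ F j).card ≤ 2 * T.card := by
          have : ∑ i ∈ T, (T.filter fun j => i ∈ F j).card
              = ∑ j ∈ T, (T.filter fun i => i ∈ F j).card := by
            simp only [Finset.card_filter]
            exact Finset.sum_comm
          rw [this]
          calc ∑ j ∈ T, (T.filter fun i => i ∈ F j).card ≤ ∑ j ∈ T, 2 := by
                refine Finset.sum_le_sum fun j _ => ?_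
                refine le_trans (Finset.card_le_card ?_) (hF j)
                intro i hi; exact (Finset.mem_filter.1 hi).2
            _ = 2 * T.card := by rw [Finset.sum_const, smul_eq_mul, mul_comm]
        calc ∑ i ∈ T, deg i = ∑ i ∈ T, (F i ∩ T).card + ∑ i ∈ T, (T.filter fun j => i ∈ F j).card :=
              Finset.sum_add_distrib
          _ ≤ 4 * T.card := by omega
      obtain ⟨i₀, hi₀T, hi₀⟩ : ∃ i₀ ∈ T, deg i₀ ≤ 4 := by
        by_contra hcon
        push_neg at hcon
        have : 5 * T.card ≤ ∑ i ∈ T, deg i := by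
          calc 5 * T.card = ∑ _i ∈ T, 5 := by rw [Finset.sum_const, smul_eq_mul, mul_comm]
            _ ≤ ∑ i ∈ T, deg i := Finset.sum_le_sum fun i hi => hcon i hi
        have hpos : 0 < T.card := Finset.card_pos.2 hTne
        omega
      set X : Finset α := insert i₀ ((F i₀ ∩ T) ∪ T.filter fun j => i₀ ∈ F j) with hX
      have hXcard : X.card ≤ 5 := by
        calc X.card ≤ ((F i₀ ∩ T) ∪ T.filter fun j => i₀ ∈ F j).card + 1 :=
              Finset.card_insert_le _ _
          _ ≤ (F i₀ ∩ T).card + (T.filter fun j => i₀ ∈ F j).card + 1 := by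
              have := Finset.card_union_le (F i₀ ∩ T) (T.filter fun j => i₀ ∈ F j)
              omega
          _ ≤ 5 := by have := hi₀; simp only [hdeg] at this; omega
      set T' : Finset α := T \ X with hT'
      have hi₀X : i₀ ∈ X := Finset.mem_insert_self _ _
      have hi₀T' : i₀ ∉ T' := by simp [hT', hi₀X]
      have hT'T : T' ⊆ T := Finset.sdiff_subset
      have hT'lt : T'.card < T.card := by
        refine Finset.card_lt_card ?_
        exact Finset.ssubset_iff_of_subset hT'T |>.2 ⟨i₀, hi₀T, hi₀T'⟩
      have hT'le : T'.card ≤ n := by omega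
      have hTle : T.card ≤ T'.card + 5 := by
        have : T ⊆ T' ∪ X := by
          intro x hx
          by_cases hxX : x ∈ X
          · exact Finset.mem_union_right _ hxX
          · exact Finset.mem_union_left _ (Finset.mem_sdiff.2 ⟨hx, hxX⟩)
        have := Finset.card_le_card this
        have := Finset.card_union_le T' X
        omega
      obtain ⟨S', hS'T', hS'card, hS'prop⟩ := ih T' hT'le
      refine ⟨insert i₀ S', ?_, ?_, ?_⟩
      · intro x hx
        rcases Finset.mem_insert.1 hx with rfl | hx
        · exact hi₀T
        · exact hT'T (hS'T' hx)
      · have hi₀S' : i₀ ∉ S' := fun h => hi₀T' (hS'T' h)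
        rw [Finset.card_insert_of_notMem hi₀S']
        omega
      · intro i hi j hj
        rcases Finset.mem_insert.1 hi with hi | hi <;> rcases Finset.mem_insert.1 hj with hj | hj
        · rw [hi, hj]; exact hFi i₀
        · -- i = i₀, j ∈ S' : j ∉ F i₀
          rw [hi]
          intro hjF
          have hjT' : j ∈ T' := hS'T' hj
          have hjT : j ∈ T := hT'T hjT'
          have : j ∈ X := Finset.mem_insert.2 (Or.inr (Finset.mem_union_left _
            (Finset.mem_inter.2 ⟨hjF, hjT⟩)))
          exact (Finset.mem_sdiff.1 hjT').2 this
        · -- i ∈ S', j = i₀ : i₀ ∉ F i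
          rw [hj]
          intro hjF
          have hiT' : i ∈ T' := hS'T' hi
          have hiT : i ∈ T := hT'T hiT'
          have : i ∈ X := Finset.mem_insert.2 (Or.inr (Finset.mem_union_right _
            (Finset.mem_filter.2 ⟨hiT, hjF⟩)))
          exact (Finset.mem_sdiff.1 hiT').2 this
        · exact hS'prop i hi j hj

end Aux

/-- for every loop-less symmetric digraph,
`ν/6 ≤ ν* ≤ ν ≤ τ ≤ 2ν`. -/
theorem stmt17 {V : Type*} [Fintype V] (G : V → V → Prop)
    (hsym : ∀ u v : V, G u v ↔ G v u) (hloop : ∀ v : V, ¬ G v v) :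
    (nu G : ℚ) / 6 ≤ (nuStar G : ℚ) ∧ nuStar G ≤ nu G ∧
      nu G ≤ tau G ∧ tau G ≤ 2 * nu G := by
  classical
  -- boundedness of packings
  have hbdd_pack : ∀ P : List (List V), IsPacking G P → P.length ≤ Fintype.card V := by
    intro P hP
    rw [← Finset.card_univ]
    refine aux_count P Finset.univ hP.2 ?_
    intro C hC
    obtain ⟨a, b, r, hCe, _, _⟩ := aux_cycle_struct (hP.1 C hC) hloop
    exact ⟨a, by rw [hCe]; simp, Finset.mem_univ a⟩
  set A : Set ℕ := {k | ∃ P : List (List V), IsPacking G P ∧ P.length = k} with hA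
  set B : Set ℕ := {k | ∃ P : List (List V), IsSpecialPacking G P ∧ P.length = k} with hB
  set Fv : Set ℕ := {k | ∃ I : Finset V, IsFVS G I ∧ I.card = k} with hFv
  have hnuA : nu G = sSup A := rfl
  have hnuB : nuStar G = sSup B := rfl
  have htauF : tau G = sInf Fv := rfl
  have hAne : A.Nonempty := ⟨0, [], ⟨by simp, by simp⟩, rfl⟩
  have hBne : B.Nonempty := ⟨0, [], ⟨⟨by simp, by simp⟩, by simp⟩, rfl⟩
  have hBsub : B ⊆ A := by
    rintro k ⟨P, hP, hk⟩
    exact ⟨P, hP.1, hk⟩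
  have hAbdd : BddAbove A := by
    refine ⟨Fintype.card V, ?_⟩
    rintro k ⟨P, hP, rfl⟩
    exact hbdd_pack P hP
  have hBbdd : BddAbove B := hAbdd.mono hBsub
  have hFvne : Fv.Nonempty := by
    refine ⟨(Finset.univ : Finset V).card, Finset.univ, ?_, rfl⟩
    intro l hl
    obtain ⟨a, _, _, hCe, _, _⟩ := aux_cycle_struct hl hloop
    exact ⟨a, by rw [hCe]; simp, Finset.mem_univ a⟩
  -- ν* ≤ ν
  have h2 : nuStar G ≤ nu G := by
    rw [hnuA, hnuB]
    exact csSup_le_csSup hAbdd hBne hBsub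
  -- ν ≤ τ
  have h3 : nu G ≤ tau G := by
    obtain ⟨I, hI, hIc⟩ := Nat.sInf_mem hFvne
    rw [hnuA, ← htauF] at *
    refine csSup_le hAne ?_
    rintro k ⟨P, hP, rfl⟩
    calc P.length ≤ I.card := aux_count P I hP.2 fun C hC => hI C (hP.1 C hC)
      _ = tau G := hIc
  -- maximum packing and its pairs
  obtain ⟨P₀, hP₀, hP₀len⟩ : ∃ P : List (List V), IsPacking G P ∧ P.length = nu G := by
    have := Nat.sSup_mem hAne hAbdd
    rw [← hnuA] at this
    exact this
  obtain ⟨E, hEcard, hEadj, hEpw, _⟩ := aux_pairs hloop P₀ hP₀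
  have hEnu : E.card = nu G := by rw [hEcard, hP₀len]
  -- τ ≤ 2ν
  have h4 : tau G ≤ 2 * nu G := by
    set I : Finset V := E.image Prod.fst ∪ E.image Prod.snd with hI
    have hIfvs : IsFVS G I := by
      intro l hl
      by_contra hcon
      push_neg at hcon
      obtain ⟨u, v, r, hle, huv, hune⟩ := aux_cycle_struct hl hloop
      have hu : u ∈ l := by rw [hle]; simp
      have hv : v ∈ l := by rw [hle]; simp
      have hnotI : ∀ w ∈ l, ∀ p ∈ E, ¬ inPair w p := by
        intro w hw p hp hwp
        refine hcon w hw ?_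
        rcases hwp with h | h <;> subst h
        · exact Finset.mem_union_left _ (Finset.mem_image_of_mem _ hp)
        · exact Finset.mem_union_right _ (Finset.mem_image_of_mem _ hp)
      set QE := E.toList.map fun p => [p.1, p.2] with hQE
      have hQEpack : IsPacking G QE := aux_pack_pairs hsym E hEadj hEpw
      have hnew : IsPacking G ([u, v] :: QE) := by
        constructor
        · intro C hC
          rcases List.mem_cons.1 hC with h | h
          · subst h; exact aux_cycle_pair huv ((hsym u v).1 huv) hune
          · exact hQEpack.1 C h
        · rw [List.pairwise_cons]
          refine ⟨?_, hQEpack.2⟩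
          intro C hC w hw hwC
          obtain ⟨p, hp, rfl⟩ := List.mem_map.1 hC
          have hpE : p ∈ E := Finset.mem_toList.1 hp
          have hwl : w ∈ l := by
            simp only [List.mem_cons, List.not_mem_nil, or_false] at hw
            rcases hw with h | h <;> subst h <;> assumption
          refine hnotI w hwl p hpE ?_
          simp only [List.mem_cons, List.not_mem_nil, or_false] at hwC
          exact hwC
      have hmem : nu G + 1 ∈ A := by
        refine ⟨[u, v] :: QE, hnew, ?_⟩
        simp [hQE, Finset.length_toList, hEnu]
      have := le_csSup hAbdd hmem
      rw [← hnuA] at this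
      omega
    have htle : tau G ≤ I.card := by
      rw [htauF]
      exact Nat.sInf_le ⟨I, hIfvs, rfl⟩
    have hIcard : I.card ≤ 2 * nu G := by
      calc I.card ≤ (E.image Prod.fst).card + (E.image Prod.snd).card := Finset.card_union_le _ _
        _ ≤ E.card + E.card := Nat.add_le_add (Finset.card_image_le) (Finset.card_image_le)
        _ = 2 * nu G := by rw [hEnu]; ring
    omega
  -- ν ≤ 6 ν*
  have h1 : nu G ≤ 6 * nuStar G := by
    -- constraint function
    set g : (V × V) → V → Finset (V × V) := fun p v =>
      if h : (∀ w, G v w → ∃ q ∈ E, inPair w q) ∧ (∃ q ∈ E.erase p, ∃ w, G v w ∧ inPair w q)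
      then {h.2.choose} else ∅ with hg
    have hgspec : ∀ p v q, q ∈ g p v → q ∈ E.erase p ∧ ∃ w, G v w ∧ inPair w q := by
      intro p v q hq
      simp only [hg] at hq
      split at hq
      case isTrue h =>
        simp only [Finset.mem_singleton] at hq
        subst hq
        exact h.2.choose_spec
      case isFalse => simp at hq
    set F : (V × V) → Finset (V × V) := fun p => g p p.1 ∪ g p p.2 with hF
    have hgcard : ∀ p v, (g p v).card ≤ 1 := by
      intro p v
      simp only [hg]
      split
      · simp
      · simp
    have hFcard : ∀ p, (F p).card ≤ 2 := by
      intro p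
      calc (F p).card ≤ (g p p.1).card + (g p p.2).card := Finset.card_union_le _ _
        _ ≤ 2 := by have := hgcard p p.1; have := hgcard p p.2; omega
    have hFi : ∀ p, p ∉ F p := by
      intro p hp
      rcases Finset.mem_union.1 hp with h | h <;>
        exact (Finset.mem_erase.1 (hgspec _ _ _ h).1).1 rfl
    obtain ⟨S, hSsub, hScard, hIS⟩ := aux_is F hFcard hFi E.card E le_rfl
    set Q := S.toList.map fun p => [p.1, p.2] with hQ
    have hQpack : IsPacking G Q :=
      aux_pack_pairs hsym S (fun p hp => hEadj p (hSsub hp))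
        (fun p hp q hq => hEpw p (hSsub hp) q (hSsub hq))
    have hmemQ : ∀ C ∈ Q, ∃ p ∈ S, C = [p.1, p.2] := by
      intro C hC
      obtain ⟨p, hp, rfl⟩ := List.mem_map.1 hC
      exact ⟨p, Finset.mem_toList.1 hp, rfl⟩
    have hspec : IsSpecialPacking G Q := by
      refine ⟨hQpack, ?_⟩
      intro Ci hCi v hv htr
      left
      obtain ⟨p, hpS, hpCi⟩ := hmemQ Ci hCi
      have hpE : p ∈ E := hSsub hpS
      obtain ⟨Cj, hCj, hCjne, hpf⟩ := htr
      obtain ⟨x, hxv, hxnc⟩ := aux_extract hpf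
      have hvx : G v x := (hsym x v).1 hxv
      have hxvne : v ≠ x := by
        intro h; exact hloop x (h ▸ hxv)
      have hvp : inPair v p := by
        rw [hpCi] at hv
        simp only [List.mem_cons, List.not_mem_nil, or_false] at hv
        exact hv
      by_cases hxQ : ∃ C ∈ Q, x ∈ C
      · obtain ⟨C, hCQ, hxC⟩ := hxQ
        obtain ⟨q, hqS, hqC⟩ := hmemQ C hCQ
        have hqE : q ∈ E := hSsub hqS
        have hxq : inPair x q := by
          rw [hqC] at hxC
          simp only [List.mem_cons, List.not_mem_nil, or_false] at hxC
          exact hxC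
        by_cases hqp : q = p
        · -- the arc (x,v) would be a cycle arc of Ci
          exfalso
          subst hqp
          have harc : (x, v) ∈ CycArcs Ci := by
            rw [hpCi, aux_cycarcs_pair]
            rcases hxq with h1 | h1 <;> rcases hvp with h2 | h2
            · exact absurd (h2.trans h1.symm) hxvne
            · rw [h1, h2]; simp
            · rw [h1, h2]; simp
            · exact absurd (h2.trans h1.symm) hxvne
          exact hxnc Ci hCi harc
        · -- q ≠ p
          by_cases hall : ∀ w, G v w → ∃ q' ∈ E, inPair w q'
          · have hex : ∃ q' ∈ E.erase p, ∃ w, G v w ∧ inPair w q' :=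
              ⟨q, Finset.mem_erase.2 ⟨hqp, hqE⟩, x, hvx, hxq⟩
            have hqsg : hex.choose ∈ g p v := by
              simp only [hg]
              rw [dif_pos ⟨hall, hex⟩]
              simp only [Finset.mem_singleton]
            set qs := hex.choose with hqs
            obtain ⟨hqsE, w, hw1, hw2⟩ := hex.choose_spec
            have hqsF : qs ∈ F p := by
              rcases hvp with h | h
              · exact Finset.mem_union_left _ (h ▸ hqsg)
              · exact Finset.mem_union_right _ (h ▸ hqsg)
            have hqsS : qs ∉ S := fun hc => hIS p hpS qs hc hqsF
            have hwfree : ∀ C ∈ Q, w ∉ C := by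
              intro C hC hwC
              obtain ⟨q', hq'S, hq'C⟩ := hmemQ C hC
              have hwq' : inPair w q' := by
                rw [hq'C] at hwC
                simp only [List.mem_cons, List.not_mem_nil, or_false] at hwC
                exact hwC
              have hq'ne : q' ≠ qs := fun h => hqsS (h ▸ hq'S)
              exact hEpw q' (hSsub hq'S) qs (Finset.mem_of_mem_erase hqsE) hq'ne w hwq' hw2
            have hwvne : v ≠ w := fun h => hloop w (h ▸ hw1)
            exact aux_return_path hw1 ((hsym v w).1 hw1) hwvne hwfree hv
          · push_neg at hall
            obtain ⟨w, hw1, hw2⟩ := hall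
            have hwfree : ∀ C ∈ Q, w ∉ C := by
              intro C hC hwC
              obtain ⟨q', hq'S, hq'C⟩ := hmemQ C hC
              have hwq' : inPair w q' := by
                rw [hq'C] at hwC
                simp only [List.mem_cons, List.not_mem_nil, or_false] at hwC
                exact hwC
              exact hw2 q' (hSsub hq'S) hwq'
            have hwvne : v ≠ w := fun h => hloop w (h ▸ hw1)
            exact aux_return_path hw1 ((hsym v w).1 hw1) hwvne hwfree hv
      · push_neg at hxQ
        exact aux_return_path hvx hxv hxvne hxQ hv
    have hSB : S.card ∈ B := by
      refine ⟨Q, hspec, ?_⟩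
      simp [hQ, Finset.length_toList]
    have hle : S.card ≤ nuStar G := by
      rw [hnuB]
      exact le_csSup hBbdd hSB
    omega
  refine ⟨?_, by exact_mod_cast h2, by exact_mod_cast h3, by exact_mod_cast h4⟩
  rw [div_le_iff₀ (by norm_num : (0:ℚ) < 6)]
  have : (nu G : ℚ) ≤ 6 * nuStar G := by exact_mod_cast h1
  linarith
end

section
/- Let f : {0,1}^n → {0,1}^n be a Boolean network with signed interaction graph (G,σ). Then the number of fixed points of f is at most the sum of the ν^+ + 1 largest binomial coefficients C(τ*_m, k), i.e. at most Σ_{k=⌊(τ*_m−ν^+)/2⌋}^{⌊(τ*_m+ν^+)/2⌋} C(τ*_m, k), where ν^+ = ν^+(G,σ) and τ*_m = τ*_m(G,σ). -/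
set_option linter.unusedSectionVars false


open Classical

section MyAux
open Finset

section Lists
variable {V : Type*}

lemma map_fst_zip_tail : ∀ (A : List V), (A.zip A.tail).map Prod.fst = A.dropLast
  | [] => rfl
  | [_] => rfl
  | a :: b :: T => by
      have ih := map_fst_zip_tail (b :: T)
      simp only [List.tail_cons, List.zip_cons_cons, List.map_cons] at *
      rw [ih]
      rfl

lemma map_snd_zip_tail : ∀ (A : List V), (A.zip A.tail).map Prod.snd = A.tail
  | [] => rfl
  | [_] => rfl
  | a :: b :: T => by
      have ih := map_snd_zip_tail (b :: T)
      simp only [List.tail_cons, List.zip_cons_cons, List.map_cons] at *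
      rw [ih]

lemma cycArcs_fst_prod (φ : V → ℤ) {l : List V} (h : l ≠ []) :
    ((CycArcs l).map (fun a => φ a.1)).prod = (l.map φ).prod := by
  obtain ⟨a, t, rfl⟩ := List.exists_cons_of_ne_nil h
  have : (fun a : V × V => φ a.1) = φ ∘ Prod.fst := rfl
  rw [CycArcs, this, ← List.map_map, map_fst_zip_tail,
    show (a::t).take 1 = [a] from rfl, List.dropLast_concat]

lemma cycArcs_snd_prod (φ : V → ℤ) {l : List V} (h : l ≠ []) :
    ((CycArcs l).map (fun a => φ a.2)).prod = (l.map φ).prod := by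
  obtain ⟨a, t, rfl⟩ := List.exists_cons_of_ne_nil h
  have : (fun a : V × V => φ a.2) = φ ∘ Prod.snd := rfl
  rw [CycArcs, this, ← List.map_map, map_snd_zip_tail,
    show (a::t).take 1 = [a] from rfl]
  simp [List.prod_append, mul_comm]

end Lists


section MyAux2
variable {V : Type*}

lemma mem_zip_tail_iff {A : List V} {a : V × V} :
    a ∈ A.zip A.tail ↔ ∃ b : ℕ, ∃ h : b + 1 < A.length,
      a = (A[b]'(by omega), A[b+1]'h) := by
  rw [List.mem_iff_getElem]
  constructor
  · rintro ⟨i, hi, rfl⟩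
    have hlen : (A.zip A.tail).length = min A.length A.tail.length := List.length_zip
    have htl : A.tail.length = A.length - 1 := List.length_tail
    have hi1 : i + 1 < A.length := by omega
    refine ⟨i, hi1, ?_⟩
    rw [List.getElem_zip, List.getElem_tail]
  · rintro ⟨b, hb, rfl⟩
    have hlen : (A.zip A.tail).length = min A.length A.tail.length := List.length_zip
    have htl : A.tail.length = A.length - 1 := List.length_tail
    refine ⟨b, by omega, ?_⟩
    rw [List.getElem_zip, List.getElem_tail]

lemma cycle_of_seq (G : V → V → Prop) (c : ℕ → V) (i j : ℕ) (hij : i < j)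
    (hcj : c j = c i)
    (hinj : ∀ a b, i ≤ a → a < b → b < j → c a ≠ c b)
    (harc : ∀ m, i ≤ m → m < j → G (c (m+1)) (c m)) :
    ∃ l : List V, IsCycle G l ∧ (∀ v, v ∈ l ↔ ∃ m, i ≤ m ∧ m < j ∧ v = c m) ∧
      (∀ a ∈ CycArcs l, ∃ m, i ≤ m ∧ m < j ∧ a = (c (m+1), c m)) := by
  set k := j - i with hk
  have hk1 : 1 ≤ k := by omega
  set φ : ℕ → V := fun b => c (i + (k - 1 - b)) with hφ
  set l : List V := (List.range k).map φ with hl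
  have hlen : l.length = k := by simp [hl]
  have hne : l ≠ [] := by
    intro h; rw [h] at hlen; simp at hlen; omega
  have hnd : l.Nodup := by
    refine List.Nodup.map_on ?_ List.nodup_range
    intro b hb b' hb' heq
    simp only [List.mem_range] at hb hb'
    by_contra hne'
    rcases Nat.lt_or_ge b b' with h | h
    · exact hinj (i + (k-1-b')) (i + (k-1-b)) (by omega) (by omega) (by omega) heq.symm
    · have h2 : b' < b := by omega
      exact hinj (i + (k-1-b)) (i + (k-1-b')) (by omega) (by omega) (by omega) heq
  have hlen' : (l ++ l.take 1).length = k + 1 := by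
    rw [List.length_append, List.length_take, hlen]; omega
  have hgetl : ∀ (b : ℕ) (hb : b < k), l[b]'(by omega) = c (i + (k - 1 - b)) := by
    intro b hb
    simp [hl, hφ]
  have hget : ∀ (b : ℕ) (hb : b < k), (l ++ l.take 1)[b]'(by omega) = c (i + (k - 1 - b)) := by
    intro b hb
    rw [List.getElem_append_left (by omega)]
    exact hgetl b hb
  have hgetk : (l ++ l.take 1)[k]'(by omega) = c (i + (k - 1)) := by
    rw [List.getElem_append_right (by omega)]
    have : (l.take 1)[k - l.length]'(by rw [List.length_take, hlen]; omega) = l[k - l.length]'(by omega) :=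
      List.getElem_take
    rw [this]
    have h0 : k - l.length = 0 := by omega
    simp only [h0]
    have := hgetl 0 (by omega)
    simpa using this
  have harcchar : ∀ a ∈ CycArcs l, ∃ m, i ≤ m ∧ m < j ∧ a = (c (m+1), c m) := by
    intro a ha
    rw [CycArcs, mem_zip_tail_iff] at ha
    obtain ⟨b, hb, rfl⟩ := ha
    rw [hlen'] at hb
    by_cases hbk : b + 1 < k
    · refine ⟨i + (k - 2 - b), by omega, by omega, ?_⟩
      rw [hget b (by omega), hget (b+1) (by omega)]
      have e1 : i + (k-1-b) = (i + (k - 2 - b)) + 1 := by omega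
      have e2 : i + (k-1-(b+1)) = i + (k - 2 - b) := by omega
      rw [e1, e2]
    · have hbeq : b = k - 1 := by omega
      have hb1 : b + 1 = k := by omega
      refine ⟨j - 1, by omega, by omega, ?_⟩
      have e1 : (l ++ l.take 1)[b]'(by omega) = c i := by
        rw [hget b (by omega)]
        congr 1; omega
      have e2 : (l ++ l.take 1)[b+1]'(by omega) = c (j - 1) := by
        have : (l ++ l.take 1)[b+1]'(by omega) = (l ++ l.take 1)[k]'(by omega) := by
          congr 1
        rw [this, hgetk]
        congr 1; omega
      rw [e1, e2]
      have : c (j - 1 + 1) = c i := by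
        have : j - 1 + 1 = j := by omega
        rw [this, hcj]
      rw [this]
  refine ⟨l, ⟨hne, hnd, ?_⟩, ?_, harcchar⟩
  · intro a ha
    obtain ⟨m, h1, h2, rfl⟩ := harcchar a ha
    exact harc m h1 h2
  · intro v
    simp only [hl, List.mem_map, List.mem_range]
    constructor
    · rintro ⟨b, hb, rfl⟩
      exact ⟨i + (k-1-b), by omega, by omega, rfl⟩
    · rintro ⟨m, him, hmj, rfl⟩
      refine ⟨k - 1 - (m - i), by omega, ?_⟩
      show c (i + (k - 1 - (k - 1 - (m - i)))) = c m
      congr 1; omega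

end MyAux2

section MyAux3
variable {V : Type*} [DecidableEq V]

lemma posArc_iff_forall {f : (V → Bool) → V → Bool} {u v : V} :
    PosArc f u v ↔ ∀ x, f (Function.update x u false) v ≤ f (Function.update x u true) v := by
  constructor
  · intro h x
    have h0 : (Function.update x u false) u = false := by simp
    have := h _ h0
    rwa [Function.update_idem] at this
  · intro h x hx
    have : Function.update x u false = x := by
      funext w
      by_cases hw : w = u
      · subst hw; simp [hx]
      · simp [Function.update, hw]
    conv_lhs => rw [← this]
    exact h x

lemma negArc_iff_forall {f : (V → Bool) → V → Bool} {u v : V} :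
    NegArc f u v ↔ ∀ x, f (Function.update x u true) v ≤ f (Function.update x u false) v := by
  constructor
  · intro h x
    have h0 : (Function.update x u false) u = false := by simp
    have := h _ h0
    rwa [Function.update_idem] at this
  · intro h x hx
    have : Function.update x u false = x := by
      funext w
      by_cases hw : w = u
      · subst hw; simp [hx]
      · simp [Function.update, hw]
    conv_lhs => rw [← this]
    conv_rhs => rw [← this]
    rw [Function.update_idem]
    exact h x

lemma not_depends_update {f : (V → Bool) → V → Bool} {u v : V}
    (h : ¬ Depends f u v) (x : V → Bool) (b : Bool) :
    f (Function.update x u b) v = f x v := by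
  by_contra hne
  exact h ⟨_, x, fun w hw => Function.update_of_ne hw _ _, hne⟩

lemma not_posArc_and_negArc {f : (V → Bool) → V → Bool} {u v : V}
    (h : Depends f u v) : ¬ (PosArc f u v ∧ NegArc f u v) := by
  rintro ⟨hp, hn⟩
  obtain ⟨x, y, hxy, hne⟩ := h
  apply hne
  have key : ∀ z, f (Function.update z u true) v = f (Function.update z u false) v :=
    fun z => le_antisymm (negArc_iff_forall.mp hn z) (posArc_iff_forall.mp hp z)
  have hxx : x = Function.update x u (x u) := by
    funext w
    by_cases hw : w = u
    · subst hw; simp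
    · simp [Function.update, hw]
  have hyx : y = Function.update x u (y u) := by
    funext w
    by_cases hw : w = u
    · subst hw; simp
    · rw [Function.update_of_ne hw]; exact (hxy w hw).symm
  conv_lhs => rw [hxx]
  conv_rhs => rw [hyx]
  cases hxu : x u <;> cases hyu : y u
  · rfl
  · exact (key x).symm
  · exact key x
  · rfl

lemma bool_le_of_ne {a b : Bool} (h : a ≤ b) (hne : a ≠ b) : a = false ∧ b = true := by
  cases a <;> cases b <;> first | (exact ⟨rfl, rfl⟩) | (exact absurd rfl hne) | (exact absurd h (by decide))

variable [Fintype V]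

lemma mono_eval (f : (V → Bool) → V → Bool) (v : V) :
    ∀ (d : ℕ) (x y : V → Bool),
    (Finset.univ.filter (fun u => x u ≠ y u)).card ≤ d →
    (∀ u, Depends f u v → PosArc f u v ∧ x u ≤ y u) → f x v ≤ f y v := by
  intro d
  induction d with
  | zero =>
    intro x y hcard _
    have hfe : Finset.univ.filter (fun u => x u ≠ y u) = ∅ :=
      Finset.card_eq_zero.mp (Nat.le_zero.mp hcard)
    have : x = y := by
      funext u
      by_contra hu
      have : u ∈ Finset.univ.filter (fun u => x u ≠ y u) := by
        simp [hu]
      rw [hfe] at this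
      exact absurd this (Finset.notMem_empty u)
    rw [this]
  | succ d ih =>
    intro x y hcard H
    by_cases hxy : x = y
    · rw [hxy]
    · obtain ⟨u₀, hu₀⟩ := Function.ne_iff.mp hxy
      set x' := Function.update x u₀ (y u₀) with hx'
      have hstep : f x v ≤ f x' v := by
        by_cases hdep : Depends f u₀ v
        · obtain ⟨hPos, hle⟩ := H u₀ hdep
          obtain ⟨hx0, hy1⟩ := bool_le_of_ne hle hu₀
          rw [hx', hy1]
          exact hPos x hx0
        · rw [not_depends_update hdep]
      have hsub : Finset.univ.filter (fun u => x' u ≠ y u) ⊆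
          (Finset.univ.filter (fun u => x u ≠ y u)).erase u₀ := by
        intro w hw
        simp only [Finset.mem_filter, Finset.mem_univ, true_and] at hw
        have hwne : w ≠ u₀ := by
          intro h; subst h; rw [hx'] at hw; simp at hw
        refine Finset.mem_erase.mpr ⟨hwne, ?_⟩
        simp only [Finset.mem_filter, Finset.mem_univ, true_and]
        rwa [hx', Function.update_of_ne hwne] at hw
      have hmem : u₀ ∈ Finset.univ.filter (fun u => x u ≠ y u) := by simp [hu₀]
      have hcard' : (Finset.univ.filter (fun u => x' u ≠ y u)).card ≤ d := by
        have h1 := Finset.card_le_card hsub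
        have h2 := Finset.card_erase_of_mem hmem
        have h3 : 1 ≤ (Finset.univ.filter (fun u => x u ≠ y u)).card :=
          Finset.card_pos.mpr ⟨u₀, hmem⟩
        omega
      refine le_trans hstep (ih x' y hcard' ?_)
      intro u hdep
      refine ⟨(H u hdep).1, ?_⟩
      by_cases hu : u = u₀
      · subst hu; rw [hx']; simp
      · rw [hx', Function.update_of_ne hu]; exact (H u hdep).2

lemma exists_dep (f : (V → Bool) → V → Bool) (v : V) :
    ∀ (d : ℕ) (x y : V → Bool),
    (Finset.univ.filter (fun u => x u ≠ y u)).card ≤ d →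
    x ≤ y → f x v = false → f y v = true →
    ∃ u, x u = false ∧ y u = true ∧ Depends f u v ∧ ¬ NegArc f u v := by
  intro d
  induction d with
  | zero =>
    intro x y hcard _ hfx hfy
    have hfe : Finset.univ.filter (fun u => x u ≠ y u) = ∅ :=
      Finset.card_eq_zero.mp (Nat.le_zero.mp hcard)
    exfalso
    have : x = y := by
      funext u
      by_contra hu
      have : u ∈ Finset.univ.filter (fun u => x u ≠ y u) := by simp [hu]
      rw [hfe] at this
      exact absurd this (Finset.notMem_empty u)
    rw [this, hfy] at hfx
    exact absurd hfx (by simp)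
  | succ d ih =>
    intro x y hcard hle hfx hfy
    have hxy : x ≠ y := by
      intro h; rw [h, hfy] at hfx; exact absurd hfx (by simp)
    obtain ⟨u₀, hu₀⟩ := Function.ne_iff.mp hxy
    obtain ⟨hx0, hy1⟩ := bool_le_of_ne (hle u₀) hu₀
    set x' := Function.update x u₀ true with hx'
    by_cases hval : f x' v = true
    · refine ⟨u₀, hx0, hy1, ?_, ?_⟩
      · exact ⟨x, x', fun w hw => (Function.update_of_ne hw _ _).symm, by rw [hfx, hval]; exact Bool.false_ne_true⟩
      · intro hneg
        have := hneg x hx0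
        rw [← hx'] at this
        rw [hval, hfx] at this
        exact absurd this (by simp)
    · have hfx' : f x' v = false := by
        cases h : f x' v
        · rfl
        · exact absurd h hval
      have hle' : x' ≤ y := by
        intro w
        by_cases hw : w = u₀
        · subst hw; rw [hx']; simp [hy1]
        · rw [hx', Function.update_of_ne hw]; exact hle w
      have hsub : Finset.univ.filter (fun u => x' u ≠ y u) ⊆
          (Finset.univ.filter (fun u => x u ≠ y u)).erase u₀ := by
        intro w hw
        simp only [Finset.mem_filter, Finset.mem_univ, true_and] at hw
        have hwne : w ≠ u₀ := by
          intro h; subst h; rw [hx'] at hw; simp [hy1] at hw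
        refine Finset.mem_erase.mpr ⟨hwne, ?_⟩
        simp only [Finset.mem_filter, Finset.mem_univ, true_and]
        rwa [hx', Function.update_of_ne hwne] at hw
      have hmem : u₀ ∈ Finset.univ.filter (fun u => x u ≠ y u) := by simp [hu₀]
      have hcard' : (Finset.univ.filter (fun u => x' u ≠ y u)).card ≤ d := by
        have h1 := Finset.card_le_card hsub
        have h2 := Finset.card_erase_of_mem hmem
        have h3 : 1 ≤ (Finset.univ.filter (fun u => x u ≠ y u)).card :=
          Finset.card_pos.mpr ⟨u₀, hmem⟩
        omega
      obtain ⟨u, h1, h2, h3, h4⟩ := ih x' y hcard' hle' hfx' hfy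
      have hune : u ≠ u₀ := by
        intro h; subst h; rw [hx'] at h1; simp at h1
      rw [hx', Function.update_of_ne hune] at h1
      exact ⟨u, h1, h2, h3, h4⟩

set_option linter.unusedSectionVars false

section Switch
variable (cI : V → Bool)

def sw (x : V → Bool) : V → Bool := fun v => xor (x v) (cI v)

lemma sw_invol (x : V → Bool) : sw cI (sw cI x) = x := by
  funext w; simp [sw]

lemma sw_update (x : V → Bool) (u : V) (b : Bool) :
    sw cI (Function.update x u b) = Function.update (sw cI x) u (xor b (cI u)) := by
  funext w
  by_cases hw : w = u
  · subst hw; simp [sw]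
  · simp [sw, Function.update_of_ne hw]

lemma bool_not_le_not {a b : Bool} : (!a) ≤ (!b) ↔ b ≤ a := by
  cases a <;> cases b <;> decide

variable {f : (V → Bool) → V → Bool} {u v : V}

lemma depends_sw : Depends (fun x => sw cI (f (sw cI x))) u v ↔ Depends f u v := by
  constructor
  · rintro ⟨x, y, hxy, hne⟩
    refine ⟨sw cI x, sw cI y, fun w hw => by simp [sw, hxy w hw], ?_⟩
    simp only [sw] at hne ⊢
    intro h
    apply hne
    rw [h]
  · rintro ⟨x, y, hxy, hne⟩
    refine ⟨sw cI x, sw cI y, fun w hw => by simp [sw, hxy w hw], ?_⟩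
    simp only [sw, sw_invol]
    intro h
    apply hne
    cases hcv : cI v <;> simp [hcv] at h <;> exact h

lemma core_sw : (∀ x, sw cI (f (sw cI (Function.update x u false))) v ≤
      sw cI (f (sw cI (Function.update x u true))) v) ↔
    (∀ z, xor (f (Function.update z u (cI u)) v) (cI v) ≤
      xor (f (Function.update z u (!(cI u))) v) (cI v)) := by
  constructor
  · intro h z
    have := h (sw cI z)
    rw [sw_update, sw_update, sw_invol] at this
    simp only [sw, Bool.false_xor, Bool.true_xor] at this
    exact this
  · intro h x
    have := h (sw cI x)
    rw [sw_update, sw_update]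
    simp only [sw, Bool.false_xor, Bool.true_xor]
    exact this

lemma core_sw' : (∀ x, sw cI (f (sw cI (Function.update x u true))) v ≤
      sw cI (f (sw cI (Function.update x u false))) v) ↔
    (∀ z, xor (f (Function.update z u (!(cI u))) v) (cI v) ≤
      xor (f (Function.update z u (cI u)) v) (cI v)) := by
  constructor
  · intro h z
    have := h (sw cI z)
    rw [sw_update, sw_update, sw_invol] at this
    simp only [sw, Bool.false_xor, Bool.true_xor] at this
    exact this
  · intro h x
    have := h (sw cI x)
    rw [sw_update, sw_update]
    simp only [sw, Bool.false_xor, Bool.true_xor]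
    exact this

lemma posArc_sw :
    PosArc (fun x => sw cI (f (sw cI x))) u v ↔
      (if cI u = cI v then PosArc f u v else NegArc f u v) := by
  rw [posArc_iff_forall]
  rw [show (∀ x, (fun x => sw cI (f (sw cI x))) (Function.update x u false) v ≤
      (fun x => sw cI (f (sw cI x))) (Function.update x u true) v) ↔ _ from core_sw cI]
  rw [posArc_iff_forall, negArc_iff_forall]
  cases hcu : cI u <;> cases hcv : cI v
  · rw [if_pos rfl]
    simp only [Bool.xor_false, Bool.not_false]
  · rw [if_neg (by decide)]
    simp only [Bool.xor_true, Bool.not_false]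
    exact forall_congr' fun z => bool_not_le_not
  · rw [if_neg (by decide)]
    simp only [Bool.xor_false, Bool.not_true]
  · rw [if_pos rfl]
    simp only [Bool.xor_true, Bool.not_true]
    exact forall_congr' fun z => bool_not_le_not

lemma negArc_sw :
    NegArc (fun x => sw cI (f (sw cI x))) u v ↔
      (if cI u = cI v then NegArc f u v else PosArc f u v) := by
  rw [negArc_iff_forall]
  rw [show (∀ x, (fun x => sw cI (f (sw cI x))) (Function.update x u true) v ≤
      (fun x => sw cI (f (sw cI x))) (Function.update x u false) v) ↔ _ from core_sw' cI]
  rw [posArc_iff_forall, negArc_iff_forall]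
  cases hcu : cI u <;> cases hcv : cI v
  · rw [if_pos rfl]
    simp only [Bool.xor_false, Bool.not_false]
  · rw [if_neg (by decide)]
    simp only [Bool.xor_true, Bool.not_false]
    exact forall_congr' fun z => bool_not_le_not
  · rw [if_neg (by decide)]
    simp only [Bool.xor_false, Bool.not_true]
  · rw [if_pos rfl]
    simp only [Bool.xor_true, Bool.not_true]
    exact forall_congr' fun z => bool_not_le_not

lemma arcSign_sw (hdep : Depends f u v) :
    arcSign (fun x => sw cI (f (sw cI x))) u v =
      (if cI u = cI v then arcSign f u v else - arcSign f u v) := by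
  have hex := not_posArc_and_negArc hdep
  by_cases hc : cI u = cI v
  · rw [if_pos hc]
    unfold arcSign
    rw [show PosArc (fun x => sw cI (f (sw cI x))) u v ↔ PosArc f u v by
      rw [posArc_sw, if_pos hc]]
    rw [show NegArc (fun x => sw cI (f (sw cI x))) u v ↔ NegArc f u v by
      rw [negArc_sw, if_pos hc]]
  · rw [if_neg hc]
    unfold arcSign
    rw [show PosArc (fun x => sw cI (f (sw cI x))) u v ↔ NegArc f u v by
      rw [posArc_sw, if_neg hc]]
    rw [show NegArc (fun x => sw cI (f (sw cI x))) u v ↔ PosArc f u v by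
      rw [negArc_sw, if_neg hc]]
    by_cases hp : PosArc f u v
    · have hn : ¬ NegArc f u v := fun hn => hex ⟨hp, hn⟩
      rw [if_neg hn, if_pos hp, if_pos hp]
    · rw [if_neg hp, if_neg hp]
      by_cases hn : NegArc f u v
      · rw [if_pos hn, if_pos hn]
        decide
      · rw [if_neg hn, if_neg hn]
        decide

end Switch

end MyAux3

lemma choose_step {t r : ℕ} (h : 2 * r + 1 ≤ t) : t.choose r ≤ t.choose (r + 1) := by
  have key : t.choose (r+1) * (r+1) = t.choose r * (t - r) := Nat.choose_succ_right_eq t r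
  have h1 : t.choose r * (r + 1) ≤ t.choose r * (t - r) := by
    apply Nat.mul_le_mul_left
    omega
  rw [← key] at h1
  exact Nat.le_of_mul_le_mul_right h1 (by omega)

lemma choose_mono_up {t : ℕ} : ∀ {m r : ℕ}, r ≤ m → 2 * m ≤ t → t.choose r ≤ t.choose m := by
  intro m
  induction m with
  | zero =>
    intro r h1 _
    have : r = 0 := by omega
    rw [this]
  | succ m ih =>
    intro r h1 h2
    rcases Nat.lt_or_ge r (m+1) with h | h
    · have : r ≤ m := by omega
      exact le_trans (ih this (by omega)) (choose_step (by omega))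
    · have : r = m + 1 := by omega
      rw [this]

lemma choose_out {t k r : ℕ} (hk : k ≤ t) (hr : r ≤ t)
    (h : r ∉ Icc ((t-k)/2) ((t+k)/2)) : t.choose r ≤ t.choose ((t-k)/2) := by
  rw [mem_Icc] at h
  push_neg at h
  rcases Nat.lt_or_ge r ((t-k)/2) with h1 | h1
  · exact choose_mono_up (le_of_lt h1) (by omega)
  · have h2 : (t+k)/2 < r := h h1
    rw [← Nat.choose_symm hr]
    exact choose_mono_up (by omega) (by omega)

lemma choose_in {t k r : ℕ} (hk : k ≤ t) (h : r ∈ Icc ((t-k)/2) ((t+k)/2)) :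
    t.choose ((t-k)/2) ≤ t.choose r := by
  rw [mem_Icc] at h
  rcases le_or_gt (2 * r) t with h1 | h1
  · exact choose_mono_up h.1 h1
  · have hr : r ≤ t := by omega
    rw [← Nat.choose_symm hr]
    exact choose_mono_up (by omega) (by omega)

/-- The optimization step: if level counts `a r ≤ C(t,r)` satisfy the LYM-type bound
`∑ a r / C(t,r) ≤ k+1`, then `∑ a r` is at most the sum of the `k+1` middle binomials. -/
lemma lym_opt {t k : ℕ} (hk : k ≤ t) (a : ℕ → ℕ)
    (ha : ∀ r ∈ range (t+1), a r ≤ t.choose r)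
    (hlym : ∑ r ∈ range (t+1), (a r : ℚ) / (t.choose r) ≤ (k : ℚ) + 1) :
    ∑ r ∈ range (t+1), a r ≤ ∑ r ∈ Icc ((t-k)/2) ((t+k)/2), t.choose r := by
  set lo := (t-k)/2 with hlo
  set hi := (t+k)/2 with hhi
  set S : Finset ℕ := Icc lo hi with hS
  have hSsub : S ⊆ range (t+1) := by
    intro r hr
    rw [hS, mem_Icc] at hr
    rw [mem_range]
    omega
  have hcardS : S.card = k + 1 := by
    rw [hS, Nat.card_Icc]
    omega
  have hpos : ∀ r ∈ range (t+1), (0:ℚ) < (t.choose r : ℚ) := by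
    intro r hr
    rw [mem_range] at hr
    exact_mod_cast Nat.choose_pos (by omega)
  set M : ℚ := (t.choose lo : ℚ) with hM
  have hMpos : 0 < M := by
    rw [hM]
    exact_mod_cast Nat.choose_pos (by omega)
  -- Step 1 : sum over complement
  have key : ∑ r ∈ range (t+1) \ S, (a r : ℚ) ≤ ∑ r ∈ S, ((t.choose r : ℚ) - a r) := by
    have c1 : ∑ r ∈ range (t+1) \ S, (a r : ℚ) ≤
        ∑ r ∈ range (t+1) \ S, M * ((a r : ℚ) / (t.choose r)) := by
      apply Finset.sum_le_sum
      intro r hr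
      rw [mem_sdiff] at hr
      have hcp := hpos r hr.1
      have hout : (t.choose r : ℚ) ≤ M := by
        rw [hM]
        exact_mod_cast choose_out hk (by have := mem_range.mp hr.1; omega) hr.2
      have hanneg : (0:ℚ) ≤ (a r : ℚ) / (t.choose r) := by positivity
      calc (a r : ℚ) = (t.choose r : ℚ) * ((a r : ℚ) / (t.choose r)) := by
            field_simp
        _ ≤ M * ((a r : ℚ) / (t.choose r)) := mul_le_mul_of_nonneg_right hout hanneg
    have c2 : ∑ r ∈ range (t+1) \ S, M * ((a r : ℚ) / (t.choose r)) ≤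
        ∑ r ∈ S, M * (1 - (a r : ℚ) / (t.choose r)) := by
      rw [← Finset.mul_sum, ← Finset.mul_sum]
      apply mul_le_mul_of_nonneg_left _ (le_of_lt hMpos)
      have hsplit : ∑ r ∈ range (t+1), (a r : ℚ) / (t.choose r) =
          ∑ r ∈ S, (a r : ℚ) / (t.choose r) + ∑ r ∈ range (t+1) \ S, (a r : ℚ) / (t.choose r) := by
        rw [← Finset.sum_sdiff hSsub]
        ring
      have hone : ∑ r ∈ S, (1 - (a r : ℚ) / (t.choose r)) =
          (k+1 : ℚ) - ∑ r ∈ S, (a r : ℚ) / (t.choose r) := by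
        rw [Finset.sum_sub_distrib]
        simp [hcardS]
      rw [hone]
      have := hlym
      rw [hsplit] at this
      linarith
    have c3 : ∑ r ∈ S, M * (1 - (a r : ℚ) / (t.choose r)) ≤
        ∑ r ∈ S, ((t.choose r : ℚ) - a r) := by
      apply Finset.sum_le_sum
      intro r hr
      have hcp := hpos r (hSsub hr)
      have hin : M ≤ (t.choose r : ℚ) := by
        rw [hM]
        exact_mod_cast choose_in hk hr
      have hale : (a r : ℚ) ≤ (t.choose r : ℚ) := by
        exact_mod_cast ha r (hSsub hr)
      have hfrac : 0 ≤ 1 - (a r : ℚ) / (t.choose r) := by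
        rw [sub_nonneg, div_le_one hcp]
        exact hale
      calc M * (1 - (a r : ℚ) / (t.choose r))
          ≤ (t.choose r : ℚ) * (1 - (a r : ℚ) / (t.choose r)) :=
            mul_le_mul_of_nonneg_right hin hfrac
        _ = (t.choose r : ℚ) - a r := by field_simp
    exact le_trans c1 (le_trans c2 c3)
  -- Step 2 : conclude
  have main : (∑ r ∈ range (t+1), (a r : ℚ)) ≤ ∑ r ∈ S, (t.choose r : ℚ) := by
    have hsplit : ∑ r ∈ range (t+1), (a r : ℚ) =
        ∑ r ∈ S, (a r : ℚ) + ∑ r ∈ range (t+1) \ S, (a r : ℚ) := by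
      rw [← Finset.sum_sdiff hSsub]
      ring
    rw [hsplit]
    have := Finset.sum_sub_distrib (f := fun r => (t.choose r : ℚ)) (g := fun r => (a r : ℚ)) (s := S)
    linarith [key]
  have := main
  push_cast at this
  exact_mod_cast this

section Height
variable {α : Type*} [DecidableEq α]

noncomputable def hgt (F : Finset (Finset α)) (s : Finset α) : ℕ :=
  ((F.filter (fun u => u ⊂ s)).attach).sup
    (fun u => hgt F u.1 + 1)
termination_by s.card
decreasing_by
  have := u.2
  rw [Finset.mem_filter] at this
  exact Finset.card_lt_card this.2

lemma hgt_lt {F : Finset (Finset α)} {u s : Finset α} (hu : u ∈ F) (hus : u ⊂ s) :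
    hgt F u < hgt F s := by
  conv_rhs => rw [hgt]
  have hmem : u ∈ F.filter (fun u => u ⊂ s) := Finset.mem_filter.mpr ⟨hu, hus⟩
  have := Finset.le_sup (f := fun w : {w // w ∈ F.filter (fun u => u ⊂ s)} => hgt F w.1 + 1)
    (Finset.mem_attach _ ⟨u, hmem⟩)
  exact Nat.lt_of_lt_of_le (Nat.lt_succ_self _) this

lemma hgt_chain_aux (F : Finset (Finset α)) :
    ∀ n (s : Finset α), hgt F s = n → ∃ c : ℕ → Finset α, c n = s ∧ (∀ i < n, c i ∈ F) ∧
      ∀ i < n, c i ⊂ c (i+1) := by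
  intro n
  induction n using Nat.strong_induction_on with
  | _ n ih =>
  intro s hs
  rcases Nat.eq_zero_or_pos n with h0 | hpos
  · subst h0
    exact ⟨fun _ => s, rfl, by omega, by omega⟩
  · obtain ⟨m, rfl⟩ : ∃ m, n = m + 1 := ⟨n - 1, by omega⟩
    have hne : (F.filter (fun u => u ⊂ s)).attach.Nonempty := by
      by_contra hemp
      rw [Finset.not_nonempty_iff_eq_empty] at hemp
      rw [hgt, hemp] at hs
      simp at hs
    obtain ⟨u, _, hu⟩ := Finset.exists_mem_eq_sup _ hne
      (fun u : {w // w ∈ F.filter (fun u => u ⊂ s)} => hgt F u.1 + 1)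
    rw [hgt] at hs
    rw [hs] at hu
    have huF : u.1 ∈ F := (Finset.mem_filter.mp u.2).1
    have hus : u.1 ⊂ s := (Finset.mem_filter.mp u.2).2
    have hun : hgt F u.1 = m := by omega
    obtain ⟨c, hc1, hc2, hc3⟩ := ih m (by omega) u.1 hun
    refine ⟨fun i => if i = m + 1 then s else c i, by simp, ?_, ?_⟩
    · intro i hi
      have : i ≠ m + 1 := by omega
      show (if i = m + 1 then s else c i) ∈ F
      rw [if_neg this]
      rcases Nat.lt_or_ge i m with h | h
      · exact hc2 i h
      · have : i = m := by omega
        subst this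
        rw [hc1]
        exact huF
    · intro i hi
      have h1 : i ≠ m + 1 := by omega
      show (if i = m + 1 then s else c i) ⊂ (if i + 1 = m + 1 then s else c (i+1))
      rw [if_neg h1]
      rcases Nat.lt_or_ge i m with h | h
      · rw [if_neg (by omega : ¬ (i + 1 = m + 1))]
        exact hc3 i h
      · have : i = m := by omega
        subst this
        rw [if_pos rfl, hc1]
        exact hus

lemma hgt_chain (F : Finset (Finset α)) (s : Finset α) :
    ∃ c : ℕ → Finset α, c (hgt F s) = s ∧ (∀ i < hgt F s, c i ∈ F) ∧
      ∀ i < hgt F s, c i ⊂ c (i+1) :=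
  hgt_chain_aux F (hgt F s) s rfl

end Height

lemma erdos_bound {α : Type*} [Fintype α] [DecidableEq α] (F : Finset (Finset α)) (k : ℕ)
    (hh : ∀ s ∈ F, hgt F s ≤ k) :
    F.card ≤ ∑ r ∈ Icc ((Fintype.card α - k)/2) ((Fintype.card α + k)/2),
      (Fintype.card α).choose r := by
  set t := Fintype.card α with ht
  rcases le_or_gt k t with hk | hk
  · -- main case
    set a : ℕ → ℕ := fun r => (F.filter (fun s => s.card = r)).card with haa
    have hcards : ∀ s ∈ F, s.card ∈ range (t+1) := by
      intro s _
      rw [mem_range]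
      have := Finset.card_le_univ s
      omega
    have hFcard : F.card = ∑ r ∈ range (t+1), a r :=
      Finset.card_eq_sum_card_fiberwise hcards
    have ha : ∀ r ∈ range (t+1), a r ≤ t.choose r := by
      intro r _
      have hsub : F.filter (fun s => s.card = r) ⊆ Finset.powersetCard r Finset.univ := by
        intro s hs
        rw [Finset.mem_filter] at hs
        rw [Finset.mem_powersetCard]
        exact ⟨Finset.subset_univ s, hs.2⟩
      have := Finset.card_le_card hsub
      rwa [Finset.card_powersetCard, Finset.card_univ] at this
    have hlym : ∑ r ∈ range (t+1), (a r : ℚ) / (t.choose r) ≤ (k : ℚ) + 1 := by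
      set A : ℕ → Finset (Finset α) := fun j => F.filter (fun s => hgt F s = j) with hA
      have hanti : ∀ j, IsAntichain (· ⊆ ·) ((A j : Finset (Finset α)) : Set (Finset α)) := by
        intro j x hx y hy hxy hsub
        simp only [hA, Finset.coe_filter, Set.mem_setOf_eq] at hx hy
        have : x ⊂ y := ssubset_of_ne_of_subset hxy hsub
        have := hgt_lt hx.1 this
        omega
      have hsplit : ∀ r, a r = ∑ j ∈ range (k+1), ((A j).filter (fun s => s.card = r)).card := by
        intro r
        have : ∀ s ∈ F.filter (fun s => s.card = r), hgt F s ∈ range (k+1) := by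
          intro s hs
          rw [mem_range]
          have := hh s (Finset.mem_filter.mp hs).1
          omega
        show (F.filter (fun s => s.card = r)).card = _
        rw [Finset.card_eq_sum_card_fiberwise this]
        apply Finset.sum_congr rfl
        intro j _
        congr 1
        ext s
        simp only [Finset.mem_filter, hA]
        tauto
      calc ∑ r ∈ range (t+1), (a r : ℚ) / (t.choose r)
          = ∑ r ∈ range (t+1), ∑ j ∈ range (k+1),
              (((A j).filter (fun s => s.card = r)).card : ℚ) / (t.choose r) := by
            apply Finset.sum_congr rfl
            intro r _
            rw [hsplit r]
            push_cast
            rw [Finset.sum_div]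
        _ = ∑ j ∈ range (k+1), ∑ r ∈ range (t+1),
              (((A j).filter (fun s => s.card = r)).card : ℚ) / (t.choose r) :=
            Finset.sum_comm
        _ ≤ ∑ j ∈ range (k+1), (1:ℚ) := by
            apply Finset.sum_le_sum
            intro j _
            have := Finset.sum_card_slice_div_choose_le_one (𝕜 := ℚ) (hanti j)
            rw [← ht] at this
            exact this
        _ = (k : ℚ) + 1 := by simp
    rw [hFcard]
    exact lym_opt hk a ha hlym
  · -- degenerate case k > t
    have h1 : F.card ≤ 2 ^ t := by
      have hsub : F ⊆ Finset.univ.powerset := fun s _ => Finset.mem_powerset.mpr (Finset.subset_univ s)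
      have := Finset.card_le_card hsub
      rwa [Finset.card_powerset, Finset.card_univ] at this
    have h2 : (2:ℕ) ^ t = ∑ r ∈ Icc 0 t, t.choose r := by
      rw [show Icc 0 t = range (t+1) by ext x; simp [Nat.lt_succ_iff]]
      exact (Nat.sum_range_choose t).symm
    have h3 : Icc 0 t ⊆ Icc ((t-k)/2) ((t+k)/2) := by
      intro r hr
      rw [mem_Icc] at hr ⊢
      omega
    have h4 : ∑ r ∈ Icc 0 t, t.choose r ≤ ∑ r ∈ Icc ((t-k)/2) ((t+k)/2), t.choose r :=
      Finset.sum_le_sum_of_subset h3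
    omega

end MyAux


section Helpers
open Finset
variable {V : Type*} [DecidableEq V] [Fintype V]

lemma list_prod_nonneg : ∀ L : List ℤ, (∀ x ∈ L, 0 ≤ x) → 0 ≤ L.prod
  | [], _ => by simp
  | a :: L, h => by
      rw [List.prod_cons]
      exact mul_nonneg (h a (by simp)) (list_prod_nonneg L fun x hx => h x (by simp [hx]))

lemma list_prod_sq_one : ∀ L : List ℤ, (∀ x ∈ L, x * x = 1) → L.prod * L.prod = 1
  | [], _ => by simp
  | a :: L, h => by
      rw [List.prod_cons]
      have h1 := h a (by simp)
      have h2 := list_prod_sq_one L fun x hx => h x (by simp [hx])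
      calc a * L.prod * (a * L.prod) = (a * a) * (L.prod * L.prod) := by ring
        _ = 1 := by rw [h1, h2, one_mul]

lemma length_le_sum_lengths : ∀ L : List (List V), (∀ l ∈ L, l ≠ []) → L.length ≤ (L.map List.length).sum
  | [], _ => by simp
  | a :: L, h => by
      rw [List.map_cons, List.sum_cons, List.length_cons]
      have h1 : 1 ≤ a.length := List.length_pos_iff.mpr (h a (by simp))
      have h2 := length_le_sum_lengths L fun l hl => h l (by simp [hl])
      omega

lemma packing_length_le {G : V → V → Prop} {P : List (List V)} (hP : IsPacking G P) :
    P.length ≤ Fintype.card V := by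
  obtain ⟨hcyc, hdisj⟩ := hP
  have hne : ∀ l ∈ P, l ≠ [] := fun l hl => (hcyc l hl).1
  have hjoin : P.flatten.Nodup := by
    rw [List.nodup_flatten]
    exact ⟨fun l hl => (hcyc l hl).2.1, hdisj⟩
  have h1 : P.flatten.length ≤ Fintype.card V := List.Nodup.length_le_card hjoin
  have h2 : P.flatten.length = (P.map List.length).sum := List.length_flatten
  have h3 := length_le_sum_lengths P hne
  omega

lemma le_nuPlus {G : V → V → Prop} {σ : V → V → ℤ} {P : List (List V)}
    (hP : IsPacking G P) (hsgn : ∀ C ∈ P, 0 ≤ CycleSign σ C) :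
    P.length ≤ nuPlus G σ := by
  have hbdd : BddAbove {k | ∃ P : List (List V),
      IsPacking G P ∧ (∀ C ∈ P, 0 ≤ CycleSign σ C) ∧ P.length = k} := by
    refine ⟨Fintype.card V, ?_⟩
    rintro k ⟨Q, hQ, _, rfl⟩
    exact packing_length_le hQ
  exact le_csSup hbdd ⟨P, hP, hsgn, rfl⟩

lemma fvs_wf {G : V → V → Prop} {J : Finset V}
    (hJ : IsFVS G J) : WellFounded (fun u v => G u v ∧ v ∉ J) := by
  set r : V → V → Prop := fun u v => G u v ∧ v ∉ J with hr
  by_contra hwf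
  have hex : ∃ v, ¬ Acc r v := by
    by_contra h
    push_neg at h
    exact hwf ⟨h⟩
  obtain ⟨v₀, hv₀⟩ := hex
  have hstep : ∀ v, ¬ Acc r v → ∃ u, r u v ∧ ¬ Acc r u := by
    intro v hv
    by_contra h
    push_neg at h
    exact hv (Acc.intro v fun u hu => h u hu)
  let next : {v // ¬ Acc r v} → {v // ¬ Acc r v} := fun p =>
    ⟨Classical.choose (hstep p.1 p.2), (Classical.choose_spec (hstep p.1 p.2)).2⟩
  let cs : ℕ → {v // ¬ Acc r v} := fun m => next^[m] ⟨v₀, hv₀⟩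
  have hcs : ∀ m, r (cs (m+1)).1 (cs m).1 := by
    intro m
    have hstep' : cs (m+1) = next (cs m) := Function.iterate_succ_apply' next m _
    rw [hstep']
    exact (Classical.choose_spec (hstep (cs m).1 (cs m).2)).1
  obtain ⟨i, j, hne, heq⟩ := Fintype.exists_ne_map_eq_of_card_lt
    (fun i : Fin (Fintype.card V + 1) => (cs i.1).1) (by simp)
  have hT : ∃ b : ℕ, ∃ a, a < b ∧ (cs a).1 = (cs b).1 := by
    rcases Ne.lt_or_gt hne with h | h
    · exact ⟨j.1, i.1, h, heq⟩
    · exact ⟨i.1, j.1, h, heq.symm⟩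
  set b₀ := Nat.find hT with hb₀
  obtain ⟨a₀, ha₀, heq₀⟩ := Nat.find_spec hT
  have hinj : ∀ p q, a₀ ≤ p → p < q → q < b₀ → (cs p).1 ≠ (cs q).1 := by
    intro p q _ hpq hq hne'
    exact Nat.find_min hT hq ⟨p, hpq, hne'⟩
  obtain ⟨l, hcyc, hmem, _⟩ := cycle_of_seq G (fun m => (cs m).1) a₀ b₀ ha₀ heq₀.symm hinj
    (fun m _ _ => (hcs m).1)
  obtain ⟨v, hvl, hvJ⟩ := hJ l hcyc
  obtain ⟨m, _, _, rfl⟩ := (hmem v).mp hvl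
  exact (hcs m).2 hvJ


lemma fixed_mono {G : V → V → Prop} {J : Finset V} {g : (V → Bool) → V → Bool}
    (hGd : ∀ u v, Depends g u v → G u v)
    (hJ : IsFVS G J)
    (hpos : ∀ u v, G u v → v ∉ J → PosArc g u v)
    {x y : V → Bool} (hx : g x = x) (hy : g y = y)
    (hxyJ : ∀ v ∈ J, x v ≤ y v) : ∀ v, x v ≤ y v := by
  have hwf := fvs_wf hJ
  intro v
  refine hwf.induction (C := fun v => x v ≤ y v) v ?_
  intro v ih
  by_cases hvJ : v ∈ J
  · exact hxyJ v hvJ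
  · have h1 : x v = g x v := (congrFun hx v).symm
    have h2 : g y v = y v := congrFun hy v
    calc x v = g x v := h1
      _ ≤ g y v := by
          refine mono_eval g v ((Finset.univ.filter (fun u => x u ≠ y u)).card) x y le_rfl ?_
          intro u hdep
          have hGuv : G u v := hGd u v hdep
          refine ⟨hpos u v hGuv hvJ, ?_⟩
          by_cases huJ : u ∈ J
          · exact hxyJ u huJ
          · exact ih u ⟨hGuv, hvJ⟩
      _ = y v := h2

lemma cycle_between {G : V → V → Prop} {σ : V → V → ℤ} {g : (V → Bool) → V → Bool}
    (hGd : ∀ u v, Depends g u v ↔ G u v)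
    (ε : V → ℤ) (hε : ∀ w, ε w * ε w = 1)
    (hsig : ∀ u v, G u v → arcSign g u v = ε u * ε v * σ u v)
    {x y : V → Bool} (hx : g x = x) (hy : g y = y)
    (hle : x ≤ y) (hne : x ≠ y) :
    ∃ l, IsCycle G l ∧ (∀ v ∈ l, x v ≠ y v) ∧ 0 ≤ CycleSign σ l := by
  have hD : ∀ v, x v ≠ y v → ∃ u, (x u ≠ y u) ∧ Depends g u v ∧ ¬ NegArc g u v := by
    intro v hv
    obtain ⟨hx0, hy1⟩ := bool_le_of_ne (hle v) hv
    have hgx : g x v = false := by rw [hx]; exact hx0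
    have hgy : g y v = true := by rw [hy]; exact hy1
    obtain ⟨u, h1, h2, h3, h4⟩ := exists_dep g v
      ((Finset.univ.filter (fun u => x u ≠ y u)).card) x y le_rfl hle hgx hgy
    exact ⟨u, by rw [h1, h2]; simp, h3, h4⟩
  set ψ : V → V := fun v => if hv : x v ≠ y v then Classical.choose (hD v hv) else v with hψdef
  have hψ : ∀ v (hv : x v ≠ y v),
      (x (ψ v) ≠ y (ψ v)) ∧ Depends g (ψ v) v ∧ ¬ NegArc g (ψ v) v := by
    intro v hv
    have : ψ v = Classical.choose (hD v hv) := by rw [hψdef]; exact dif_pos hv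
    rw [this]
    exact Classical.choose_spec (hD v hv)
  obtain ⟨v₀, hv₀⟩ := Function.ne_iff.mp hne
  have horb : ∀ m, x (ψ^[m] v₀) ≠ y (ψ^[m] v₀) := by
    intro m
    induction m with
    | zero => exact hv₀
    | succ m ih =>
      rw [Function.iterate_succ_apply']
      exact (hψ _ ih).1
  obtain ⟨i, j, hne2, heq⟩ := Fintype.exists_ne_map_eq_of_card_lt
    (fun i : Fin (Fintype.card V + 1) => ψ^[i.1] v₀) (by simp)
  have hab : ∃ a b : ℕ, a < b ∧ ψ^[a] v₀ = ψ^[b] v₀ := by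
    rcases Ne.lt_or_gt hne2 with h | h
    · exact ⟨i.1, j.1, h, heq⟩
    · exact ⟨j.1, i.1, h, heq.symm⟩
  obtain ⟨a, b, hab, heqab⟩ := hab
  set w := ψ^[a] v₀ with hw
  have hTex : ∃ p, 0 < p ∧ ψ^[p] w = w := by
    refine ⟨b - a, by omega, ?_⟩
    rw [hw, ← Function.iterate_add_apply, show b - a + a = b by omega]
    exact heqab.symm
  set k := Nat.find hTex with hkdef
  obtain ⟨hk0, hkfix⟩ := Nat.find_spec hTex
  set c : ℕ → V := fun m => ψ^[m] w with hc
  have hallD : ∀ m, x (c m) ≠ y (c m) := by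
    intro m
    have : c m = ψ^[m + a] v₀ := by
      rw [hc, hw, Function.iterate_add_apply]
    rw [this]
    exact horb (m + a)
  have hinj : ∀ p q, 0 ≤ p → p < q → q < k → c p ≠ c q := by
    intro p q _ hpq hq heq'
    have h1 : ψ^[k - q] (ψ^[q] w) = w := by
      rw [← Function.iterate_add_apply, show k - q + q = k by omega]
      exact hkfix
    rw [show (ψ^[q] w) = c q from rfl, ← heq'] at h1
    have h2 : ψ^[k - q + p] w = w := by
      rw [Function.iterate_add_apply]
      exact h1
    exact Nat.find_min hTex (by omega) ⟨by omega, h2⟩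
  have harc : ∀ m, 0 ≤ m → m < k → G (c (m+1)) (c m) := by
    intro m _ _
    have hcm1 : c (m+1) = ψ (c m) := Function.iterate_succ_apply' ψ m w
    rw [hcm1]
    exact (hGd _ _).mp (hψ (c m) (hallD m)).2.1
  obtain ⟨l, hcyc, hmem, harcs⟩ := cycle_of_seq G c 0 k hk0
    (by show ψ^[k] w = ψ^[0] w; exact hkfix) hinj harc
  refine ⟨l, hcyc, ?_, ?_⟩
  · intro v hv
    obtain ⟨m, _, _, rfl⟩ := (hmem v).mp hv
    exact hallD m
  · have harc2 : ∀ p ∈ CycArcs l, G p.1 p.2 ∧ ¬ NegArc g p.1 p.2 := by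
      intro p hp
      obtain ⟨m, hm0, hmk, rfl⟩ := harcs p hp
      have hd := hψ (c m) (hallD m)
      have hcm1 : c (m+1) = ψ (c m) := Function.iterate_succ_apply' ψ m w
      constructor
      · show G (c (m+1)) (c m)
        rw [hcm1]
        exact (hGd _ _).mp hd.2.1
      · show ¬ NegArc g (c (m+1)) (c m)
        rw [hcm1]
        exact hd.2.2
    have hlne : l ≠ [] := hcyc.1
    have h1 : ∀ p ∈ CycArcs l, 0 ≤ arcSign g p.1 p.2 := by
      intro p hp
      have hng := (harc2 p hp).2
      unfold arcSign
      by_cases hpp : PosArc g p.1 p.2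
      · rw [if_pos hpp]; norm_num
      · rw [if_neg hpp, if_neg hng]
    have h6 : (0:ℤ) ≤ ((CycArcs l).map (fun p => arcSign g p.1 p.2)).prod := by
      refine list_prod_nonneg _ ?_
      intro z hz
      obtain ⟨p, hp, rfl⟩ := List.mem_map.mp hz
      exact h1 p hp
    have e1 : (CycArcs l).map (fun p => arcSign g p.1 p.2) =
        (CycArcs l).map (fun p => (ε p.1 * ε p.2) * σ p.1 p.2) :=
      List.map_congr_left (fun p hp => hsig p.1 p.2 (harc2 p hp).1)
    rw [e1] at h6
    have e2 : ((CycArcs l).map (fun p => (ε p.1 * ε p.2) * σ p.1 p.2)).prod =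
        ((CycArcs l).map (fun p => ε p.1 * ε p.2)).prod *
          ((CycArcs l).map (fun p => σ p.1 p.2)).prod := by
      rw [← List.prod_map_mul]
    have e3 : ((CycArcs l).map (fun p => ε p.1 * ε p.2)).prod =
        ((CycArcs l).map (fun p => ε p.1)).prod * ((CycArcs l).map (fun p => ε p.2)).prod := by
      rw [← List.prod_map_mul]
    have e4 := cycArcs_fst_prod ε hlne
    have e5 := cycArcs_snd_prod ε hlne
    have e6 : (l.map ε).prod * (l.map ε).prod = 1 := by
      refine list_prod_sq_one _ ?_
      intro z hz
      obtain ⟨v, hv, rfl⟩ := List.mem_map.mp hz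
      exact hε v
    rw [e2, e3, e4, e5, e6, one_mul] at h6
    exact h6

lemma chain_packing {G : V → V → Prop} {σ : V → V → ℤ} {g : (V → Bool) → V → Bool}
    (hGd : ∀ u v, Depends g u v ↔ G u v)
    (ε : V → ℤ) (hε : ∀ w, ε w * ε w = 1)
    (hsig : ∀ u v, G u v → arcSign g u v = ε u * ε v * σ u v) :
    ∀ (m : ℕ) (X : ℕ → V → Bool), (∀ i, i ≤ m → g (X i) = X i) →
      (∀ i < m, X i ≤ X (i+1)) → (∀ i < m, X i ≠ X (i+1)) →
    ∃ P, IsPacking G P ∧ (∀ C ∈ P, 0 ≤ CycleSign σ C) ∧ P.length = m ∧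
      ∀ C ∈ P, ∀ v ∈ C, X 0 v ≠ X m v := by
  intro m
  induction m with
  | zero =>
    intro X _ _ _
    exact ⟨[], ⟨by simp, List.Pairwise.nil⟩, by simp, rfl, by simp⟩
  | succ m ih =>
    intro X hfix hmono hne
    obtain ⟨P, hPp, hPs, hPl, hPd⟩ := ih X (fun i hi => hfix i (by omega))
      (fun i hi => hmono i (by omega)) (fun i hi => hne i (by omega))
    have hchain : ∀ i j, i ≤ j → j ≤ m + 1 → X i ≤ X j := by
      have key : ∀ d i, i + d ≤ m + 1 → X i ≤ X (i + d) := by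
        intro d
        induction d with
        | zero => intro i _; exact le_refl (X i)
        | succ d ihd =>
          intro i h
          refine le_trans (ihd i (by omega)) ?_
          have := hmono (i+d) (by omega)
          rwa [show i + (d+1) = (i+d)+1 by omega]
      intro i j hij hj
      have := key (j - i) i (by omega)
      rwa [show i + (j - i) = j by omega] at this
    obtain ⟨C, hCcyc, hCD, hCsgn⟩ := cycle_between hGd ε hε hsig
      (hfix m (by omega)) (hfix (m+1) le_rfl) (hmono m (by omega)) (hne m (by omega))
    refine ⟨C :: P, ⟨?_, ?_⟩, ?_, by simp [hPl], ?_⟩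
    · intro l hl
      rcases List.mem_cons.mp hl with rfl | h
      · exact hCcyc
      · exact hPp.1 l h
    · rw [List.pairwise_cons]
      refine ⟨?_, hPp.2⟩
      intro C' hC' v hvC hvC'
      have h1 : X m v ≠ X (m+1) v := hCD v hvC
      have h2 : X 0 v ≠ X m v := hPd C' hC' v hvC'
      have hm1 := bool_le_of_ne (hchain 0 m (by omega) (by omega) v) h2
      have hm2 := bool_le_of_ne (hchain m (m+1) (by omega) le_rfl v) h1
      rw [hm1.2] at hm2
      exact absurd hm2.1 (by simp)
    · intro c hc
      rcases List.mem_cons.mp hc with rfl | h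
      · exact hCsgn
      · exact hPs c h
    · intro C'' hC'' v hv
      rcases List.mem_cons.mp hC'' with rfl | h
      · have h1 := bool_le_of_ne (hchain m (m+1) (by omega) le_rfl v) (hCD v hv)
        have h0 : X 0 v ≤ X m v := hchain 0 m (by omega) (by omega) v
        have hz : X 0 v = false := by
          rw [h1.1] at h0
          cases h : X 0 v
          · rfl
          · rw [h] at h0; exact absurd h0 (by decide)
        rw [hz, h1.2]
        simp
      · have h2 := hPd C'' h v hv
        have hb := bool_le_of_ne (hchain 0 m (by omega) (by omega) v) h2
        have h3 : X m v ≤ X (m+1) v := hmono m (by omega) v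
        rw [hb.2] at h3
        have hT : X (m+1) v = true := by
          cases h4 : X (m+1) v
          · rw [h4] at h3; exact absurd h3 (by decide)
          · rfl
        rw [hb.1, hT]
        simp

end Helpers

/-- a Boolean network with signed interaction graph `(G,σ)` has at most
the sum of the `ν⁺+1` largest binomial coefficients `C(τ*_m, k)` fixed points. -/
theorem stmt19 {n : ℕ} (f : (Fin n → Bool) → Fin n → Bool)
    (G : Fin n → Fin n → Prop) (σ : Fin n → Fin n → ℤ)
    (hG : ∀ u v, G u v ↔ Depends f u v)
    (hσ : ∀ u v, G u v → σ u v = arcSign f u v) :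
    Set.ncard {x : Fin n → Bool | f x = x} ≤
      ∑ k ∈ Finset.Icc ((tauMStar G σ - nuPlus G σ) / 2)
        ((tauMStar G σ + nuPlus G σ) / 2), (tauMStar G σ).choose k := by
  classical
  set t := tauMStar G σ with htdef
  set ν := nuPlus G σ with hνdef
  have hIex : ∃ I : Finset (Fin n), tauM G (switchSign σ I) = t := by
    have hne : {k | ∃ I : Finset (Fin n), tauM G (switchSign σ I) = k}.Nonempty :=
      ⟨tauM G (switchSign σ ∅), ∅, rfl⟩
    exact Nat.sInf_mem hne
  obtain ⟨I, hI⟩ := hIex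
  have hJex : ∃ J : Finset (Fin n), IsMonFVS G (switchSign σ I) J ∧ J.card = t := by
    have hne : {k | ∃ J : Finset (Fin n), IsMonFVS G (switchSign σ I) J ∧ J.card = k}.Nonempty := by
      refine ⟨(Finset.univ : Finset (Fin n)).card, Finset.univ, ⟨?_, ?_⟩, rfl⟩
      · intro l hl
        obtain ⟨v, hv⟩ := List.exists_mem_of_ne_nil l hl.1
        exact ⟨v, hv, Finset.mem_univ v⟩
      · intro u v _ _
        exact Finset.mem_univ v
    have hmem := Nat.sInf_mem hne
    rw [← hI]
    exact hmem
  obtain ⟨J, hJmon, hJcard⟩ := hJex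
  set cI : Fin n → Bool := fun v => decide (v ∈ I) with hcIdef
  set g : (Fin n → Bool) → Fin n → Bool := fun x => sw cI (f (sw cI x)) with hgdef
  have hGd : ∀ u v, Depends g u v ↔ G u v := by
    intro u v
    rw [hgdef, depends_sw]
    exact (hG u v).symm
  set ε : Fin n → ℤ := fun w => if w ∈ I then -1 else 1 with hεdef
  have hεsq : ∀ w, ε w * ε w = 1 := by
    intro w
    rw [hεdef]
    by_cases h : w ∈ I <;> simp [h]
  have hsig : ∀ u v, G u v → arcSign g u v = ε u * ε v * σ u v := by
    intro u v hGuv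
    have hdep : Depends f u v := (hG u v).mp hGuv
    have h1 := arcSign_sw cI hdep
    rw [← hσ u v hGuv] at h1
    rw [hgdef]
    rw [h1]
    by_cases hu : u ∈ I <;> by_cases hv : v ∈ I <;>
      simp [hεdef, hcIdef, hu, hv] <;> ring
  have hswEq : ∀ u v, G u v → arcSign g u v = switchSign σ I u v := by
    intro u v hGuv
    rw [hsig u v hGuv, switchSign]
    by_cases hu : u ∈ I <;> by_cases hv : v ∈ I
    · rw [if_pos (by tauto)]
      simp [hεdef, hu, hv]
    · rw [if_neg (by tauto)]
      simp [hεdef, hu, hv]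
    · rw [if_neg (by tauto)]
      simp [hεdef, hu, hv]
    · rw [if_pos (by tauto)]
      simp [hεdef, hu, hv]
  have hposJ : ∀ u v, G u v → v ∉ J → PosArc g u v := by
    intro u v hGuv hvJ
    have h1 : switchSign σ I u v = 1 := by
      by_contra hne1
      exact hvJ (hJmon.2 u v hGuv hne1)
    have h2 : arcSign g u v = 1 := by rw [hswEq u v hGuv, h1]
    by_contra hp
    rw [arcSign, if_neg hp] at h2
    by_cases hn : NegArc g u v
    · rw [if_pos hn] at h2
      norm_num at h2
    · rw [if_neg hn] at h2
      norm_num at h2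
  set Ff : Finset (Fin n → Bool) := Finset.univ.filter (fun x => f x = x) with hFfdef
  set Fg : Finset (Fin n → Bool) := Finset.univ.filter (fun x => g x = x) with hFgdef
  have hncard : Set.ncard {x : Fin n → Bool | f x = x} = Ff.card := by
    rw [Set.ncard_eq_toFinset_card']
    congr 1
    ext x
    simp [hFfdef]
  have hswinj : Function.Injective (sw cI) :=
    Function.LeftInverse.injective (g := sw cI) (sw_invol cI)
  have hFgim : Fg = Ff.image (sw cI) := by
    ext z
    simp only [hFgdef, hFfdef, Finset.mem_filter, Finset.mem_univ, true_and, Finset.mem_image]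
    constructor
    · intro hz
      refine ⟨sw cI z, ?_, sw_invol cI z⟩
      have h3 : sw cI (g z) = sw cI z := by rw [hz]
      rw [hgdef] at h3
      simp only at h3
      rwa [sw_invol] at h3
    · rintro ⟨x, hx, rfl⟩
      rw [hgdef]
      simp only
      rw [sw_invol, hx]
  have hcards : Ff.card = Fg.card := by
    rw [hFgim, Finset.card_image_of_injective _ hswinj]
  set resJ : (Fin n → Bool) → Finset {v : Fin n // v ∈ J} :=
    fun x => Finset.univ.filter (fun v => x v.1 = true) with hresdef
  have hresmono : ∀ x y : Fin n → Bool, g x = x → g y = y → resJ x ⊆ resJ y → x ≤ y := by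
    intro x y hx hy hsub
    have hJle : ∀ v ∈ J, x v ≤ y v := by
      intro v hv
      by_cases hxv : x v = true
      · have hmem : (⟨v, hv⟩ : {v : Fin n // v ∈ J}) ∈ resJ x := by
          simp [hresdef, hxv]
        have hmem2 := hsub hmem
        simp only [hresdef, Finset.mem_filter, Finset.mem_univ, true_and] at hmem2
        rw [hxv, hmem2]
      · have hxf : x v = false := by
          cases h : x v
          · rfl
          · exact absurd h hxv
        rw [hxf]
        exact Bool.false_le _
    intro v
    exact fixed_mono (fun u w h => (hGd u w).mp h) hJmon.1 hposJ hx hy hJle v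
  have hresinj : Set.InjOn resJ Fg := by
    intro x hx y hy hxy
    have hx' : g x = x := by simpa [hFgdef] using hx
    have hy' : g y = y := by simpa [hFgdef] using hy
    have h1 := hresmono x y hx' hy' (le_of_eq hxy)
    have h2 := hresmono y x hy' hx' (le_of_eq hxy.symm)
    funext v
    exact le_antisymm (h1 v) (h2 v)
  set F : Finset (Finset {v : Fin n // v ∈ J}) := Fg.image resJ with hFdef
  have hFcard : F.card = Fg.card := Finset.card_image_of_injOn hresinj
  have hh : ∀ s ∈ F, hgt F s ≤ ν := by
    intro s hs
    obtain ⟨c, hc1, hc2, hc3⟩ := hgt_chain F s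
    set h := hgt F s with hhdef
    have hcF : ∀ i, i ≤ h → c i ∈ F := by
      intro i hi
      rcases Nat.lt_or_ge i h with hlt | hge
      · exact hc2 i hlt
      · have : i = h := by omega
        rw [this, hc1]
        exact hs
    have hlift : ∀ i, i ≤ h → ∃ x, (g x = x) ∧ resJ x = c i := by
      intro i hi
      obtain ⟨x, hx, hres'⟩ := Finset.mem_image.mp (hcF i hi)
      exact ⟨x, (Finset.mem_filter.mp hx).2, hres'⟩
    set X : ℕ → (Fin n → Bool) := fun i =>
      if hi : i ≤ h then Classical.choose (hlift i hi) else (fun _ => false) with hXdef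
    have hXeq : ∀ i (hi : i ≤ h), X i = Classical.choose (hlift i hi) := by
      intro i hi
      rw [hXdef]
      exact dif_pos hi
    have hXfix : ∀ i, i ≤ h → g (X i) = X i := by
      intro i hi
      rw [hXeq i hi]
      exact (Classical.choose_spec (hlift i hi)).1
    have hXres : ∀ i (hi : i ≤ h), resJ (X i) = c i := by
      intro i hi
      rw [hXeq i hi]
      exact (Classical.choose_spec (hlift i hi)).2
    have hXmono : ∀ i < h, X i ≤ X (i+1) := by
      intro i hi
      refine hresmono _ _ (hXfix i (by omega)) (hXfix (i+1) (by omega)) ?_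
      rw [hXres i (by omega), hXres (i+1) (by omega)]
      exact (hc3 i hi).subset
    have hXne : ∀ i < h, X i ≠ X (i+1) := by
      intro i hi heq
      have hss := hc3 i hi
      rw [← hXres i (by omega), ← hXres (i+1) (by omega), heq] at hss
      exact ssubset_irrefl _ hss
    obtain ⟨P, hPp, hPs, hPl, _⟩ := chain_packing hGd ε hεsq hsig h X hXfix hXmono hXne
    calc h = P.length := hPl.symm
      _ ≤ nuPlus G σ := le_nuPlus hPp hPs
  have hT : Fintype.card {v : Fin n // v ∈ J} = t := by
    rw [Fintype.card_coe, hJcard]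
  have hbound := erdos_bound F ν hh
  rw [hT] at hbound
  calc Set.ncard {x : Fin n → Bool | f x = x} = Ff.card := hncard
    _ = Fg.card := hcards
    _ = F.card := hFcard.symm
    _ ≤ ∑ k ∈ Finset.Icc ((t - ν)/2) ((t + ν)/2), t.choose k := hbound
end
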